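/- arXiv:math/0412310 — 7 statements merged into one kernel-verified Lean document; each statement's English description precedes it below -/
import Mathlib

section
/- For every anisotropic root α ∈ R^× and every root ξ ∈ R, one has ξ(h_α) = 2(ξ,α)/(α,α), and this element of F is an integer, i.e. ξ(h_α) = n·1_F for some n ∈ ℤ. -/
open LieModule in
lemma aux_exists_nat {R L M : Type*} [Field R] [CharZero R] [LieRing L] [LieAlgebra R L]
    [AddCommGroup M] [Module R M] [LieRingModule L M] [LieModule R L M]
    {h e f : L} {t : IsSl2Triple h e f} {m : M} {μ : R}
    (P : t.HasPrimitiveVectorWith m μ)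
    (hf : ∃ n : ℕ, ((LieModule.toEnd R L M f) ^ n) m = 0) : ∃ n : ℕ, μ = n := by
  obtain ⟨n, hn₁, hn₂⟩ := Nat.exists_not_and_succ_of_not_zero_of_exists
    (p := fun n => ((LieModule.toEnd R L M f) ^ n) m = 0) (by simpa using P.ne_zero) hf
  refine ⟨n, ?_⟩
  have := P.lie_e_pow_succ_toEnd_f n
  rw [hn₂, lie_zero, eq_comm, smul_eq_zero_iff_left hn₁, mul_eq_zero, sub_eq_zero] at this
  exact this.resolve_left <| Nat.cast_add_one_ne_zero n

theorem lemma_2_1_1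
    {F L : Type*} [Field F] [CharZero F] [LieRing L] [LieAlgebra F L]
    (H : LieSubalgebra F L)
    (habelian : ∀ x y : ↥H, ⁅x, y⁆ = 0)
    -- root spaces with respect to H
    (Lrt : Module.Dual F ↥H → Submodule F L)
    (hLrt : ∀ ξ (x : L), x ∈ Lrt ξ ↔ ∀ h : ↥H, ⁅(h : L), x⁆ = ξ h • x)
    -- root space decomposition L = ⊕_{ξ} L_ξ
    (hdecomp : ⨆ ξ, Lrt ξ = ⊤) (hindep : iSupIndep Lrt)
    -- the set of roots
    (R : Set (Module.Dual F ↥H))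
    (hR : R = {ξ | Lrt ξ ≠ ⊥})
    -- a symmetric invariant bilinear form on L
    (B : LinearMap.BilinForm F L)
    (hBsym : ∀ x y : L, B x y = B y x)
    (hBinv : ∀ x y z : L, B ⁅x, y⁆ z = B x ⁅y, z⁆)
    -- (A1) H is self-centralizing
    (hA1 : Lrt 0 = H.toSubmodule)
    -- (A2) B is nondegenerate
    (hA2 : B.Nondegenerate)
    -- (A3) every root is represented by some t_ξ ∈ H
    (t : Module.Dual F ↥H → ↥H)
    (hA3 : ∀ ξ ∈ R, ∀ h : ↥H, ξ h = B (t ξ) h)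
    -- the induced form, extended bilinearly to the span of R
    (form : LinearMap.BilinForm F (Module.Dual F ↥H))
    (hform : ∀ ξ ∈ R, ∀ η ∈ R, form ξ η = B (t ξ : L) (t η : L))
    -- (A4) ad x is locally nilpotent for x in an anisotropic root space
    (hA4 : ∀ α ∈ R, form α α ≠ 0 → ∀ x ∈ Lrt α, ∀ y : L,
      ∃ n : ℕ, ((LieAlgebra.ad F L x) ^ n) y = 0) :
    ∀ α ∈ R, form α α ≠ 0 → ∀ ξ ∈ R,
      ξ ((2 / form α α) • t α) = 2 * form ξ α / form α α ∧
      ∃ n : ℤ, ξ ((2 / form α α) • t α) = (n : F) := by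
  intro α hαR hαa ξ hξR
  set c : F := form α α with hcdef
  -- first conjunct
  have hξtα : ξ (t α) = form ξ α := by
    rw [hA3 ξ hξR (t α), ← hform ξ hξR α hαR]
  have h1 : ξ ((2 / c) • t α) = 2 * form ξ α / c := by
    rw [map_smul, smul_eq_mul, hξtα]; ring
  refine ⟨h1, ?_⟩
  -- orthogonality of root spaces
  have horth : ∀ (η θ : Module.Dual F ↥H), η + θ ≠ 0 →
      ∀ x ∈ Lrt η, ∀ y ∈ Lrt θ, B x y = 0 := by
    intro η θ hηθ x hx y hy
    obtain ⟨h, hh⟩ : ∃ h : ↥H, η h + θ h ≠ 0 := by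
      by_contra hcon
      push_neg at hcon
      exact hηθ (LinearMap.ext fun h => by simpa using hcon h)
    have e1 : B ⁅(h : L), x⁆ y = η h * B x y := by
      rw [(hLrt η x).mp hx h, map_smul, LinearMap.smul_apply, smul_eq_mul]
    have e2' : B ⁅x, (h : L)⁆ y = θ h * B x y := by
      rw [hBinv x (h : L) y, (hLrt θ y).mp hy h, map_smul, smul_eq_mul]
    have e2 : B ⁅(h : L), x⁆ y = - (θ h * B x y) := by
      rw [show ⁅(h : L), x⁆ = -⁅x, (h : L)⁆ from neg_eq_iff_eq_neg.mp (lie_skew x (h : L)),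
        map_neg, LinearMap.neg_apply, e2']
    have : (η h + θ h) * B x y = 0 := by linear_combination e1.symm.trans e2
    exact (mul_eq_zero.mp this).resolve_left hh
  -- membership of H elements in Lrt 0
  have hH0 : ∀ u : ↥H, (u : L) ∈ Lrt 0 := by
    intro u; rw [hA1]; exact u.2
  -- nondegeneracy of B on H
  have hHnd : ∀ u : ↥H, (∀ h : ↥H, B (u : L) (h : L) = 0) → u = 0 := by
    intro u hu
    have key : ∀ w : L, B (u : L) w = 0 := by
      intro w
      have hw : w ∈ ⨆ η, Lrt η := hdecomp ▸ Submodule.mem_top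
      refine Submodule.iSup_induction (motive := fun w => B (u : L) w = 0) Lrt hw ?_ (map_zero _) ?_
      · intro η y hy
        by_cases hη : η = 0
        · subst hη; rw [hA1] at hy; exact hu ⟨y, hy⟩
        · exact horth 0 η (by simpa using hη) (u : L) (hH0 u) y hy
      · intro y z hy hz; rw [map_add, hy, hz, add_zero]
    exact Subtype.ext (hA2.1 (u : L) key)
  have hc : c = B (t α : L) (t α : L) := hform α hαR α hαR
  have htα_ne : (t α : L) ≠ 0 := by
    intro h; apply hαa; rw [hc, h]; simp
  -- choose e in Lrt α
  obtain ⟨e, heα, he0⟩ : ∃ e ∈ Lrt α, e ≠ 0 := by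
    have : Lrt α ≠ ⊥ := by rw [hR] at hαR; exact hαR
    exact Submodule.exists_mem_ne_zero_of_ne_bot this
  -- choose f0 in Lrt (-α) pairing with e
  obtain ⟨w, hw⟩ : ∃ w : L, B e w ≠ 0 := by
    by_contra hcon; push_neg at hcon; exact he0 (hA2.1 e hcon)
  obtain ⟨f0, hf0mem, hf0ne⟩ : ∃ y ∈ Lrt (-α), B e y ≠ 0 := by
    have hwmem : w ∈ ⨆ η, Lrt η := hdecomp ▸ Submodule.mem_top
    refine Submodule.iSup_induction
      (motive := fun w => B e w ≠ 0 → ∃ y ∈ Lrt (-α), B e y ≠ 0) Lrt hwmem ?_ (by simp) ?_ hw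
    · intro η y hy hne
      by_cases hη : η = -α
      · exact ⟨y, hη ▸ hy, hne⟩
      · exact absurd (horth α η (fun hcon => hη (by linear_combination (norm := module) hcon)) e heα y hy) hne
    · intro y z hy hz hne
      by_cases h : B e y = 0
      · exact hz (by rw [map_add] at hne; intro h2; rw [h, h2] at hne; simp at hne)
      · exact hy h
  have hnegR : -α ∈ R := by
    rw [hR]
    intro hbot
    rw [hbot] at hf0mem
    rw [(Submodule.mem_bot F).mp hf0mem, map_zero] at hf0ne
    exact hf0ne rfl
  -- t(-α) = - t α and form(-α)(-α) = c
  have htneg : t (-α) = - t α := by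
    have : t (-α) + t α = 0 := by
      apply hHnd
      intro h
      have e1 : ((t (-α) + t α : ↥H) : L) = (t (-α) : L) + (t α : L) := rfl
      rw [e1, map_add, LinearMap.add_apply, ← hA3 (-α) hnegR h, ← hA3 α hαR h]
      simp
    linear_combination (norm := module) this
  have hformneg : form (-α) (-α) = c := by
    rw [hform _ hnegR _ hnegR, htneg, hc]
    have h' : ((- t α : ↥H) : L) = -(t α : L) := rfl
    rw [h']; simp
  -- [e, f0] = B(e,f0) • t α
  have hbr0 : ⁅e, f0⁆ ∈ Lrt 0 := by
    rw [hLrt]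
    intro h
    rw [leibniz_lie, (hLrt α e).mp heα h, (hLrt (-α) f0).mp hf0mem h, smul_lie, lie_smul]
    simp only [LinearMap.neg_apply, LinearMap.zero_apply, zero_smul, neg_smul]
    abel
  have hbrH : ⁅e, f0⁆ ∈ H := by rwa [hA1, LieSubalgebra.mem_toSubmodule] at hbr0
  have hef : ⁅e, f0⁆ = (B e f0) • (t α : L) := by
    have key : (⟨⁅e, f0⁆, hbrH⟩ - (B e f0) • t α : ↥H) = 0 := by
      apply hHnd
      intro h
      have e1 : ((⟨⁅e, f0⁆, hbrH⟩ - (B e f0) • t α : ↥H) : L) = ⁅e, f0⁆ - (B e f0) • (t α : L) := rfl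
      rw [e1, map_sub, LinearMap.sub_apply, map_smul, LinearMap.smul_apply, smul_eq_mul,
        hBinv e f0 (h : L), ← hA3 α hαR h]
      have e2 : ⁅f0, (h : L)⁆ = α h • f0 := by
        rw [show ⁅f0, (h : L)⁆ = -⁅(h : L), f0⁆ from neg_eq_iff_eq_neg.mp (lie_skew (h : L) f0),
          (hLrt (-α) f0).mp hf0mem h]
        simp
      rw [e2, map_smul, smul_eq_mul]
      ring
    have : (⟨⁅e, f0⁆, hbrH⟩ : ↥H) = (B e f0) • t α := by
      linear_combination (norm := module) key
    calc ⁅e, f0⁆ = ((⟨⁅e, f0⁆, hbrH⟩ : ↥H) : L) := rfl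
    _ = (((B e f0) • t α : ↥H) : L) := by rw [this]
    _ = (B e f0) • (t α : L) := rfl
  -- the sl2 triple
  set bc : F := B e f0 with hbcdef
  set f : L := (2 / (c * bc)) • f0 with hfdef
  have hfmem : f ∈ Lrt (-α) := Submodule.smul_mem _ _ hf0mem
  set hαL : L := (2 / c) • (t α : L) with hαLdef
  have htαval : α (t α) = c := by rw [hA3 α hαR (t α), hc]
  have lie_ef : ⁅e, f⁆ = hαL := by
    rw [hfdef, lie_smul, hef, smul_smul, hαLdef]
    congr 1
    field_simp
  have lie_he : ⁅hαL, e⁆ = (2 : F) • e := by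
    rw [hαLdef, smul_lie, (hLrt α e).mp heα (t α), htαval, smul_smul]
    congr 1
    field_simp
  have lie_hf : ⁅hαL, f⁆ = -((2 : F) • f) := by
    rw [hαLdef, smul_lie, (hLrt (-α) f).mp hfmem (t α), LinearMap.neg_apply, htαval, smul_smul,
      show 2 / c * -c = -2 by field_simp]
    module
  have hαL_ne : hαL ≠ 0 := by
    rw [hαLdef]
    exact smul_ne_zero (div_ne_zero two_ne_zero hαa) htα_ne
  have triple : IsSl2Triple hαL e f :=
    { h_ne_zero := hαL_ne
      lie_e_f := lie_ef
      lie_h_e_nsmul := by rw [lie_he]; module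
      lie_h_f_nsmul := by rw [lie_hf]; module }
  -- pick z in Lrt ξ
  obtain ⟨z, hzξ, hz0⟩ : ∃ z ∈ Lrt ξ, z ≠ 0 := by
    have : Lrt ξ ≠ ⊥ := by rw [hR] at hξR; exact hξR
    exact Submodule.exists_mem_ne_zero_of_ne_bot this
  set μ0 : F := ξ ((2 / c) • t α) with hμ0def
  have hcoe : (((2 / c) • t α : ↥H) : L) = hαL := rfl
  have hlz : ⁅hαL, z⁆ = μ0 • z := by
    rw [← hcoe, (hLrt ξ z).mp hzξ ((2 / c) • t α)]
  -- weight of (ad e)^k z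
  have hwt : ∀ k : ℕ, ⁅hαL, ((LieAlgebra.ad F L e) ^ k) z⁆
      = (μ0 + 2 * k) • ((LieAlgebra.ad F L e) ^ k) z := by
    intro k
    induction k with
    | zero => simpa using hlz
    | succ k ih =>
      rw [pow_succ', Module.End.mul_apply, LieAlgebra.ad_apply, leibniz_lie, lie_he, ih,
        lie_smul, smul_lie]
      push_cast
      module
  obtain ⟨N, hN1, hN2⟩ := Nat.exists_not_and_succ_of_not_zero_of_exists
    (p := fun n => ((LieAlgebra.ad F L e) ^ n) z = 0) (by simpa using hz0)
    (hA4 α hαR hαa e heα z)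
  set m : L := ((LieAlgebra.ad F L e) ^ N) z with hmdef
  have P : triple.HasPrimitiveVectorWith m (μ0 + 2 * N) :=
    { ne_zero := hN1
      lie_h := hwt N
      lie_e := by
        have : ((LieAlgebra.ad F L e) ^ (N + 1)) z = 0 := hN2
        rw [pow_succ', Module.End.mul_apply, LieAlgebra.ad_apply] at this
        exact this }
  have hfnil : ∃ n : ℕ, ((LieModule.toEnd F L L f) ^ n) m = 0 := by
    have : form (-α) (-α) ≠ 0 := by rw [hformneg]; exact hαa
    exact hA4 (-α) hnegR this f hfmem m
  obtain ⟨M, hM⟩ := aux_exists_nat P hfnil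
  refine ⟨(M : ℤ) - 2 * N, ?_⟩
  push_cast
  linear_combination hM
end

section
/- For every anisotropic root α ∈ R^×, the reflection σ_α : H* → H* defined by σ_α(μ) = μ − μ(h_α)·α maps R onto R, i.e. σ_α(R) = R; moreover σ_α preserves the induced form on the span of R: (σ_α(ξ), σ_α(η)) = (ξ,η) for all ξ, η in the span of R. -/
open Finset

namespace Lem212

set_option linter.unusedSectionVars false

/-- convolution sum lemma -/
lemma conv_sum {M : Type*} [AddCommMonoid M] (m : ℕ) (f : ℕ → ℕ → M)
    (hf : ∀ i j, m ≤ i + j → f i j = 0) :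
    ∑ s ∈ Finset.range m, ∑ ij ∈ Finset.HasAntidiagonal.antidiagonal s, f ij.1 ij.2
      = ∑ i ∈ Finset.range m, ∑ j ∈ Finset.range m, f i j := by
  classical
  have hdisj : ((Finset.range m : Finset ℕ) : Set ℕ).PairwiseDisjoint Finset.HasAntidiagonal.antidiagonal := by
    intro a _ b _ hab
    simp only [Finset.disjoint_left]
    intro p hpa hpb
    exact hab ((Finset.HasAntidiagonal.mem_antidiagonal.1 hpa).symm.trans (Finset.HasAntidiagonal.mem_antidiagonal.1 hpb))
  have h1 : ∑ s ∈ Finset.range m, ∑ ij ∈ Finset.HasAntidiagonal.antidiagonal s, f ij.1 ij.2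
      = ∑ ij ∈ (Finset.range m).biUnion Finset.HasAntidiagonal.antidiagonal, f ij.1 ij.2 :=
    (Finset.sum_biUnion hdisj).symm
  have h2 : (Finset.range m).biUnion Finset.HasAntidiagonal.antidiagonal ⊆ Finset.range m ×ˢ Finset.range m := by
    intro p hp
    rcases Finset.mem_biUnion.1 hp with ⟨s, hs, hps⟩
    have hs' := Finset.mem_range.1 hs
    have hsum := Finset.HasAntidiagonal.mem_antidiagonal.1 hps
    refine Finset.mem_product.2 ⟨Finset.mem_range.2 ?_, Finset.mem_range.2 ?_⟩
    · omega
    · omega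
  rw [h1, Finset.sum_subset h2, ← Finset.sum_product']
  intro p hp hnp
  refine hf p.1 p.2 ?_
  by_contra hlt
  push_neg at hlt
  exact hnp (Finset.mem_biUnion.2 ⟨p.1 + p.2, Finset.mem_range.2 hlt,
    Finset.HasAntidiagonal.mem_antidiagonal.2 rfl⟩)

variable {F M : Type*} [Field F] [CharZero F] [AddCommGroup M] [Module F M]

/-- truncated exponential -/
noncomputable def expAt (D : Module.End F M) (n : ℕ) : Module.End F M :=
  ∑ k ∈ Finset.range n, (k.factorial : F)⁻¹ • D ^ k

lemma expAt_apply (D : Module.End F M) (n : ℕ) (v : M) :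
    expAt D n v = ∑ k ∈ Finset.range n, (k.factorial : F)⁻¹ • (D ^ k) v := by
  simp [expAt, LinearMap.sum_apply]

lemma pow_eq_zero_mono (D : Module.End F M) {v : M} {a b : ℕ} (hab : a ≤ b)
    (ha : (D ^ a) v = 0) : (D ^ b) v = 0 := by
  have h : D ^ b = D ^ (b - a) * D ^ a := by
    rw [← pow_add]; congr 1; omega
  rw [h, Module.End.mul_apply, ha, map_zero]

lemma expAt_stable (D : Module.End F M) {v : M} {n m : ℕ} (hn : (D ^ n) v = 0) (hnm : n ≤ m) :
    expAt D m v = expAt D n v := by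
  rw [expAt_apply, expAt_apply]
  refine (Finset.sum_subset (Finset.range_subset_range.2 hnm) ?_).symm
  intro k _ hk
  rw [pow_eq_zero_mono D (Nat.le_of_not_lt (fun h => hk (Finset.mem_range.2 h))) hn, smul_zero]

open scoped Classical in
/-- exponential of a (locally nilpotent at `v`) endomorphism -/
noncomputable def lexp (D : Module.End F M) (v : M) : M :=
  if h : ∃ n, (D ^ n) v = 0 then expAt D (Nat.find h) v else v

lemma lexp_eq (D : Module.End F M) {v : M} {n : ℕ} (hn : (D ^ n) v = 0) :
    lexp D v = expAt D n v := by
  classical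
  have h : ∃ n, (D ^ n) v = 0 := ⟨n, hn⟩
  rw [lexp, dif_pos h]
  exact (expAt_stable D (Nat.find_spec h) (Nat.find_min' h hn)).symm

lemma lexp_add (D : Module.End F M) {u v : M} (hu : ∃ n, (D ^ n) u = 0)
    (hv : ∃ n, (D ^ n) v = 0) : lexp D (u + v) = lexp D u + lexp D v := by
  obtain ⟨a, ha⟩ := hu; obtain ⟨b, hb⟩ := hv
  have ha' : (D ^ (max a b)) u = 0 := pow_eq_zero_mono D (le_max_left a b) ha
  have hb' : (D ^ (max a b)) v = 0 := pow_eq_zero_mono D (le_max_right a b) hb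
  have hab : (D ^ (max a b)) (u + v) = 0 := by rw [map_add, ha', hb', add_zero]
  rw [lexp_eq D hab, lexp_eq D ha', lexp_eq D hb', map_add]

lemma lexp_smul (D : Module.End F M) (c : F) {v : M} (hv : ∃ n, (D ^ n) v = 0) :
    lexp D (c • v) = c • lexp D v := by
  obtain ⟨a, ha⟩ := hv
  have h : (D ^ a) (c • v) = 0 := by rw [map_smul, ha, smul_zero]
  rw [lexp_eq D h, lexp_eq D ha, map_smul]

lemma lexp_sub (D : Module.End F M) {u v : M} (hu : ∃ n, (D ^ n) u = 0)
    (hv : ∃ n, (D ^ n) v = 0) : lexp D (u - v) = lexp D u - lexp D v := by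
  obtain ⟨a, ha⟩ := hu; obtain ⟨b, hb⟩ := hv
  have ha' : (D ^ (max a b)) u = 0 := pow_eq_zero_mono D (le_max_left a b) ha
  have hb' : (D ^ (max a b)) v = 0 := pow_eq_zero_mono D (le_max_right a b) hb
  have hab : (D ^ (max a b)) (u - v) = 0 := by rw [map_sub, ha', hb', sub_zero]
  rw [lexp_eq D hab, lexp_eq D ha', lexp_eq D hb', map_sub]

lemma lexp_of_fix (D : Module.End F M) {v : M} (h1 : D v = 0) :
    lexp D v = v := by
  have h : (D ^ 1) v = 0 := by simpa using h1
  rw [lexp_eq D h, expAt_apply, Finset.sum_range_one]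
  simp

lemma lexp_zero (D : Module.End F M) : lexp D (0 : M) = 0 := by
  have h : (D ^ 1) (0 : M) = 0 := map_zero _
  rw [lexp_eq D h, expAt_apply, Finset.sum_range_one]
  simp

lemma lexp_of_sq (D : Module.End F M) {v : M} (h2 : (D ^ 2) v = 0) :
    lexp D v = v + D v := by
  rw [lexp_eq D h2, expAt_apply]
  rw [Finset.sum_range_succ, Finset.sum_range_one]
  simp [Nat.factorial]

lemma lexp_of_cube (D : Module.End F M) {v : M} (h3 : (D ^ 3) v = 0) :
    lexp D v = v + D v + (2 : F)⁻¹ • (D ^ 2) v := by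
  rw [lexp_eq D h3, expAt_apply]
  rw [Finset.sum_range_succ, Finset.sum_range_succ, Finset.sum_range_one]
  norm_num [Nat.factorial]

lemma factorial_coeff {i j : ℕ} :
    ((i.factorial : F)⁻¹ * (j.factorial : F)⁻¹)
      = ((i + j).factorial : F)⁻¹ * ((i + j).choose i) := by
  have hfact : ∀ n : ℕ, ((n.factorial : ℕ) : F) ≠ 0 :=
    fun n => Nat.cast_ne_zero.2 n.factorial_ne_zero
  rw [Nat.cast_choose F (Nat.le_add_right i j)]
  rw [show i + j - i = j by omega]
  field_simp [hfact]

/-- exp(-D) ∘ exp(D) = id pointwise -/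
lemma lexp_neg_lexp (D : Module.End F M) {v : M} (hv : ∃ n, (D ^ n) v = 0) :
    lexp (-D) (lexp D v) = v := by
  obtain ⟨a, ha0⟩ := hv
  set n := max a 1 with hn
  have hn1 : 1 ≤ n := le_max_right a 1
  have ha : (D ^ n) v = 0 := pow_eq_zero_mono D (le_max_left a 1) ha0
  have hw : lexp D v = expAt D n v := lexp_eq D ha
  have hDk : ∀ k : ℕ, n ≤ k → (D ^ k) v = 0 := fun k hk => pow_eq_zero_mono D hk ha
  have hnw : ((-D) ^ n) (expAt D n v) = 0 := by
    rw [expAt_apply, map_sum]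
    refine Finset.sum_eq_zero fun k _ => ?_
    have hnegpow : (-D) ^ n = ((-1 : F) ^ n) • D ^ n := by
      rw [← neg_one_smul F D, smul_pow]
    rw [map_smul, hnegpow, LinearMap.smul_apply, ← Module.End.mul_apply, ← pow_add]
    rw [hDk (n + k) (by omega), smul_zero, smul_zero]
  rw [hw, lexp_eq (-D) hnw]
  rw [expAt_apply]
  have step1 : ∀ i : ℕ, ((i.factorial : F)⁻¹) • ((-D) ^ i) (expAt D n v)
      = ∑ j ∈ Finset.range n,
          ((-1 : F) ^ i * ((i.factorial : F)⁻¹ * (j.factorial : F)⁻¹)) • (D ^ (i + j)) v := by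
    intro i
    rw [expAt_apply, map_sum, Finset.smul_sum]
    refine Finset.sum_congr rfl fun j _ => ?_
    have hnegpow : (-D) ^ i = ((-1 : F) ^ i) • D ^ i := by
      rw [← neg_one_smul F D, smul_pow]
    rw [hnegpow, map_smul, LinearMap.smul_apply, pow_add, Module.End.mul_apply]
    rw [smul_smul, smul_smul]
    congr 1
    ring
  calc ∑ i ∈ Finset.range n, (i.factorial : F)⁻¹ • ((-D) ^ i) (expAt D n v)
      = ∑ i ∈ Finset.range n, ∑ j ∈ Finset.range n,
          ((-1 : F) ^ i * ((i.factorial : F)⁻¹ * (j.factorial : F)⁻¹)) • (D ^ (i + j)) v := by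
        exact Finset.sum_congr rfl fun i _ => step1 i
    _ = ∑ s ∈ Finset.range n, ∑ ij ∈ Finset.HasAntidiagonal.antidiagonal s,
          ((-1 : F) ^ ij.1 * ((ij.1.factorial : F)⁻¹ * (ij.2.factorial : F)⁻¹))
            • (D ^ (ij.1 + ij.2)) v := by
        refine (conv_sum n _ fun i j hij => ?_).symm
        rw [hDk (i + j) hij, smul_zero]
    _ = ∑ s ∈ Finset.range n, (if s = 0 then v else 0) := by
        refine Finset.sum_congr rfl fun s _ => ?_
        have inner : ∀ ij ∈ Finset.HasAntidiagonal.antidiagonal s,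
            ((-1 : F) ^ ij.1 * ((ij.1.factorial : F)⁻¹ * (ij.2.factorial : F)⁻¹))
              • (D ^ (ij.1 + ij.2)) v
            = ((-1 : F) ^ ij.1 * ((s.factorial : F)⁻¹ * (s.choose ij.1))) • (D ^ s) v := by
          intro ij hij
          have hsum := Finset.HasAntidiagonal.mem_antidiagonal.1 hij
          rw [← hsum, factorial_coeff]
        rw [Finset.sum_congr rfl inner, ← Finset.sum_smul]
        have hscal : ∑ ij ∈ Finset.HasAntidiagonal.antidiagonal s,
            (-1 : F) ^ ij.1 * ((s.factorial : F)⁻¹ * (s.choose ij.1))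
            = (s.factorial : F)⁻¹ * ∑ i ∈ Finset.range (s + 1), (-1 : F) ^ i * (s.choose i) := by
          rw [Finset.Nat.sum_antidiagonal_eq_sum_range_succ
            (fun i j => (-1 : F) ^ i * ((s.factorial : F)⁻¹ * (s.choose i))) s]
          rw [Finset.mul_sum]
          exact Finset.sum_congr rfl fun i _ => by ring
        have halt : ∑ i ∈ Finset.range (s + 1), (-1 : F) ^ i * (s.choose i)
            = if s = 0 then 1 else 0 := by
          have := Int.alternating_sum_range_choose (n := s)
          have h2 := congrArg (fun z : ℤ => (z : F)) this
          simp only [Int.cast_sum, Int.cast_mul, Int.cast_pow, Int.cast_neg, Int.cast_one,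
            Int.cast_natCast, apply_ite (fun z : ℤ => (z : F)), Int.cast_zero] at h2
          exact h2
        rw [hscal, halt]
        by_cases hs : s = 0
        · simp [hs]
        · simp [hs]
    _ = v := by
        rw [Finset.sum_ite_eq' (Finset.range n) 0 (fun _ => v),
          if_pos (Finset.mem_range.2 (by omega))]

end Lem212

namespace Lem212b
open Lem212

variable {F L : Type*} [Field F] [CharZero F] [LieRing L] [LieAlgebra F L]

lemma ad_leibniz (z x y : L) (s : ℕ) :
    ((LieAlgebra.ad F L z) ^ s) ⁅x, y⁆
      = ∑ ij ∈ Finset.HasAntidiagonal.antidiagonal s,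
          s.choose ij.1 • ⁅((LieAlgebra.ad F L z) ^ ij.1) x, ((LieAlgebra.ad F L z) ^ ij.2) y⁆ := by
  have hfun : ⇑(LieDerivation.ad F L z) = ⇑(LieAlgebra.ad F L z) := by
    ext w
    have h := LieDerivation.coe_ad_apply_eq_ad_apply (R := F) z
    exact congrFun (congrArg DFunLike.coe h) w
  have h := LieDerivation.iterate_apply_lie (LieDerivation.ad F L z) s x y
  rw [hfun] at h
  simp only [← Module.End.pow_apply] at h
  exact h

lemma lexp_lie (z : L) {x y : L}
    (hx : ∃ n, ((LieAlgebra.ad F L z) ^ n) x = 0)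
    (hy : ∃ n, ((LieAlgebra.ad F L z) ^ n) y = 0) :
    lexp (LieAlgebra.ad F L z) ⁅x, y⁆
      = ⁅lexp (LieAlgebra.ad F L z) x, lexp (LieAlgebra.ad F L z) y⁆ := by
  set D := LieAlgebra.ad F L z with hD
  obtain ⟨a, hax⟩ := hx; obtain ⟨b, hby⟩ := hy
  set n := max a b with hn
  have hnx : (D ^ n) x = 0 := pow_eq_zero_mono D (le_max_left a b) hax
  have hny : (D ^ n) y = 0 := pow_eq_zero_mono D (le_max_right a b) hby
  have hnx' : ∀ k, n ≤ k → (D ^ k) x = 0 := fun k hk => pow_eq_zero_mono D hk hnx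
  have hny' : ∀ k, n ≤ k → (D ^ k) y = 0 := fun k hk => pow_eq_zero_mono D hk hny
  set m := n + n with hm
  -- the bracket is killed by D ^ m
  have h0 : (D ^ m) ⁅x, y⁆ = 0 := by
    rw [ad_leibniz]
    refine Finset.sum_eq_zero fun ij hij => ?_
    have hsum := Finset.HasAntidiagonal.mem_antidiagonal.1 hij
    have hcases : n ≤ ij.1 ∨ n ≤ ij.2 := by omega
    rcases hcases with h | h
    · rw [hnx' ij.1 h, zero_lie, smul_zero]
    · rw [hny' ij.2 h, lie_zero, smul_zero]
  have hmx : (D ^ m) x = 0 := pow_eq_zero_mono D (by omega) hnx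
  have hmy : (D ^ m) y = 0 := pow_eq_zero_mono D (by omega) hny
  rw [lexp_eq D h0, lexp_eq D hmx, lexp_eq D hmy, expAt_apply, expAt_apply, expAt_apply]
  calc ∑ s ∈ Finset.range m, (s.factorial : F)⁻¹ • (D ^ s) ⁅x, y⁆
      = ∑ s ∈ Finset.range m, ∑ ij ∈ Finset.HasAntidiagonal.antidiagonal s,
          ((ij.1.factorial : F)⁻¹ * (ij.2.factorial : F)⁻¹) • ⁅(D ^ ij.1) x, (D ^ ij.2) y⁆ := by
        refine Finset.sum_congr rfl fun s _ => ?_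
        rw [ad_leibniz, Finset.smul_sum]
        refine Finset.sum_congr rfl fun ij hij => ?_
        have hsum := Finset.HasAntidiagonal.mem_antidiagonal.1 hij
        rw [← Nat.cast_smul_eq_nsmul F, smul_smul]
        congr 1
        rw [← hsum, factorial_coeff]
    _ = ∑ i ∈ Finset.range m, ∑ j ∈ Finset.range m,
          ((i.factorial : F)⁻¹ * (j.factorial : F)⁻¹) • ⁅(D ^ i) x, (D ^ j) y⁆ := by
        refine conv_sum m
          (fun i j => ((i.factorial : F)⁻¹ * (j.factorial : F)⁻¹) • ⁅(D ^ i) x, (D ^ j) y⁆)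
          fun i j hij => ?_
        have hcases : n ≤ i ∨ n ≤ j := by omega
        rcases hcases with h | h
        · simp only [hnx' i h, zero_lie, smul_zero]
        · simp only [hny' j h, lie_zero, smul_zero]
    _ = ⁅∑ i ∈ Finset.range m, (i.factorial : F)⁻¹ • (D ^ i) x,
          ∑ j ∈ Finset.range m, (j.factorial : F)⁻¹ • (D ^ j) y⁆ := by
        have hlie_sum : ∀ (g : ℕ → L) (sf : Finset ℕ) (u : L),
            ⁅u, ∑ j ∈ sf, g j⁆ = ∑ j ∈ sf, ⁅u, g j⁆ := by
          intro g sf u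
          have h := map_sum (LieAlgebra.ad F L u) g sf
          simp only [LieAlgebra.ad_apply] at h
          exact h
        have hsum_lie : ∀ (g : ℕ → L) (sf : Finset ℕ) (u : L),
            ⁅(∑ i ∈ sf, g i), u⁆ = ∑ i ∈ sf, ⁅g i, u⁆ := by
          intro g sf u
          rw [← lie_skew, hlie_sum, ← Finset.sum_neg_distrib]
          exact Finset.sum_congr rfl fun i _ => by rw [lie_skew]
        have key : ⁅∑ i ∈ Finset.range m, (i.factorial : F)⁻¹ • (D ^ i) x,
              ∑ j ∈ Finset.range m, (j.factorial : F)⁻¹ • (D ^ j) y⁆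
            = ∑ i ∈ Finset.range m, ∑ j ∈ Finset.range m,
                ((i.factorial : F)⁻¹ * (j.factorial : F)⁻¹) • ⁅(D ^ i) x, (D ^ j) y⁆ := by
          rw [hsum_lie]
          refine Finset.sum_congr rfl fun i _ => ?_
          rw [smul_lie, hlie_sum, Finset.smul_sum]
          refine Finset.sum_congr rfl fun j _ => ?_
          rw [lie_smul, smul_smul]
        exact key.symm

end Lem212b

open Lem212 Lem212b

set_option maxHeartbeats 2000000

theorem lemma_2_1_2
    {F L : Type*} [Field F] [CharZero F] [LieRing L] [LieAlgebra F L]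
    (H : LieSubalgebra F L)
    (habelian : ∀ x y : ↥H, ⁅x, y⁆ = 0)
    -- root spaces with respect to H
    (Lrt : Module.Dual F ↥H → Submodule F L)
    (hLrt : ∀ ξ (x : L), x ∈ Lrt ξ ↔ ∀ h : ↥H, ⁅(h : L), x⁆ = ξ h • x)
    -- root space decomposition L = ⊕_{ξ} L_ξ
    (hdecomp : ⨆ ξ, Lrt ξ = ⊤) (hindep : iSupIndep Lrt)
    -- the set of roots
    (R : Set (Module.Dual F ↥H))
    (hR : R = {ξ | Lrt ξ ≠ ⊥})
    -- a symmetric invariant bilinear form on L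
    (B : LinearMap.BilinForm F L)
    (hBsym : ∀ x y : L, B x y = B y x)
    (hBinv : ∀ x y z : L, B ⁅x, y⁆ z = B x ⁅y, z⁆)
    -- (A1) H is self-centralizing
    (hA1 : Lrt 0 = H.toSubmodule)
    -- (A2) B is nondegenerate
    (hA2 : B.Nondegenerate)
    -- (A3) every root is represented by some t_ξ ∈ H
    (t : Module.Dual F ↥H → ↥H)
    (hA3 : ∀ ξ ∈ R, ∀ h : ↥H, ξ h = B (t ξ) h)
    -- the induced form, extended bilinearly to the span of R
    (form : LinearMap.BilinForm F (Module.Dual F ↥H))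
    (hform : ∀ ξ ∈ R, ∀ η ∈ R, form ξ η = B (t ξ : L) (t η : L))
    -- (A4) ad x is locally nilpotent for x in an anisotropic root space
    (hA4 : ∀ α ∈ R, form α α ≠ 0 → ∀ x ∈ Lrt α, ∀ y : L,
      ∃ n : ℕ, ((LieAlgebra.ad F L x) ^ n) y = 0)
    :
    ∀ α ∈ R, form α α ≠ 0 →
      ((fun μ : Module.Dual F ↥H => μ - μ ((2 / form α α) • t α) • α) '' R = R) ∧
      (∀ ξ ∈ Submodule.span F R, ∀ η ∈ Submodule.span F R,
        form (ξ - ξ ((2 / form α α) • t α) • α) (η - η ((2 / form α α) • t α) • α)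
          = form ξ η) := by
  classical
  intro α hαR hs
  -- evaluation facts on the span of the roots
  have heval : ∀ ξ ∈ Submodule.span F R, form ξ α = ξ (t α) ∧ form α ξ = ξ (t α) := by
    intro ξ hξ
    induction hξ using Submodule.span_induction with
    | mem x hx =>
      constructor
      · rw [hform x hx α hαR, ← hA3 x hx (t α)]
      · rw [hform α hαR x hx, hBsym, ← hA3 x hx (t α)]
    | zero => simp
    | add x y hx hy ihx ihy =>
      obtain ⟨hx1, hx2⟩ := ihx; obtain ⟨hy1, hy2⟩ := ihy
      constructor
      · rw [map_add, LinearMap.add_apply, hx1, hy1, LinearMap.add_apply]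
      · rw [map_add, hx2, hy2, LinearMap.add_apply]
    | smul a x hx ihx =>
      obtain ⟨hx1, hx2⟩ := ihx
      constructor
      · rw [map_smul, LinearMap.smul_apply, hx1, LinearMap.smul_apply]
      · rw [map_smul, hx2, LinearMap.smul_apply]
  have hαspan : α ∈ Submodule.span F R := Submodule.subset_span hαR
  have hαtα : α (t α) = form α α := by
    rw [hA3 α hαR (t α), hform α hαR α hαR]
  have hα2 : α ((2 / form α α) • t α) = 2 := by
    rw [map_smul, smul_eq_mul, hαtα]
    field_simp
  -- Part 2 : invariance of the form
  have part2 : ∀ ξ ∈ Submodule.span F R, ∀ η ∈ Submodule.span F R,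
      form (ξ - ξ ((2 / form α α) • t α) • α) (η - η ((2 / form α α) • t α) • α)
        = form ξ η := by
    intro ξ hξ η hη
    obtain ⟨ha1, ha2⟩ := heval ξ hξ
    obtain ⟨hb1, hb2⟩ := heval η hη
    have hξc : ξ ((2 / form α α) • t α) = 2 / form α α * ξ (t α) := by
      rw [map_smul, smul_eq_mul]
    have hηc : η ((2 / form α α) • t α) = 2 / form α α * η (t α) := by
      rw [map_smul, smul_eq_mul]
    simp only [map_sub, map_smul, LinearMap.sub_apply, LinearMap.smul_apply, smul_eq_mul]
    rw [ha1, hb2]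
    field_simp
    ring
  refine ⟨?_, part2⟩
  -- basic structural facts
  have hbr : ∀ (ξ η : Module.Dual F ↥H) (x y : L), x ∈ Lrt ξ → y ∈ Lrt η →
      ⁅x, y⁆ ∈ Lrt (ξ + η) := by
    intro ξ η x y hx hy
    rw [hLrt]
    intro h
    rw [leibniz_lie, (hLrt ξ x).1 hx h, (hLrt η y).1 hy h, smul_lie, lie_smul,
      LinearMap.add_apply, add_smul]
  have horth : ∀ (ξ η : Module.Dual F ↥H) (x y : L), x ∈ Lrt ξ → y ∈ Lrt η →
      ξ + η ≠ 0 → B x y = 0 := by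
    intro ξ η x y hx hy hne
    have hex : ∃ h : ↥H, ξ h + η h ≠ 0 := by
      by_contra hno
      push_neg at hno
      exact hne (LinearMap.ext fun h => by simpa using hno h)
    obtain ⟨h, hh⟩ := hex
    have h1 : B ⁅(h : L), x⁆ y = B (h : L) ⁅x, y⁆ := hBinv _ _ _
    have h2 : B ⁅x, (h : L)⁆ y = B x ⁅(h : L), y⁆ := hBinv _ _ _
    have h3 : ⁅x, (h : L)⁆ = -⁅(h : L), x⁆ := (lie_skew _ _).symm
    have l1 : B ⁅(h : L), x⁆ y = ξ h * B x y := by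
      rw [(hLrt ξ x).1 hx h, map_smul, LinearMap.smul_apply, smul_eq_mul]
    have l2 : B x ⁅(h : L), y⁆ = η h * B x y := by
      rw [(hLrt η y).1 hy h, map_smul, smul_eq_mul]
    have h4 : ξ h * B x y = -(η h * B x y) := by
      calc ξ h * B x y = B ⁅(h : L), x⁆ y := l1.symm
        _ = - (B ⁅x, (h : L)⁆ y) := by rw [h3, map_neg, LinearMap.neg_apply, neg_neg]
        _ = - (B x ⁅(h : L), y⁆) := by rw [h2]
        _ = -(η h * B x y) := by rw [l2]
    have h5 : (ξ h + η h) * B x y = 0 := by linear_combination h4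
    rcases mul_eq_zero.1 h5 with h6 | h6
    · exact absurd h6 hh
    · exact h6
  have hHnd : ∀ w : L, w ∈ H.toSubmodule → (∀ h : ↥H, B (h : L) w = 0) → w = 0 := by
    intro w hw hall
    have hw0 : w ∈ Lrt 0 := by rw [hA1]; exact hw
    have hker : ∀ ξ, Lrt ξ ≤ LinearMap.ker (B w) := by
      intro ξ u hu
      rw [LinearMap.mem_ker]
      by_cases hξ : ξ = 0
      · subst hξ
        have hu' : u ∈ H.toSubmodule := by rw [← hA1]; exact hu
        rw [hBsym]
        exact hall ⟨u, hu'⟩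
      · exact horth 0 ξ w u hw0 hu (by simpa using hξ)
    have htop : (⊤ : Submodule F L) ≤ LinearMap.ker (B w) := by
      rw [← hdecomp]; exact iSup_le hker
    exact hA2.1 w fun u => LinearMap.mem_ker.1 (htop Submodule.mem_top)
  have hpair : ∀ x ∈ Lrt α, ∀ y ∈ Lrt (-α), ⁅x, y⁆ = B x y • ((t α : L)) := by
    intro x hx y hy
    have hxyH : ⁅x, y⁆ ∈ H.toSubmodule := by
      have h := hbr α (-α) x y hx hy
      rw [add_neg_cancel] at h
      rw [← hA1]; exact h
    have htαH : ((t α : L)) ∈ H.toSubmodule := (t α).2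
    have hd : ⁅x, y⁆ - B x y • ((t α : L)) ∈ H.toSubmodule :=
      sub_mem hxyH (Submodule.smul_mem _ _ htαH)
    have hz : ∀ h : ↥H, B (h : L) (⁅x, y⁆ - B x y • ((t α : L))) = 0 := by
      intro h
      have l1 : B (h : L) ⁅x, y⁆ = α h * B x y := by
        rw [← hBinv (h : L) x y, (hLrt α x).1 hx h, map_smul, LinearMap.smul_apply, smul_eq_mul]
      have l2 : B (h : L) ((t α : L)) = α h := by
        rw [hBsym, ← hA3 α hαR h]
      rw [map_sub, map_smul, l1, l2, smul_eq_mul]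
      ring
    have := hHnd _ hd hz
    rw [sub_eq_zero] at this
    exact this
  -- choose e and f
  have hαbot : Lrt α ≠ ⊥ := by
    have h' := hαR
    rw [hR] at h'
    exact h'
  obtain ⟨e, heLα, he0⟩ := (Submodule.ne_bot_iff _).1 hαbot
  have hey : ∃ y ∈ Lrt (-α), B e y ≠ 0 := by
    by_contra hno
    push_neg at hno
    have hker : ∀ ξ, Lrt ξ ≤ LinearMap.ker (B e) := by
      intro ξ u hu
      rw [LinearMap.mem_ker]
      by_cases hξ : ξ = -α
      · subst hξ; exact hno u hu
      · refine horth α ξ e u heLα hu ?_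
        intro hcon
        exact hξ (by rw [eq_neg_of_add_eq_zero_right hcon])
    have htop : (⊤ : Submodule F L) ≤ LinearMap.ker (B e) := by
      rw [← hdecomp]; exact iSup_le hker
    exact he0 (hA2.1 e fun u => LinearMap.mem_ker.1 (htop Submodule.mem_top))
  obtain ⟨y, hyLnα, hBey⟩ := hey
  have hy0 : y ≠ 0 := fun h => hBey (by rw [h, map_zero])
  have hnegR : (-α) ∈ R := by
    rw [hR]
    simp only [Set.mem_setOf_eq]
    intro hbot
    have h' := hyLnα
    rw [hbot] at h'
    exact hy0 ((Submodule.mem_bot F).1 h')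
  set f : L := ((2 / form α α) * (B e y)⁻¹) • y with hfdef
  have hfL : f ∈ Lrt (-α) := Submodule.smul_mem _ _ hyLnα
  have hef : ⁅e, f⁆ = (2 / form α α) • ((t α : L)) := by
    rw [hfdef, lie_smul, hpair e heLα y hyLnα, smul_smul]
    congr 1
    field_simp
  -- the distinguished coroot element
  set hαL : L := (2 / form α α) • ((t α : L)) with hαLdef
  set hH : ↥H := (2 / form α α) • t α with hHdef
  have hαLcoe : ((hH : L)) = hαL := by rw [hHdef, hαLdef]; rfl
  have hαhH : α hH = 2 := hα2
  -- nilpotency facts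
  have hnegnil : ∀ (D : Module.End F L), (∀ w : L, ∃ n, (D ^ n) w = 0) →
      ∀ w : L, ∃ n, ((-D) ^ n) w = 0 := by
    intro D hD w
    obtain ⟨n, hn⟩ := hD w
    exact ⟨n, by rw [← neg_one_smul F D, smul_pow, LinearMap.smul_apply, hn, smul_zero]⟩
  have hnil_e : ∀ w : L, ∃ n, ((LieAlgebra.ad F L e) ^ n) w = 0 := fun w => hA4 α hαR hs e heLα w
  have hform_neg : form (-α) (-α) = form α α := by
    simp only [map_neg, LinearMap.neg_apply, neg_neg]
  have hnil_f : ∀ w : L, ∃ n, ((LieAlgebra.ad F L f) ^ n) w = 0 :=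
    fun w => hA4 (-α) hnegR (by rw [hform_neg]; exact hs) f hfL w
  have hadneg : ∀ z : L, LieAlgebra.ad F L (-z) = -(LieAlgebra.ad F L z) := by
    intro z
    ext w
    simp [neg_lie]
  have hnil_ne : ∀ w : L, ∃ n, ((LieAlgebra.ad F L (-e)) ^ n) w = 0 := by
    intro w; rw [hadneg]; exact hnegnil _ hnil_e w
  have hnil_nf : ∀ w : L, ∃ n, ((LieAlgebra.ad F L (-f)) ^ n) w = 0 := by
    intro w; rw [hadneg]; exact hnegnil _ hnil_f w
  -- the generic reflection automorphism computation on H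
  have genΘ : ∀ (e' f' : L), e' ∈ Lrt α → f' ∈ Lrt (-α) → ⁅e', f'⁆ = hαL →
      (∀ w : L, ∃ n, ((LieAlgebra.ad F L e') ^ n) w = 0) →
      (∀ w : L, ∃ n, ((LieAlgebra.ad F L (-f')) ^ n) w = 0) →
      ∀ h : ↥H, lexp (LieAlgebra.ad F L e')
          (lexp (LieAlgebra.ad F L (-f')) (lexp (LieAlgebra.ad F L e') (h : L)))
        = (h : L) - α h • hαL := by
    intro e' f' he' hf' hef' hne' hnf' h
    set D := LieAlgebra.ad F L e' with hD
    set G := LieAlgebra.ad F L (-f') with hG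
    have hDapp : ∀ w : L, D w = ⁅e', w⁆ := fun w => rfl
    have hGapp : ∀ w : L, G w = ⁅-f', w⁆ := fun w => rfl
    have hsq : ∀ w : L, (D ^ 2) w = D (D w) := by
      intro w; rw [pow_two, Module.End.mul_apply]
    have hGsq : ∀ w : L, (G ^ 2) w = G (G w) := by
      intro w; rw [pow_two, Module.End.mul_apply]
    have hGcube : ∀ w : L, (G ^ 3) w = G (G (G w)) := by
      intro w
      rw [pow_succ, Module.End.mul_apply, hGsq]
    -- basic bracket computations
    have hDh : D (h : L) = -(α h) • e' := by
      rw [hDapp, ← lie_skew, (hLrt α e').1 he' h, neg_smul]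
    have hDe : D e' = 0 := by rw [hDapp, lie_self]
    have hDhαL : D hαL = -(2 : F) • e' := by
      rw [hDapp, ← hαLcoe, ← lie_skew, (hLrt α e').1 he' hH, hαhH, neg_smul]
    have hGh : G (h : L) = -(α h) • f' := by
      rw [hGapp, neg_lie, ← lie_skew, neg_neg, (hLrt (-α) f').1 hf' h, LinearMap.neg_apply,
        neg_smul]
    have hGf : G f' = 0 := by rw [hGapp, neg_lie, lie_self, neg_zero]
    have hGe : G e' = hαL := by
      rw [hGapp, neg_lie, ← lie_skew, neg_neg, hef']
    have hGhαL : G hαL = -(2 : F) • f' := by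
      rw [hGapp, neg_lie, ← lie_skew, neg_neg, ← hαLcoe, (hLrt (-α) f').1 hf' hH,
        LinearMap.neg_apply, hαhH, neg_smul]
    -- lexp computations
    have e1 : lexp D (h : L) = (h : L) - α h • e' := by
      rw [lexp_of_sq D (by rw [hsq, hDh, map_smul, hDe, smul_zero]), hDh]
      rw [neg_smul, ← sub_eq_add_neg]
    have e2 : lexp D e' = e' := lexp_of_fix D hDe
    have e3 : lexp D hαL = hαL - (2 : F) • e' := by
      rw [lexp_of_sq D (by rw [hsq, hDhαL, map_smul, hDe, smul_zero]), hDhαL]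
      rw [neg_smul, ← sub_eq_add_neg]
    have g1 : lexp G (h : L) = (h : L) - α h • f' := by
      rw [lexp_of_sq G (by rw [hGsq, hGh, map_smul, hGf, smul_zero]), hGh]
      rw [neg_smul, ← sub_eq_add_neg]
    have g2 : lexp G e' = e' + hαL - f' := by
      rw [lexp_of_cube G (by rw [hGcube, hGe, hGhαL, map_smul, hGf, smul_zero]), hGe]
      rw [hGsq, hGe, hGhαL]
      rw [smul_smul]
      norm_num
      abel
    calc lexp D (lexp G (lexp D (h : L)))
        = lexp D (lexp G ((h : L) - α h • e')) := by rw [e1]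
      _ = lexp D (lexp G (h : L) - α h • lexp G e') := by
          rw [lexp_sub G (hnf' _) (hnf' _), lexp_smul G _ (hnf' _)]
      _ = lexp D ((h : L) - α h • e' - α h • hαL) := by
          rw [g1, g2]
          congr 1
          module
      _ = lexp D (h : L) - α h • lexp D e' - α h • lexp D hαL := by
          rw [lexp_sub D (hne' _) (hne' _), lexp_sub D (hne' _) (hne' _),
            lexp_smul D _ (hne' _), lexp_smul D _ (hne' _)]
      _ = (h : L) - α h • hαL := by
          rw [e1, e2, e3]
          module
  -- the reflection automorphism and its inverse
  set adE := LieAlgebra.ad F L e with hadE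
  set adF := LieAlgebra.ad F L f with hadF
  set Θ : L → L := fun w => lexp adE (lexp (LieAlgebra.ad F L (-f)) (lexp adE w)) with hΘdef
  set Θ' : L → L :=
    fun w => lexp (LieAlgebra.ad F L (-e)) (lexp adF (lexp (LieAlgebra.ad F L (-e)) w))
    with hΘ'def
  have hadnegf : LieAlgebra.ad F L (-f) = -adF := hadneg f
  have hadnege : LieAlgebra.ad F L (-e) = -adE := hadneg e
  have hΘ'Θ : ∀ w : L, Θ' (Θ w) = w := by
    intro w
    rw [hΘdef, hΘ'def]
    simp only []
    rw [hadnegf, hadnege]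
    rw [show lexp (-adE) (lexp adE (lexp (-adF) (lexp adE w)))
        = lexp (-adF) (lexp adE w) from lexp_neg_lexp adE (hnil_e _)]
    rw [show lexp adF (lexp (-adF) (lexp adE w)) = lexp adE w by
      have h1 : ∃ n, ((-adF) ^ n) (lexp adE w) = 0 := by
        rw [← hadnegf]; exact hnil_nf _
      have h2 := lexp_neg_lexp (-adF) h1
      rwa [neg_neg] at h2]
    exact lexp_neg_lexp adE (hnil_e _)
  have hΘhom : ∀ u v : L, Θ ⁅u, v⁆ = ⁅Θ u, Θ v⁆ := by
    intro u v
    rw [hΘdef]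
    simp only []
    rw [lexp_lie e (hnil_e _) (hnil_e _)]
    rw [lexp_lie (-f) (hnil_nf _) (hnil_nf _)]
    rw [lexp_lie e (hnil_e _) (hnil_e _)]
  have hΘsmul : ∀ (a : F) (v : L), Θ (a • v) = a • Θ v := by
    intro a v
    rw [hΘdef]
    simp only []
    rw [lexp_smul adE _ (hnil_e _), lexp_smul _ _ (hnil_nf _), lexp_smul adE _ (hnil_e _)]
  have hΘzero : Θ (0 : L) = 0 := by
    rw [hΘdef]
    simp only []
    rw [lexp_zero, lexp_zero, lexp_zero]
  have hΘH : ∀ h : ↥H, Θ (h : L) = (h : L) - α h • hαL := by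
    intro h
    exact genΘ e f heLα hfL hef hnil_e hnil_nf h
  have hΘ'H : ∀ h : ↥H, Θ' (h : L) = (h : L) - α h • hαL := by
    intro h
    have hne2 : (-e) ∈ Lrt α := neg_mem heLα
    have hnf2 : (-f) ∈ Lrt (-α) := neg_mem hfL
    have hef2 : ⁅-e, -f⁆ = hαL := by rw [neg_lie, lie_neg, neg_neg, hef]
    have hn2 : ∀ w : L, ∃ n, ((LieAlgebra.ad F L (-(-f))) ^ n) w = 0 := by
      intro w; rw [neg_neg]; exact hnil_f w
    have hgen := genΘ (-e) (-f) hne2 hnf2 hef2 hnil_ne hn2 h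
    have hconv : LieAlgebra.ad F L (-(-f)) = adF := by rw [neg_neg]
    rw [hconv] at hgen
    exact hgen
  -- main step : the reflection maps roots to roots
  have hmain : ∀ μ ∈ R, (μ - μ hH • α) ∈ R := by
    intro μ hμR
    have hμbot : Lrt μ ≠ ⊥ := by
      have h' := hμR
      rw [hR] at h'
      exact h'
    obtain ⟨v, hvL, hv0⟩ := (Submodule.ne_bot_iff _).1 hμbot
    have hwne : Θ v ≠ 0 := by
      intro hcon
      apply hv0
      calc v = Θ' (Θ v) := (hΘ'Θ v).symm
        _ = Θ' 0 := by rw [hcon]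
        _ = 0 := by simp only [hΘ'def]; rw [lexp_zero, lexp_zero, lexp_zero]
    have hwmem : Θ v ∈ Lrt (μ - μ hH • α) := by
      rw [hLrt]
      intro h
      set h' : ↥H := h - α h • hH with hh'def
      have hh'coe : ((h' : L)) = (h : L) - α h • hαL := by
        rw [← hαLcoe, hh'def]
        simp only [AddSubgroupClass.coe_sub, SetLike.val_smul]
      have hθh' : Θ (h' : L) = (h : L) := by
        rw [hΘH h']
        have hαh' : α h' = - α h := by
          rw [hh'def, map_sub, map_smul, hαhH, smul_eq_mul]; ring
        rw [hh'coe, hαh']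
        module
      calc ⁅(h : L), Θ v⁆ = ⁅Θ (h' : L), Θ v⁆ := by rw [hθh']
        _ = Θ ⁅(h' : L), v⁆ := (hΘhom _ _).symm
        _ = Θ (μ h' • v) := by rw [(hLrt μ v).1 hvL h']
        _ = μ h' • Θ v := hΘsmul _ _
        _ = (μ - μ hH • α) h • Θ v := by
            congr 1
            rw [hh'def, map_sub, map_smul, smul_eq_mul, LinearMap.sub_apply,
              LinearMap.smul_apply, smul_eq_mul]
            ring
    rw [hR]
    simp only [Set.mem_setOf_eq]
    intro hbot
    apply hwne
    rw [hbot] at hwmem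
    exact (Submodule.mem_bot F).1 hwmem
  -- conclude : the image equality
  have hinvol : ∀ μ : Module.Dual F ↥H, (μ - μ hH • α) - ((μ - μ hH • α) hH) • α = μ := by
    intro μ
    have hval : (μ - μ hH • α) hH = - μ hH := by
      rw [LinearMap.sub_apply, LinearMap.smul_apply, smul_eq_mul, hαhH]; ring
    rw [hval]
    module
  ext μ
  simp only [Set.mem_image]
  constructor
  · rintro ⟨ν, hν, rfl⟩
    exact hmain ν hν
  · intro hμ
    exact ⟨μ - μ hH • α, hmain μ hμ, hinvol μ⟩
end

section
/- If α ∈ R^× is an anisotropic root, k ∈ F, and k·α ∈ R, then k = 0, k = 1, or k = −1. -/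
theorem lemma_2_1_3
    {F L : Type*} [Field F] [CharZero F] [LieRing L] [LieAlgebra F L]
    (H : LieSubalgebra F L)
    (habelian : ∀ x y : ↥H, ⁅x, y⁆ = 0)
    -- root spaces with respect to H
    (Lrt : Module.Dual F ↥H → Submodule F L)
    (hLrt : ∀ ξ (x : L), x ∈ Lrt ξ ↔ ∀ h : ↥H, ⁅(h : L), x⁆ = ξ h • x)
    -- root space decomposition L = ⊕_{ξ} L_ξ
    (hdecomp : ⨆ ξ, Lrt ξ = ⊤) (hindep : iSupIndep Lrt)
    -- the set of roots
    (R : Set (Module.Dual F ↥H))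
    (hR : R = {ξ | Lrt ξ ≠ ⊥})
    -- a symmetric invariant bilinear form on L
    (B : LinearMap.BilinForm F L)
    (hBsym : ∀ x y : L, B x y = B y x)
    (hBinv : ∀ x y z : L, B ⁅x, y⁆ z = B x ⁅y, z⁆)
    -- (A1) H is self-centralizing
    (hA1 : Lrt 0 = H.toSubmodule)
    -- (A2) B is nondegenerate
    (hA2 : B.Nondegenerate)
    -- (A3) every root is represented by some t_ξ ∈ H
    (t : Module.Dual F ↥H → ↥H)
    (hA3 : ∀ ξ ∈ R, ∀ h : ↥H, ξ h = B (t ξ) h)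
    -- the induced form, extended bilinearly to the span of R
    (form : LinearMap.BilinForm F (Module.Dual F ↥H))
    (hform : ∀ ξ ∈ R, ∀ η ∈ R, form ξ η = B (t ξ : L) (t η : L))
    -- (A4) ad x is locally nilpotent for x in an anisotropic root space
    (hA4 : ∀ α ∈ R, form α α ≠ 0 → ∀ x ∈ Lrt α, ∀ y : L,
      ∃ n : ℕ, ((LieAlgebra.ad F L x) ^ n) y = 0)
    :
    ∀ α ∈ R, form α α ≠ 0 → ∀ k : F, k • α ∈ R → k = 0 ∨ k = 1 ∨ k = -1 := by
  classical
  -- orthogonality of root spaces for non-opposite roots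
  have horth : ∀ (ξ η : Module.Dual F ↥H) (x y : L), x ∈ Lrt ξ → y ∈ Lrt η →
      ξ + η ≠ 0 → B x y = 0 := by
    intro ξ η x y hx hy hne
    obtain ⟨h, hh⟩ : ∃ h : ↥H, ξ h + η h ≠ 0 := by
      by_contra hc
      push_neg at hc
      exact hne (LinearMap.ext fun h => by simpa using hc h)
    have e1 : ξ h * B x y = B (h : L) ⁅x, y⁆ := by
      rw [← hBinv (h : L) x y, (hLrt ξ x).mp hx h, map_smul, LinearMap.smul_apply, smul_eq_mul]
    have e2 : η h * B x y = - B (h : L) ⁅x, y⁆ := by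
      have := hBinv (h : L) y x
      rw [(hLrt η y).mp hy h, map_smul, LinearMap.smul_apply, smul_eq_mul] at this
      rw [hBsym x y, this, ← lie_skew x y, map_neg, neg_neg]
    have : (ξ h + η h) * B x y = 0 := by rw [add_mul, e1, e2]; ring
    rcases mul_eq_zero.mp this with h' | h'
    · exact absurd h' hh
    · exact h'
  -- pairing with the opposite root space
  have hcomp : ∀ (α : Module.Dual F ↥H) (e : L), e ∈ Lrt α → e ≠ 0 →
      ∃ f, f ∈ Lrt (-α) ∧ B e f ≠ 0 := by
    intro α e he he0
    by_contra hc
    push_neg at hc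
    refine he0 (hA2.1 e fun y => ?_)
    have hy : y ∈ ⨆ ξ, Lrt ξ := hdecomp ▸ Submodule.mem_top
    refine Submodule.iSup_induction (motive := fun z => B e z = 0) Lrt hy (fun η z hz => ?_)
      (by simp) (fun a b ha hb => by simp only [map_add]; rw [ha, hb, add_zero])
    by_cases hcase : η = -α
    · exact hc z (hcase ▸ hz)
    · exact horth α η e z he hz (by
        intro hcon
        exact hcase (by linear_combination (norm := module) hcon))
  -- brackets of root vectors
  have hbrk : ∀ (ξ η : Module.Dual F ↥H) (x y : L), x ∈ Lrt ξ → y ∈ Lrt η →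
      ⁅x, y⁆ ∈ Lrt (ξ + η) := by
    intro ξ η x y hx hy
    rw [hLrt]
    intro h
    rw [leibniz_lie, (hLrt ξ x).mp hx h, (hLrt η y).mp hy h, smul_lie, lie_smul,
      LinearMap.add_apply, add_smul]
  -- powers of ad map root spaces to root spaces
  have hadn : ∀ (β ξ : Module.Dual F ↥H) (u : L), u ∈ Lrt β → ∀ (n : ℕ) (x : L), x ∈ Lrt ξ →
      ((LieModule.toEnd F L L u) ^ n) x ∈ Lrt ((n : F) • β + ξ) := by
    intro β ξ u hu n
    induction n with
    | zero => intro x hx; simpa using hx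
    | succ n ih =>
      intro x hx
      have h1 : ((LieModule.toEnd F L L u) ^ (n + 1)) x
          = ⁅u, ((LieModule.toEnd F L L u) ^ n) x⁆ := by
        rw [pow_succ', Module.End.mul_apply, LieModule.toEnd_apply_apply]
      rw [h1]
      have h2 := hbrk β ((n : F) • β + ξ) u _ hu (ih x hx)
      have h3 : β + ((n : F) • β + ξ) = ((n + 1 : ℕ) : F) • β + ξ := by
        push_cast
        module
      rwa [h3] at h2
  -- scaling of the induced form
  have hSC : ∀ α ∈ R, ∀ k : F, (k • α) ∈ R → form (k • α) (k • α) = k^2 * form α α := by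
    intro α hα k hkα
    rw [hform _ hkα _ hkα, ← hA3 _ hkα, LinearMap.smul_apply, smul_eq_mul,
      hA3 _ hα, hBsym, ← hA3 _ hkα, LinearMap.smul_apply, smul_eq_mul, hA3 _ hα,
      ← hform _ hα _ hα]
    ring
  have hNEG : ∀ α ∈ R, -α ∈ R → form (-α) (-α) = form α α := by
    intro α hα hnα
    rw [hform _ hnα _ hnα, ← hA3 _ hnα, LinearMap.neg_apply, hA3 _ hα, hBsym, ← hA3 _ hnα,
      LinearMap.neg_apply, hA3 _ hα, ← hform _ hα _ hα]
    ring
  -- sl2 triple attached to an anisotropic root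
  have hsl2 : ∀ α ∈ R, form α α ≠ 0 →
      ∃ (e f hl : L) (hH : ↥H), IsSl2Triple hl e f ∧ e ∈ Lrt α ∧ f ∈ Lrt (-α) ∧
        (hH : L) = hl ∧ α hH = 2 ∧ (-α) ∈ R := by
    intro α hαR haniso
    obtain ⟨e, he, he0⟩ : ∃ e ∈ Lrt α, e ≠ 0 := by
      have : Lrt α ≠ ⊥ := by rw [hR] at hαR; exact hαR
      exact (Submodule.ne_bot_iff _).mp this
    obtain ⟨f', hf', hc⟩ := hcomp α e he he0
    have hf'0 : f' ≠ 0 := by rintro rfl; simp at hc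
    have hnegR : -α ∈ R := by
      rw [hR]
      exact fun hbot => hf'0 (hbot ▸ hf' : f' ∈ (⊥ : Submodule F L))
    have hwmem : ⁅e, f'⁆ ∈ H := by
      have := hbrk α (-α) e f' he hf'
      rw [add_neg_cancel, hA1] at this
      exact this
    obtain ⟨a, ha'⟩ : ∃ a : F, a = α ⟨⁅e, f'⁆, hwmem⟩ := ⟨_, rfl⟩
    have hwe : ⁅⁅e, f'⁆, e⁆ = a • e := by
      rw [ha']; exact (hLrt α e).mp he ⟨⁅e, f'⁆, hwmem⟩
    have hwf : ⁅⁅e, f'⁆, f'⁆ = -(a • f') := by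
      have h1 := (hLrt (-α) f').mp hf' ⟨⁅e, f'⁆, hwmem⟩
      rw [LinearMap.neg_apply, neg_smul] at h1
      rw [ha']; exact h1
    have ha : a = form α α * B e f' := by
      rw [ha', hA3 _ hαR ⟨⁅e, f'⁆, hwmem⟩]
      have h1 : B (t α : L) ⁅e, f'⁆ = B ⁅(t α : L), e⁆ f' := (hBinv _ e f').symm
      have h2 : ⁅(t α : L), e⁆ = α (t α) • e := (hLrt α e).mp he (t α)
      have h3 : α (t α) = form α α := by
        rw [hA3 _ hαR (t α), hform _ hαR _ hαR]
      show B (t α : L) ⁅e, f'⁆ = _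
      rw [h1, h2, map_smul, LinearMap.smul_apply, smul_eq_mul, h3]
    have ha0 : a ≠ 0 := by rw [ha]; exact mul_ne_zero haniso hc
    have h2a : (2 : F) / a ≠ 0 := div_ne_zero two_ne_zero ha0
    refine ⟨e, (2 / a) • f', (2 / a) • ⁅e, f'⁆, (2 / a) • ⟨⁅e, f'⁆, hwmem⟩,
      ⟨?_, lie_smul _ _ _, ?_, ?_⟩, he, Submodule.smul_mem _ _ hf', rfl, ?_, hnegR⟩
    · intro hzero
      rcases smul_eq_zero.mp hzero with h' | h'
      · exact h2a h'
      · refine ha0 ?_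
        rw [ha']
        have : (⟨⁅e, f'⁆, hwmem⟩ : ↥H) = 0 := Subtype.ext h'
        rw [this, map_zero]
    · rw [smul_lie, hwe]
      match_scalars
      field_simp
    · rw [smul_lie, lie_smul, hwf]
      match_scalars
      field_simp
    · rw [map_smul, smul_eq_mul, ← ha']
      field_simp
  -- integrality: 2k is an integer whenever kα is a root (α anisotropic)
  have hINT : ∀ α ∈ R, form α α ≠ 0 → ∀ k : F, k • α ∈ R → ∃ z : ℤ, 2 * k = (z : F) := by
    intro α hαR haniso k hkR
    obtain ⟨e, f, hl, hH, triple, he, hf, hHL, hα2, hnegR⟩ := hsl2 α hαR haniso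
    obtain ⟨x, hx, hx0⟩ : ∃ x ∈ Lrt (k • α), x ≠ 0 := by
      have : Lrt (k • α) ≠ ⊥ := by rw [hR] at hkR; exact hkR
      exact (Submodule.ne_bot_iff _).mp this
    -- minimal power of ad e killing x
    have hEnil : ∃ n : ℕ, ((LieModule.toEnd F L L e) ^ n) x = 0 := hA4 α hαR haniso e he x
    obtain ⟨m, hm1, hm2⟩ : ∃ m : ℕ, ((LieModule.toEnd F L L e) ^ m) x ≠ 0 ∧
        ((LieModule.toEnd F L L e) ^ (m + 1)) x = 0 := by
      have h0 : Nat.find hEnil ≠ 0 := by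
        intro h
        have := Nat.find_spec hEnil
        rw [h, pow_zero, Module.End.one_apply] at this
        exact hx0 this
      refine ⟨Nat.find hEnil - 1, Nat.find_min hEnil (by omega), ?_⟩
      have : Nat.find hEnil - 1 + 1 = Nat.find hEnil := by omega
      rw [this]
      exact Nat.find_spec hEnil
    set v : L := ((LieModule.toEnd F L L e) ^ m) x with hv
    have hv0 : v ≠ 0 := hm1
    have hve : ⁅e, v⁆ = 0 := by
      have : ((LieModule.toEnd F L L e) ^ (m + 1)) x = ⁅e, v⁆ := by
        rw [pow_succ', Module.End.mul_apply, LieModule.toEnd_apply_apply]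
      rw [← this, hm2]
    have hvmem : v ∈ Lrt ((m : F) • α + k • α) := hadn α (k • α) e he m x hx
    have hvh : ⁅hl, v⁆ = (2 * k + 2 * m) • v := by
      rw [← hHL, (hLrt _ v).mp hvmem hH]
      congr 1
      rw [LinearMap.add_apply, LinearMap.smul_apply, LinearMap.smul_apply, smul_eq_mul,
        smul_eq_mul, hα2]
      ring
    have P : triple.HasPrimitiveVectorWith v (2 * k + 2 * m) := ⟨hv0, hvh, hve⟩
    -- minimal power of ad f killing v
    have hFaniso : form (-α) (-α) ≠ 0 := by rw [hNEG α hαR hnegR]; exact haniso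
    have hFnil : ∃ n : ℕ, ((LieModule.toEnd F L L f) ^ n) v = 0 := hA4 (-α) hnegR hFaniso f hf v
    obtain ⟨n, hn1, hn2⟩ : ∃ n : ℕ, ((LieModule.toEnd F L L f) ^ n) v ≠ 0 ∧
        ((LieModule.toEnd F L L f) ^ (n + 1)) v = 0 := by
      have h0 : Nat.find hFnil ≠ 0 := by
        intro h
        have := Nat.find_spec hFnil
        rw [h, pow_zero, Module.End.one_apply] at this
        exact hv0 this
      refine ⟨Nat.find hFnil - 1, Nat.find_min hFnil (by omega), ?_⟩
      have : Nat.find hFnil - 1 + 1 = Nat.find hFnil := by omega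
      rw [this]
      exact Nat.find_spec hFnil
    have key := P.lie_e_pow_succ_toEnd_f n
    rw [hn2, lie_zero] at key
    have hcoef : ((n : F) + 1) * ((2 * k + 2 * m) - n) = 0 := by
      by_contra hcon
      exact hn1 (by
        have := (smul_eq_zero.mp key.symm).resolve_left hcon
        exact this)
    have hne : ((n : F) + 1) ≠ 0 := by
      have : ((n + 1 : ℕ) : F) ≠ 0 := Nat.cast_ne_zero.mpr (Nat.succ_ne_zero n)
      push_cast at this
      exact this
    have hμ : 2 * k + 2 * m = (n : F) := by
      rcases mul_eq_zero.mp hcoef with h' | h'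
      · exact absurd h' hne
      · linear_combination h'
    exact ⟨(n : ℤ) - 2 * m, by push_cast; linear_combination hμ⟩
  -- no anisotropic root can be doubled
  have hNO2 : ∀ γ ∈ R, form γ γ ≠ 0 → (2 : F) • γ ∈ R → False := by
    intro γ hγR hγa h2R
    -- 3γ is not a root
    have h3bot : Lrt ((3 : F) • γ) = ⊥ := by
      by_contra h3ne
      have h3R : (3 : F) • γ ∈ R := by rw [hR]; exact h3ne
      have h3a : form ((3 : F) • γ) ((3 : F) • γ) ≠ 0 := by
        rw [hSC γ hγR 3 h3R]
        exact mul_ne_zero (by norm_num) hγa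
      have hγ' : (3 : F)⁻¹ • ((3 : F) • γ) ∈ R := by
        rw [smul_smul, inv_mul_cancel₀ (by norm_num : (3:F) ≠ 0), one_smul]
        exact hγR
      obtain ⟨z, hz⟩ := hINT _ h3R h3a (3 : F)⁻¹ hγ'
      have h1 : ((3 * z : ℤ) : F) = 2 := by
        push_cast
        rw [← hz]
        field_simp
      have h2 : (3 * z : ℤ) = 2 := by exact_mod_cast h1
      omega
    obtain ⟨e, f, hl, hH, triple, he, hf, hHL, hγ2, hnegR⟩ := hsl2 γ hγR hγa
    obtain ⟨x, hx, hx0⟩ : ∃ x ∈ Lrt ((2 : F) • γ), x ≠ 0 := by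
      have : Lrt ((2 : F) • γ) ≠ ⊥ := by rw [hR] at h2R; exact h2R
      exact (Submodule.ne_bot_iff _).mp this
    have P : triple.HasPrimitiveVectorWith x (4 : F) := by
      refine ⟨hx0, ?_, ?_⟩
      · rw [← hHL, (hLrt _ x).mp hx hH]
        congr 1
        rw [LinearMap.smul_apply, smul_eq_mul, hγ2]
        norm_num
      · have h1 := hbrk γ ((2 : F) • γ) e x he hx
        have h2 : γ + (2 : F) • γ = (3 : F) • γ := by module
        rw [h2, h3bot] at h1
        simpa using h1
    -- ψ 2 lies in H
    have hψ2mem : ((LieModule.toEnd F L L f) ^ 2) x ∈ H := by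
      have h1 := hadn (-γ) ((2 : F) • γ) f hf 2 x hx
      have h2 : ((2 : ℕ) : F) • (-γ) + (2 : F) • γ = 0 := by push_cast; module
      rw [h2, hA1] at h1
      exact h1
    have hw : ⁅((LieModule.toEnd F L L f) ^ 2) x, f⁆
        = -(γ ⟨((LieModule.toEnd F L L f) ^ 2) x, hψ2mem⟩ • f) := by
      have h1 := (hLrt (-γ) f).mp hf ⟨((LieModule.toEnd F L L f) ^ 2) x, hψ2mem⟩
      rw [LinearMap.neg_apply, neg_smul] at h1
      exact h1
    have hψ3 : ((LieModule.toEnd F L L f) ^ 3) x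
        = γ ⟨((LieModule.toEnd F L L f) ^ 2) x, hψ2mem⟩ • f := by
      rw [show (3 : ℕ) = 2 + 1 from rfl, pow_succ', Module.End.mul_apply,
        LieModule.toEnd_apply_apply, ← lie_skew, hw, neg_neg]
    have hψ4 : ((LieModule.toEnd F L L f) ^ 4) x = 0 := by
      rw [show (4 : ℕ) = 3 + 1 from rfl, pow_succ', Module.End.mul_apply,
        LieModule.toEnd_apply_apply, hψ3, lie_smul, lie_self, smul_zero]
    have hne := P.pow_toEnd_f_ne_zero_of_eq_nat (n := 4) (by norm_num) (le_refl 4)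
    exact hne hψ4
  -- main argument
  intro α hαR haniso k hkR
  by_cases hk0 : k = 0
  · exact Or.inl hk0
  obtain ⟨z1, hz1⟩ := hINT α hαR haniso k hkR
  have hkaniso : form (k • α) (k • α) ≠ 0 := by
    rw [hSC α hαR k hkR]
    exact mul_ne_zero (pow_ne_zero 2 hk0) haniso
  have hinv : k⁻¹ • (k • α) ∈ R := by
    rw [smul_smul, inv_mul_cancel₀ hk0, one_smul]
    exact hαR
  obtain ⟨z2, hz2⟩ := hINT (k • α) hkR hkaniso k⁻¹ hinv
  have hprod : (z1 * z2 : ℤ) = 4 := by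
    have h1 : ((z1 * z2 : ℤ) : F) = 4 := by
      push_cast
      rw [← hz1, ← hz2]
      field_simp
      ring
    exact_mod_cast h1
  obtain ⟨eα, fα, hlα, hHα, tripleα, heα, hfα, hHLα, hα2α, hnegRα⟩ := hsl2 α hαR haniso
  have hneganiso : form (-α) (-α) ≠ 0 := by rw [hNEG α hαR hnegRα]; exact haniso
  have hz1dvd : z1 ∣ 4 := ⟨z2, hprod.symm⟩
  have hub : z1 ≤ 4 := Int.le_of_dvd (by norm_num) hz1dvd
  have hlb : -4 ≤ z1 := by
    have : -z1 ≤ 4 := Int.le_of_dvd (by norm_num) ((neg_dvd).mpr hz1dvd)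
    omega
  interval_cases z1
  · -- z1 = -4 : k = -2
    have hk : k = -2 := by push_cast at hz1; linear_combination hz1 / 2
    exfalso
    refine hNO2 (-α) hnegRα hneganiso ?_
    have : (2 : F) • (-α) = k • α := by rw [hk]; module
    rw [this]
    exact hkR
  · exfalso; omega
  · -- z1 = -2 : k = -1
    have hk : k = -1 := by push_cast at hz1; linear_combination hz1 / 2
    exact Or.inr (Or.inr hk)
  · -- z1 = -1 : k = -1/2
    exfalso
    refine hNO2 (k • α) hkR hkaniso ?_
    have hk : k = -(1/2) := by push_cast at hz1; linear_combination hz1 / 2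
    have : (2 : F) • (k • α) = -α := by rw [hk]; module
    rw [this]
    exact hnegRα
  · exfalso; omega
  · -- z1 = 1 : k = 1/2
    exfalso
    refine hNO2 (k • α) hkR hkaniso ?_
    have hk : k = 1/2 := by push_cast at hz1; linear_combination hz1 / 2
    have : (2 : F) • (k • α) = α := by rw [hk]; module
    rw [this]
    exact hαR
  · -- z1 = 2 : k = 1
    have hk : k = 1 := by push_cast at hz1; linear_combination hz1 / 2
    exact Or.inr (Or.inl hk)
  · exfalso; omega
  · -- z1 = 4 : k = 2
    exfalso
    have hk : k = 2 := by push_cast at hz1; linear_combination hz1 / 2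
    refine hNO2 α hαR haniso ?_
    have : (2 : F) • α = k • α := by rw [hk]
    rw [this]
    exact hkR
end

section
/- For every anisotropic root α ∈ R^×, the root space L_α is one-dimensional over F. -/
theorem lemma_2_1_4
    {F L : Type*} [Field F] [CharZero F] [LieRing L] [LieAlgebra F L]
    (H : LieSubalgebra F L)
    (habelian : ∀ x y : ↥H, ⁅x, y⁆ = 0)
    -- root spaces with respect to H
    (Lrt : Module.Dual F ↥H → Submodule F L)
    (hLrt : ∀ ξ (x : L), x ∈ Lrt ξ ↔ ∀ h : ↥H, ⁅(h : L), x⁆ = ξ h • x)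
    -- root space decomposition L = ⊕_{ξ} L_ξ
    (hdecomp : ⨆ ξ, Lrt ξ = ⊤) (hindep : iSupIndep Lrt)
    -- the set of roots
    (R : Set (Module.Dual F ↥H))
    (hR : R = {ξ | Lrt ξ ≠ ⊥})
    -- a symmetric invariant bilinear form on L
    (B : LinearMap.BilinForm F L)
    (hBsym : ∀ x y : L, B x y = B y x)
    (hBinv : ∀ x y z : L, B ⁅x, y⁆ z = B x ⁅y, z⁆)
    -- (A1) H is self-centralizing
    (hA1 : Lrt 0 = H.toSubmodule)
    -- (A2) B is nondegenerate
    (hA2 : B.Nondegenerate)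
    -- (A3) every root is represented by some t_ξ ∈ H
    (t : Module.Dual F ↥H → ↥H)
    (hA3 : ∀ ξ ∈ R, ∀ h : ↥H, ξ h = B (t ξ) h)
    -- the induced form, extended bilinearly to the span of R
    (form : LinearMap.BilinForm F (Module.Dual F ↥H))
    (hform : ∀ ξ ∈ R, ∀ η ∈ R, form ξ η = B (t ξ : L) (t η : L))
    -- (A4) ad x is locally nilpotent for x in an anisotropic root space
    (hA4 : ∀ α ∈ R, form α α ≠ 0 → ∀ x ∈ Lrt α, ∀ y : L,
      ∃ n : ℕ, ((LieAlgebra.ad F L x) ^ n) y = 0)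
    :
    ∀ α ∈ R, form α α ≠ 0 → Module.rank F ↥(Lrt α) = 1 := by
  classical
  -- Orthogonality of root spaces: B(L_ξ, L_η) = 0 unless ξ + η = 0.
  have horth : ∀ (ξ η : Module.Dual F ↥H), ξ + η ≠ 0 →
      ∀ x ∈ Lrt ξ, ∀ y ∈ Lrt η, B x y = 0 := by
    intro ξ η hne x hx y hy
    obtain ⟨h, hh⟩ : ∃ h : ↥H, ξ h + η h ≠ 0 := by
      by_contra hc
      push_neg at hc
      exact hne (LinearMap.ext fun h => by
        simpa [LinearMap.add_apply] using hc h)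
    have h2 : B ⁅x, (h : L)⁆ y = B x ⁅(h : L), y⁆ := hBinv _ _ _
    have hx' : ⁅(h : L), x⁆ = ξ h • x := (hLrt ξ x).mp hx h
    have hy' : ⁅(h : L), y⁆ = η h • y := (hLrt η y).mp hy h
    rw [← lie_skew, hx', hy'] at h2
    simp only [map_neg, map_smul, LinearMap.neg_apply, LinearMap.smul_apply,
      smul_eq_mul] at h2
    have : (ξ h + η h) * B x y = 0 := by linear_combination -h2
    rcases mul_eq_zero.mp this with h' | h'
    · exact absurd h' hh
    · exact h'
  -- If x ∈ L_ξ is orthogonal to L_{-ξ}, then x = 0.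
  have hzero : ∀ (ξ : Module.Dual F ↥H) (x : L), x ∈ Lrt ξ →
      (∀ y ∈ Lrt (-ξ), B x y = 0) → x = 0 := by
    intro ξ x hx hy
    apply hA2.1 x
    intro z
    have hz : z ∈ ⨆ η, Lrt η := hdecomp ▸ Submodule.mem_top
    refine Submodule.iSup_induction (motive := fun z => B x z = 0) Lrt hz ?_ ?_ ?_
    · intro η y hyη
      by_cases hcase : η = -ξ
      · exact hy y (hcase ▸ hyη)
      · refine horth ξ η ?_ x hx y hyη
        intro hcon
        exact hcase (by rw [← neg_eq_of_add_eq_zero_right hcon])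
    · simp
    · intro a b ha hb
      rw [map_add, ha, hb, add_zero]
  -- Brackets add root spaces.
  have hbk : ∀ (ξ η : Module.Dual F ↥H) (x : L), x ∈ Lrt ξ → ∀ y ∈ Lrt η,
      ⁅x, y⁆ ∈ Lrt (ξ + η) := by
    intro ξ η x hx y hy
    rw [hLrt]
    intro h
    rw [leibniz_lie, (hLrt ξ x).mp hx h, (hLrt η y).mp hy h, smul_lie, lie_smul,
      LinearMap.add_apply, add_smul]
  -- B is nondegenerate on H.
  have hHnd : ∀ h : ↥H, (∀ h' : ↥H, B (h : L) (h' : L) = 0) → (h : L) = 0 := by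
    intro h hh
    refine hzero 0 (h : L) (by rw [hA1]; exact h.2) ?_
    intro y hy
    rw [neg_zero, hA1] at hy
    exact hh ⟨y, hy⟩
  intro α hα hαα
  -- The key bracket formula: [x, y] = B(x,y) • t_α for x ∈ L_α, y ∈ L_{-α}.
  have hbf : ∀ x ∈ Lrt α, ∀ y ∈ Lrt (-α), ⁅x, y⁆ = B x y • (t α : L) := by
    intro x hx y hy
    have hmem : ⁅x, y⁆ ∈ Lrt 0 := by
      have := hbk α (-α) x hx y hy
      rwa [add_neg_cancel] at this
    have hmemH : ⁅x, y⁆ ∈ H.toSubmodule := hA1 ▸ hmem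
    have key : ∀ h' : ↥H, B ((⟨⁅x, y⁆, hmemH⟩ - B x y • t α : ↥H) : L) (h' : L) = 0 := by
      intro h'
      have e1 : B ⁅x, y⁆ (h' : L) = B x ⁅y, (h' : L)⁆ := hBinv _ _ _
      have e2 : ⁅y, (h' : L)⁆ = α h' • y := by
        rw [← lie_skew, (hLrt (-α) y).mp hy h']
        simp
      rw [e2] at e1
      have e3 : α h' = B (t α : L) (h' : L) := hA3 α hα h'
      have : ((⟨⁅x, y⁆, hmemH⟩ - B x y • t α : ↥H) : L) = ⁅x, y⁆ - B x y • (t α : L) := by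
        rfl
      rw [this, map_sub, map_smul, LinearMap.sub_apply, LinearMap.smul_apply, e1]
      simp only [map_smul, smul_eq_mul]
      rw [← e3]
      ring
    have := hHnd _ key
    have h2 : ((⟨⁅x, y⁆, hmemH⟩ - B x y • t α : ↥H) : L) = ⁅x, y⁆ - B x y • (t α : L) := by
      rfl
    rw [h2] at this
    exact sub_eq_zero.mp this
  -- pick a nonzero e ∈ L_α
  have hLne : Lrt α ≠ ⊥ := by rw [hR] at hα; exact hα
  obtain ⟨e, he, hene⟩ := (Submodule.ne_bot_iff _).mp hLne
  -- find f ∈ L_{-α} pairing nontrivially with e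
  obtain ⟨f, hf, hcf⟩ : ∃ f ∈ Lrt (-α), B e f ≠ 0 := by
    by_contra hc
    push_neg at hc
    exact hene (hzero α e he hc)
  -- α(t_α) = (α,α) ≠ 0
  have hA : α (t α) ≠ 0 := by
    have h1 := hform α hα α hα
    have h2 := hA3 α hα (t α)
    rw [h2, ← h1]
    exact hαα
  set c : F := B e f with hc
  set A : F := α (t α) with hAdef
  -- main claim: B(·, f) is injective on L_α
  have hinj : ∀ x ∈ Lrt α, B x f = 0 → x = 0 := by
    intro x hx hxf
    by_contra hxne
    -- the sequence y n = (ad e)^n x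
    set y : ℕ → L := fun n => ((LieAlgebra.ad F L e) ^ n) x with hy
    have hy0 : y 0 = x := rfl
    have hysucc : ∀ n, y (n + 1) = ⁅e, y n⁆ := by
      intro n
      rw [hy]
      simp only [pow_succ', Module.End.mul_apply]
      rfl
    -- weights of y n
    have hyw : ∀ n, y n ∈ Lrt ((n + 1) • α) := by
      intro n
      induction n with
      | zero => rw [hy0, one_nsmul]; exact hx
      | succ k ih =>
        rw [hysucc]
        have h1 := hbk α ((k + 1) • α) e he (y k) ih
        have harith : α + (k + 1) • α = (k + 1 + 1) • α := by
          have h2 : (k + 1 + 1) • α = (k + 1) • α + α := succ_nsmul α (k + 1)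
          rw [h2, add_comm]
        rwa [harith] at h1
    -- action of t_α on y n
    have htw : ∀ n, ⁅(t α : L), y n⁆ = (((n : F) + 1) * A) • y n := by
      intro n
      have h1 := (hLrt _ (y n)).mp (hyw n) (t α)
      rw [h1]
      congr 1
      rw [LinearMap.smul_apply, nsmul_eq_mul]
      push_cast
      ring
    -- [f, x] = 0
    have hfx0 : ⁅f, y 0⁆ = 0 := by
      rw [hy0, ← lie_skew, hbf x hx f hf, hxf, zero_smul, neg_zero]
    -- [f, e] = -c • t_α
    have hfe : ⁅f, e⁆ = -(c • (t α : L)) := by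
      rw [← lie_skew, hbf e he f hf]
    -- the coefficients m n
    set m : ℕ → F := fun n => Nat.rec 0 (fun k mk => mk - c * ((k : F) + 1) * A) n with hm
    have hm0 : m 0 = 0 := rfl
    have hmsucc : ∀ n, m (n + 1) = m n - c * ((n : F) + 1) * A := fun n => rfl
    -- the key recurrence: [f, y (n+1)] = m (n+1) • y n
    have hrec : ∀ n, ⁅f, y (n + 1)⁆ = m (n + 1) • y n := by
      intro n
      induction n with
      | zero =>
        rw [hysucc 0, leibniz_lie, hfe, hfx0, lie_zero, add_zero, neg_lie, smul_lie,
          htw 0, smul_smul, ← neg_smul]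
        congr 1
        rw [hmsucc 0, hm0]
        push_cast
        ring
      | succ k ih =>
        rw [hysucc (k + 1), leibniz_lie, hfe, ih, lie_smul, ← hysucc k, neg_lie,
          smul_lie, htw (k + 1), smul_smul, ← neg_smul, ← add_smul]
        congr 1
        rw [hmsucc (k + 1)]
        push_cast
        ring
    -- twice the coefficients, in closed form
    have hm2 : ∀ n, 2 * m n = -(c * A) * ((n : F) * ((n : F) + 1)) := by
      intro n
      induction n with
      | zero => simp [hm0]
      | succ k ih =>
        rw [hmsucc, mul_sub, ih]
        push_cast
        ring
    -- m (n+1) ≠ 0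
    have hmne : ∀ n, m (n + 1) ≠ 0 := by
      intro n hcon
      have h1 := hm2 (n + 1)
      rw [hcon, mul_zero] at h1
      have hcast1 : ((n + 1 : ℕ) : F) ≠ 0 := Nat.cast_ne_zero.mpr (by omega)
      have hcast2 : ((n + 2 : ℕ) : F) ≠ 0 := Nat.cast_ne_zero.mpr (by omega)
      have h3 : c * A * (((n + 1 : ℕ) : F) * ((n + 2 : ℕ) : F)) = 0 := by
        push_cast at h1 ⊢
        linear_combination h1
      rcases mul_eq_zero.mp h3 with h' | h'
      · rcases mul_eq_zero.mp h' with h'' | h''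
        · exact hcf h''
        · exact hA h''
      · rcases mul_eq_zero.mp h' with h'' | h''
        · exact hcast1 h''
        · exact hcast2 h''
    -- local nilpotency gives a minimal n with y n = 0
    obtain ⟨N, hN⟩ := hA4 α hα hαα e he x
    have hPex : ∃ n, y n = 0 := ⟨N, hN⟩
    have hyn₀ : y (Nat.find hPex) = 0 := Nat.find_spec hPex
    have hn₀pos : Nat.find hPex ≠ 0 := by
      intro hcon
      rw [hcon, hy0] at hyn₀
      exact hxne hyn₀
    obtain ⟨k, hk⟩ := Nat.exists_eq_succ_of_ne_zero hn₀pos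
    have hk' : Nat.find hPex = k + 1 := hk
    rw [hk'] at hyn₀
    have hyk : y k ≠ 0 := Nat.find_min hPex (by omega)
    have hfin : m (k + 1) • y k = 0 := by
      rw [← hrec k, hyn₀, lie_zero]
    exact hyk ((smul_eq_zero.mp hfin).resolve_left (hmne k))
  -- conclude: rank is 1
  have hφinj : Function.Injective ((B.flip f) ∘ₗ (Lrt α).subtype) := by
    rw [← LinearMap.ker_eq_bot, LinearMap.ker_eq_bot']
    intro z hz
    have hz' : B (z : L) f = 0 := hz
    exact Subtype.ext (hinj (z : L) z.2 hz')
  have hle : Module.rank F ↥(Lrt α) ≤ 1 := by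
    have h1 := LinearMap.lift_rank_le_of_injective ((B.flip f) ∘ₗ (Lrt α).subtype) hφinj
    simpa using h1
  have hnt : Nontrivial ↥(Lrt α) := Submodule.nontrivial_iff_ne_bot.mpr hLne
  exact le_antisymm hle (Cardinal.one_le_iff_pos.mpr rank_pos)
end

section
/- For every anisotropic root α ∈ R^× and every root ξ ∈ R, there exist nonnegative integers d and u such that for every n ∈ ℤ one has ξ + nα ∈ R if and only if −d ≤ n ≤ u; moreover (d − u)·1_F = ξ(h_α) = 2(ξ,α)/(α,α). -/
set_option linter.unusedSectionVars false

open LieAlgebra LieModule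

section Aux

variable {F L : Type*} [Field F] [CharZero F] [LieRing L] [LieAlgebra F L]

/-- Elementary sl2 fact: a primitive vector on which `f` acts locally nilpotently has
natural-number eigenvalue `N`, the vectors `f^i m` for `i ≤ N` are nonzero, and `f^(N+1) m = 0`. -/
lemma slprim {h e f : L} {t : IsSl2Triple h e f} {m : L} {μ : F}
    (P : t.HasPrimitiveVectorWith m μ)
    (hnil : ∃ n : ℕ, ((LieModule.toEnd F L L f) ^ n) m = 0) :
    ∃ N : ℕ, μ = N ∧ (∀ i, i ≤ N → ((LieModule.toEnd F L L f) ^ i) m ≠ 0) ∧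
      ((LieModule.toEnd F L L f) ^ (N + 1)) m = 0 := by
  classical
  have hN1 : ((toEnd F L L f) ^ Nat.find hnil) m = 0 := Nat.find_spec hnil
  have hpos : Nat.find hnil ≠ 0 := by
    intro h0
    rw [h0, pow_zero, Module.End.one_apply] at hN1
    exact P.ne_zero hN1
  obtain ⟨N, hN⟩ : ∃ N, Nat.find hnil = N + 1 := ⟨Nat.find hnil - 1, by omega⟩
  rw [hN] at hN1
  have hne : ∀ i, i ≤ N → ((toEnd F L L f) ^ i) m ≠ 0 := by
    intro i hi
    exact Nat.find_min hnil (by omega)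
  have h1 := P.lie_e_pow_succ_toEnd_f N
  rw [hN1, lie_zero] at h1
  have h2 : ((N : F) + 1) * (μ - N) = 0 := by
    rcases smul_eq_zero.mp h1.symm with h | h
    · exact h
    · exact absurd h (hne N le_rfl)
  have h3 : ((N : F) + 1) ≠ 0 := by
    exact_mod_cast (Nat.cast_add_one_ne_zero (R := F) N)
  have h4 : μ = N := by
    rcases mul_eq_zero.mp h2 with h | h
    · exact absurd h h3
    · exact sub_eq_zero.mp h
  exact ⟨N, h4, hne, hN1⟩

end Aux

section Aux2

variable {F L : Type*} [Field F] [CharZero F] [LieRing L] [LieAlgebra F L]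
  {H : LieSubalgebra F L} {Lrt : Module.Dual F ↥H → Submodule F L}

lemma bracket_mem (hLrt : ∀ ξ (x : L), x ∈ Lrt ξ ↔ ∀ h : ↥H, ⁅(h : L), x⁆ = ξ h • x)
    {β γ : Module.Dual F ↥H} {x y : L} (hx : x ∈ Lrt β) (hy : y ∈ Lrt γ) :
    ⁅x, y⁆ ∈ Lrt (β + γ) := by
  rw [hLrt]
  intro h
  rw [leibniz_lie, (hLrt β x).mp hx h, (hLrt γ y).mp hy h, smul_lie, lie_smul,
    LinearMap.add_apply, add_smul]

lemma pow_mem' (hLrt : ∀ ξ (x : L), x ∈ Lrt ξ ↔ ∀ h : ↥H, ⁅(h : L), x⁆ = ξ h • x)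
    {β γ : Module.Dual F ↥H} {x v : L} (hx : x ∈ Lrt β) (hv : v ∈ Lrt γ) (k : ℕ) :
    ((LieModule.toEnd F L L x) ^ k) v ∈ Lrt (γ + (k : ℤ) • β) := by
  induction k with
  | zero => simpa using hv
  | succ k ih =>
      have h1 := bracket_mem hLrt hx ih
      have h2 : β + (γ + (k : ℤ) • β) = γ + ((k + 1 : ℕ) : ℤ) • β := by
        push_cast
        rw [add_smul, one_smul]
        abel
      rw [h2] at h1
      rw [pow_succ', Module.End.mul_apply, LieModule.toEnd_apply_apply]
      exact h1

lemma ascend (hLrt : ∀ ξ (x : L), x ∈ Lrt ξ ↔ ∀ h : ↥H, ⁅(h : L), x⁆ = ξ h • x)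
    {β γ : Module.Dual F ↥H} {e v : L} (he : e ∈ Lrt β) (hv : v ∈ Lrt γ) (hv0 : v ≠ 0)
    (hnil : ∃ n : ℕ, ((LieModule.toEnd F L L e) ^ n) v = 0) :
    ∃ (K : ℕ) (w : L), w ∈ Lrt (γ + (K : ℤ) • β) ∧ w ≠ 0 ∧ ⁅e, w⁆ = 0 := by
  classical
  have hN1 : ((LieModule.toEnd F L L e) ^ Nat.find hnil) v = 0 := Nat.find_spec hnil
  have hpos : Nat.find hnil ≠ 0 := by
    intro h0
    rw [h0, pow_zero, Module.End.one_apply] at hN1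
    exact hv0 hN1
  obtain ⟨N, hN⟩ : ∃ N, Nat.find hnil = N + 1 := ⟨Nat.find hnil - 1, by omega⟩
  rw [hN] at hN1
  refine ⟨N, ((LieModule.toEnd F L L e) ^ N) v, pow_mem' hLrt he hv N,
    Nat.find_min hnil (by omega), ?_⟩
  rw [← LieModule.toEnd_apply_apply F, ← Module.End.mul_apply, ← pow_succ']
  exact hN1

end Aux2

section Aux3

variable {F L : Type*} [Field F] [CharZero F] [LieRing L] [LieAlgebra F L]
  {H : LieSubalgebra F L} {Lrt : Module.Dual F ↥H → Submodule F L}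
  {B : LinearMap.BilinForm F L}

lemma orth (hLrt : ∀ ξ (x : L), x ∈ Lrt ξ ↔ ∀ h : ↥H, ⁅(h : L), x⁆ = ξ h • x)
    (hBinv : ∀ x y z : L, B ⁅x, y⁆ z = B x ⁅y, z⁆)
    {β γ : Module.Dual F ↥H} (hne : β + γ ≠ 0) {x y : L}
    (hx : x ∈ Lrt β) (hy : y ∈ Lrt γ) : B x y = 0 := by
  obtain ⟨h, hh⟩ : ∃ h : ↥H, (β + γ) h ≠ 0 := by
    by_contra hc
    push_neg at hc
    exact hne (by ext h; simpa using hc h)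
  have e2 : B ⁅x, (h : L)⁆ y = B x ⁅(h : L), y⁆ := hBinv _ _ _
  rw [← lie_skew, (hLrt β x).mp hx h, (hLrt γ y).mp hy h] at e2
  have e4 : -(β h * B x y) = γ h * B x y := by simpa using e2
  have e5 : (β h + γ h) * B x y = 0 := by rw [add_mul, ← e4]; ring
  have e6 : β h + γ h ≠ 0 := by simpa using hh
  exact (mul_eq_zero.mp e5).resolve_left e6
  
end Aux3

section Aux4

variable {F L : Type*} [Field F] [CharZero F] [LieRing L] [LieAlgebra F L]
  {H : LieSubalgebra F L} {Lrt : Module.Dual F ↥H → Submodule F L}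
  {B : LinearMap.BilinForm F L}

lemma pair_exists (hLrt : ∀ ξ (x : L), x ∈ Lrt ξ ↔ ∀ h : ↥H, ⁅(h : L), x⁆ = ξ h • x)
    (hdecomp : ⨆ ξ, Lrt ξ = ⊤)
    (hBinv : ∀ x y z : L, B ⁅x, y⁆ z = B x ⁅y, z⁆)
    (hA2 : B.Nondegenerate)
    {β : Module.Dual F ↥H} {x : L} (hx : x ∈ Lrt β) (hx0 : x ≠ 0) :
    ∃ y ∈ Lrt (-β), B x y ≠ 0 := by
  classical
  obtain ⟨z, hz⟩ : ∃ z, B x z ≠ 0 := by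
    by_contra hc
    push_neg at hc
    exact hx0 (hA2.1 x hc)
  have hz' : z ∈ ⨆ ξ, Lrt ξ := by rw [hdecomp]; exact Submodule.mem_top
  rw [Submodule.mem_iSup_iff_exists_finsupp] at hz'
  obtain ⟨μ, hμ, hsum⟩ := hz'
  have hsum2 : B x z = μ.sum fun γ v => B x v := by
    rw [← hsum, map_finsuppSum]
  obtain ⟨γ, _, hγ2⟩ : ∃ γ ∈ μ.support, B x (μ γ) ≠ 0 := by
    by_contra hc
    push_neg at hc
    rw [hsum2] at hz
    exact hz (Finset.sum_eq_zero hc)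
  have hγβ : γ = -β := by
    by_contra hne
    exact hγ2 (orth hLrt hBinv
      (fun hc => hne (neg_eq_of_add_eq_zero_right hc).symm) hx (hμ γ))
  exact ⟨μ γ, hγβ ▸ hμ γ, hγ2⟩

lemma H_nondeg (hLrt : ∀ ξ (x : L), x ∈ Lrt ξ ↔ ∀ h : ↥H, ⁅(h : L), x⁆ = ξ h • x)
    (hdecomp : ⨆ ξ, Lrt ξ = ⊤)
    (hBinv : ∀ x y z : L, B ⁅x, y⁆ z = B x ⁅y, z⁆)
    (hA1 : Lrt 0 = H.toSubmodule)
    (hA2 : B.Nondegenerate)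
    {z : L} (hz : z ∈ Lrt 0) (h0 : ∀ h : ↥H, B z h = 0) : z = 0 := by
  classical
  apply hA2.1
  intro w
  have hw' : w ∈ ⨆ ξ, Lrt ξ := by rw [hdecomp]; exact Submodule.mem_top
  rw [Submodule.mem_iSup_iff_exists_finsupp] at hw'
  obtain ⟨μ, hμ, hsum⟩ := hw'
  rw [← hsum, map_finsuppSum]
  apply Finset.sum_eq_zero
  intro γ _
  by_cases hγ : γ = 0
  · subst hγ
    have : μ 0 ∈ H.toSubmodule := hA1 ▸ hμ 0
    exact h0 ⟨μ 0, this⟩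
  · exact orth hLrt hBinv (by simpa using hγ) hz (hμ γ)

end Aux4

section Aux5

variable {F L : Type*} [Field F] [CharZero F] [LieRing L] [LieAlgebra F L]
  {H : LieSubalgebra F L} {Lrt : Module.Dual F ↥H → Submodule F L}
  {R : Set (Module.Dual F ↥H)}
  {B : LinearMap.BilinForm F L}
  {t : Module.Dual F ↥H → ↥H}
  {form : LinearMap.BilinForm F (Module.Dual F ↥H)}

lemma brkt_formula (hLrt : ∀ ξ (x : L), x ∈ Lrt ξ ↔ ∀ h : ↥H, ⁅(h : L), x⁆ = ξ h • x)
    (hdecomp : ⨆ ξ, Lrt ξ = ⊤)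
    (hBinv : ∀ x y z : L, B ⁅x, y⁆ z = B x ⁅y, z⁆)
    (hA1 : Lrt 0 = H.toSubmodule)
    (hA2 : B.Nondegenerate)
    (hA3 : ∀ ξ ∈ R, ∀ h : ↥H, ξ h = B (t ξ) h)
    {β : Module.Dual F ↥H} (hβ : β ∈ R) {x y : L}
    (hx : x ∈ Lrt β) (hy : y ∈ Lrt (-β)) :
    ⁅x, y⁆ = B x y • (t β : L) := by
  have hxy : ⁅x, y⁆ ∈ Lrt 0 := by
    have := bracket_mem hLrt hx hy
    simpa using this
  have htβ : (t β : L) ∈ Lrt 0 := by rw [hA1]; exact (t β).2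
  have hz0 : ⁅x, y⁆ - B x y • (t β : L) ∈ Lrt 0 :=
    Submodule.sub_mem _ hxy (Submodule.smul_mem _ _ htβ)
  have hb : ∀ h : ↥H, B (⁅x, y⁆ - B x y • (t β : L)) h = 0 := by
    intro h
    have e1 : B ⁅x, y⁆ (h : L) = B x ⁅y, (h : L)⁆ := hBinv _ _ _
    have e2 : ⁅y, (h : L)⁆ = β h • y := by
      rw [← lie_skew, (hLrt _ y).mp hy h]
      simp
    rw [e2] at e1
    have e3 : B x (β h • y) = β h * B x y := by simp
    have e4 : B (B x y • (t β : L)) (h : L) = B x y * β h := by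
      rw [hA3 β hβ h]
      simp
    rw [map_sub, LinearMap.sub_apply, e1, e3, e4]
    ring
  have := H_nondeg hLrt hdecomp hBinv hA1 hA2 hz0 hb
  rw [sub_eq_zero] at this
  exact this

lemma tneg (hLrt : ∀ ξ (x : L), x ∈ Lrt ξ ↔ ∀ h : ↥H, ⁅(h : L), x⁆ = ξ h • x)
    (hdecomp : ⨆ ξ, Lrt ξ = ⊤)
    (hBinv : ∀ x y z : L, B ⁅x, y⁆ z = B x ⁅y, z⁆)
    (hA1 : Lrt 0 = H.toSubmodule)
    (hA2 : B.Nondegenerate)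
    (hA3 : ∀ ξ ∈ R, ∀ h : ↥H, ξ h = B (t ξ) h)
    {β : Module.Dual F ↥H} (hβ : β ∈ R) (hβ' : -β ∈ R) :
    t (-β) = - t β := by
  have hz0 : (t (-β) : L) + (t β : L) ∈ Lrt 0 := by
    rw [hA1]
    exact Submodule.add_mem _ (t (-β)).2 (t β).2
  have hb : ∀ h : ↥H, B ((t (-β) : L) + (t β : L)) h = 0 := by
    intro h
    rw [map_add, LinearMap.add_apply, ← hA3 (-β) hβ' h, ← hA3 β hβ h]
    simp
  have := H_nondeg hLrt hdecomp hBinv hA1 hA2 hz0 hb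
  have h2 : ((t (-β) + t β : ↥H) : L) = 0 := this
  rw [ZeroMemClass.coe_eq_zero] at h2
  rw [← add_eq_zero_iff_eq_neg']
  rw [add_comm]
  exact h2

end Aux5

section Aux6

variable {F L : Type*} [Field F] [CharZero F] [LieRing L] [LieAlgebra F L]
  {H : LieSubalgebra F L} {Lrt : Module.Dual F ↥H → Submodule F L}
  {R : Set (Module.Dual F ↥H)}
  {B : LinearMap.BilinForm F L}
  {t : Module.Dual F ↥H → ↥H}
  {form : LinearMap.BilinForm F (Module.Dual F ↥H)}

lemma sl2pack (hLrt : ∀ ξ (x : L), x ∈ Lrt ξ ↔ ∀ h : ↥H, ⁅(h : L), x⁆ = ξ h • x)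
    (hdecomp : ⨆ ξ, Lrt ξ = ⊤)
    (hR : R = {ξ | Lrt ξ ≠ ⊥})
    (hBinv : ∀ x y z : L, B ⁅x, y⁆ z = B x ⁅y, z⁆)
    (hA1 : Lrt 0 = H.toSubmodule)
    (hA2 : B.Nondegenerate)
    (hA3 : ∀ ξ ∈ R, ∀ h : ↥H, ξ h = B (t ξ) h)
    (hform : ∀ ξ ∈ R, ∀ η ∈ R, form ξ η = B (t ξ : L) (t η : L))
    {β : Module.Dual F ↥H} (hβ : β ∈ R) (hb : form β β ≠ 0) :
    ∃ e f : L, e ∈ Lrt β ∧ f ∈ Lrt (-β) ∧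
      IsSl2Triple (((2 / form β β) • t β : ↥H) : L) e f := by
  have hβbot : Lrt β ≠ ⊥ := by rw [hR] at hβ; exact hβ
  obtain ⟨x, hx, hx0⟩ := Submodule.exists_mem_ne_zero_of_ne_bot hβbot
  obtain ⟨y, hy, hxy⟩ := pair_exists hLrt hdecomp hBinv hA2 hx hx0
  set a := form β β with ha
  set c := B x y with hc
  have hβtβ : β (t β) = a := by
    rw [hA3 β hβ (t β), ha, hform β hβ β hβ]
  have hval : β ((2 / a) • t β) = 2 := by
    rw [map_smul, smul_eq_mul, hβtβ]
    field_simp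
  have hcoesmul : ∀ (s : F), (((s • t β : ↥H)) : L) = s • (t β : L) := fun s => rfl
  have hnz : (((2 / a) • t β : ↥H) : L) ≠ 0 := by
    intro hz
    rw [ZeroMemClass.coe_eq_zero] at hz
    rw [hz, map_zero] at hval
    norm_num at hval
  refine ⟨x, (2 / (a * c)) • y, hx, Submodule.smul_mem _ _ hy, ?_, ?_, ?_, ?_⟩
  · exact hnz
  · rw [lie_smul, brkt_formula hLrt hdecomp hBinv hA1 hA2 hA3 hβ hx hy, hcoesmul,
      smul_smul, ← hc]
    congr 1
    field_simp
  · rw [(hLrt β x).mp hx _, hval]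
    rw [show ((2 : ℕ) • x) = ((2 : ℕ) : F) • x from (Nat.cast_smul_eq_nsmul F 2 x).symm]
    norm_num
  · rw [(hLrt (-β) _).mp (Submodule.smul_mem _ _ hy) _]
    rw [show (-((2 : ℕ) • ((2 / (a * c)) • y))) = -(((2 : ℕ) : F) • ((2 / (a * c)) • y)) by
      rw [Nat.cast_smul_eq_nsmul F]]
    rw [LinearMap.neg_apply, hval]
    norm_num

end Aux6

section Aux7

variable {F L : Type*} [Field F] [CharZero F] [LieRing L] [LieAlgebra F L]
  {H : LieSubalgebra F L} {Lrt : Module.Dual F ↥H → Submodule F L}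
  {R : Set (Module.Dual F ↥H)}
  {B : LinearMap.BilinForm F L}
  {t : Module.Dual F ↥H → ↥H}
  {form : LinearMap.BilinForm F (Module.Dual F ↥H)}

lemma negroot (hLrt : ∀ ξ (x : L), x ∈ Lrt ξ ↔ ∀ h : ↥H, ⁅(h : L), x⁆ = ξ h • x)
    (hdecomp : ⨆ ξ, Lrt ξ = ⊤)
    (hR : R = {ξ | Lrt ξ ≠ ⊥})
    (hBinv : ∀ x y z : L, B ⁅x, y⁆ z = B x ⁅y, z⁆)
    (hA2 : B.Nondegenerate)
    {β : Module.Dual F ↥H} (hβ : β ∈ R) : -β ∈ R := by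
  have hβbot : Lrt β ≠ ⊥ := by rw [hR] at hβ; exact hβ
  obtain ⟨x, hx, hx0⟩ := Submodule.exists_mem_ne_zero_of_ne_bot hβbot
  obtain ⟨y, hy, hxy⟩ := pair_exists hLrt hdecomp hBinv hA2 hx hx0
  have hy0 : y ≠ 0 := by
    intro h
    rw [h, map_zero] at hxy
    exact hxy rfl
  rw [hR]
  intro hbot
  rw [hbot] at hy
  exact hy0 (Submodule.mem_bot F |>.mp hy)

lemma heval
    (hA3 : ∀ ξ ∈ R, ∀ h : ↥H, ξ h = B (t ξ) h)
    (hform : ∀ ξ ∈ R, ∀ η ∈ R, form ξ η = B (t ξ : L) (t η : L))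
    {α γ : Module.Dual F ↥H} (hα : α ∈ R) (hγ : γ ∈ R) :
    γ ((2 / form α α) • t α) = 2 * form γ α / form α α := by
  rw [map_smul, smul_eq_mul, hA3 γ hγ (t α), ← hform γ hγ α hα]
  ring

lemma alpha_eval
    (hA3 : ∀ ξ ∈ R, ∀ h : ↥H, ξ h = B (t ξ) h)
    (hform : ∀ ξ ∈ R, ∀ η ∈ R, form ξ η = B (t ξ : L) (t η : L))
    {α : Module.Dual F ↥H} (hα : α ∈ R) (ha : form α α ≠ 0) :
    α ((2 / form α α) • t α) = 2 := by
  rw [heval hA3 hform hα hα]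
  field_simp

end Aux7

section Aux8

variable {F L : Type*} [Field F] [CharZero F] [LieRing L] [LieAlgebra F L]
  {H : LieSubalgebra F L} {Lrt : Module.Dual F ↥H → Submodule F L}
  {R : Set (Module.Dual F ↥H)}
  {B : LinearMap.BilinForm F L}
  {t : Module.Dual F ↥H → ↥H}
  {form : LinearMap.BilinForm F (Module.Dual F ↥H)}

lemma fact1 (hLrt : ∀ ξ (x : L), x ∈ Lrt ξ ↔ ∀ h : ↥H, ⁅(h : L), x⁆ = ξ h • x)
    (hdecomp : ⨆ ξ, Lrt ξ = ⊤)
    (hR : R = {ξ | Lrt ξ ≠ ⊥})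
    (hBinv : ∀ x y z : L, B ⁅x, y⁆ z = B x ⁅y, z⁆)
    (hA1 : Lrt 0 = H.toSubmodule)
    (hA2 : B.Nondegenerate)
    (hA3 : ∀ ξ ∈ R, ∀ h : ↥H, ξ h = B (t ξ) h)
    (hform : ∀ ξ ∈ R, ∀ η ∈ R, form ξ η = B (t ξ : L) (t η : L))
    (hA4 : ∀ α ∈ R, form α α ≠ 0 → ∀ x ∈ Lrt α, ∀ y : L,
      ∃ n : ℕ, ((LieAlgebra.ad F L x) ^ n) y = 0)
    {α ξ : Module.Dual F ↥H} (hα : α ∈ R) (ha : form α α ≠ 0)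
    (n : ℤ) (hn : ξ + n • α ∈ R) (hn1 : ξ + (n + 1) • α ∉ R) :
    ∃ N : ℕ, ξ ((2 / form α α) • t α) + 2 * (n : F) = N ∧
      ∀ k : ℕ, (k : ℤ) ≤ (N : ℤ) → ξ + (n - k) • α ∈ R := by
  obtain ⟨e, f, he, hf, trip⟩ := sl2pack hLrt hdecomp hR hBinv hA1 hA2 hA3 hform hα ha
  set hH : ↥H := (2 / form α α) • t α with hhH
  have hnα : -α ∈ R := negroot hLrt hdecomp hR hBinv hA2 hα
  have hnform : form (-α) (-α) ≠ 0 := by simpa using ha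
  obtain ⟨v, hv, hv0⟩ := Submodule.exists_mem_ne_zero_of_ne_bot
    (show Lrt (ξ + n • α) ≠ ⊥ by rw [hR] at hn; exact hn)
  have hprim : ⁅e, v⁆ = 0 := by
    have h1 := bracket_mem hLrt he hv
    have h2 : α + (ξ + n • α) = ξ + (n + 1) • α := by
      rw [add_smul, one_smul]; abel
    rw [h2] at h1
    have h3 : Lrt (ξ + (n + 1) • α) = ⊥ := by
      by_contra hc
      exact hn1 (by rw [hR]; exact hc)
    rw [h3] at h1
    exact (Submodule.mem_bot F).mp h1
  have hαeval : α hH = 2 := alpha_eval hA3 hform hα ha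
  set μ : F := (ξ + n • α) hH with hμ
  have P : trip.HasPrimitiveVectorWith v μ :=
    ⟨hv0, (hLrt _ v).mp hv hH, hprim⟩
  have hnil : ∃ m : ℕ, ((LieModule.toEnd F L L f) ^ m) v = 0 :=
    hA4 (-α) hnα hnform f hf v
  obtain ⟨N, hμN, hne, _⟩ := slprim P hnil
  have hμval : μ = ξ hH + 2 * (n : F) := by
    rw [hμ, LinearMap.add_apply, LinearMap.smul_apply, hαeval, zsmul_eq_mul]
    ring
  refine ⟨N, by rw [← hμval, hμN], ?_⟩
  intro k hk
  have hkN : k ≤ N := by exact_mod_cast hk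
  have hψ := pow_mem' hLrt hf hv k
  have heq : (ξ + n • α) + (k : ℤ) • (-α) = ξ + (n - k) • α := by
    rw [smul_neg, sub_smul]; abel
  rw [heq] at hψ
  rw [hR]
  intro hbot
  rw [hbot] at hψ
  exact hne k hkN ((Submodule.mem_bot F).mp hψ)

end Aux8

section Aux9

variable {F L : Type*} [Field F] [CharZero F] [LieRing L] [LieAlgebra F L]
  {H : LieSubalgebra F L} {Lrt : Module.Dual F ↥H → Submodule F L}
  {R : Set (Module.Dual F ↥H)}
  {B : LinearMap.BilinForm F L}
  {t : Module.Dual F ↥H → ↥H}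
  {form : LinearMap.BilinForm F (Module.Dual F ↥H)}

lemma fact2 (hLrt : ∀ ξ (x : L), x ∈ Lrt ξ ↔ ∀ h : ↥H, ⁅(h : L), x⁆ = ξ h • x)
    (hdecomp : ⨆ ξ, Lrt ξ = ⊤)
    (hR : R = {ξ | Lrt ξ ≠ ⊥})
    (hBinv : ∀ x y z : L, B ⁅x, y⁆ z = B x ⁅y, z⁆)
    (hA1 : Lrt 0 = H.toSubmodule)
    (hA2 : B.Nondegenerate)
    (hA3 : ∀ ξ ∈ R, ∀ h : ↥H, ξ h = B (t ξ) h)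
    (hform : ∀ ξ ∈ R, ∀ η ∈ R, form ξ η = B (t ξ : L) (t η : L))
    (hA4 : ∀ α ∈ R, form α α ≠ 0 → ∀ x ∈ Lrt α, ∀ y : L,
      ∃ n : ℕ, ((LieAlgebra.ad F L x) ^ n) y = 0)
    {α ξ : Module.Dual F ↥H} (hα : α ∈ R) (ha : form α α ≠ 0)
    (n : ℤ) (hn : ξ + n • α ∈ R) (hn1 : ξ + (n - 1) • α ∉ R) :
    ∃ N : ℕ, ξ ((2 / form α α) • t α) + 2 * (n : F) = -(N : F) ∧
      ∀ k : ℕ, (k : ℤ) ≤ (N : ℤ) → ξ + (n + k) • α ∈ R := by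
  have hnα : -α ∈ R := negroot hLrt hdecomp hR hBinv hA2 hα
  have hnform : form (-α) (-α) ≠ 0 := by simpa using ha
  have htneg : t (-α) = - t α := tneg hLrt hdecomp hBinv hA1 hA2 hA3 hα hnα
  have hn' : ξ + (-n) • (-α) ∈ R := by
    rw [show (-n) • (-α) = n • α by rw [neg_smul, smul_neg, neg_neg]]
    exact hn
  have hn1' : ξ + (-n + 1) • (-α) ∉ R := by
    rw [show (-n + 1) • (-α) = (n - 1) • α by
      rw [smul_neg, ← neg_smul]; congr 1; ring]
    exact hn1
  obtain ⟨N, hN1, hN2⟩ := fact1 hLrt hdecomp hR hBinv hA1 hA2 hA3 hform hA4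
    hnα hnform (-n) hn' hn1'
  have hHneg : ((2 / form (-α) (-α)) • t (-α) : ↥H) = -((2 / form α α) • t α) := by
    rw [htneg]
    have : form (-α) (-α) = form α α := by simp
    rw [this, smul_neg]
  rw [hHneg] at hN1
  refine ⟨N, ?_, ?_⟩
  · rw [map_neg] at hN1
    push_cast at hN1
    linear_combination -hN1
  · intro k hk
    have := hN2 k hk
    rw [show (-n - (k : ℤ)) • (-α) = (n + k) • α by
      rw [smul_neg, ← neg_smul]; congr 1; ring] at this
    exact this

end Aux9

section Aux10

variable {F L : Type*} [Field F] [CharZero F] [LieRing L] [LieAlgebra F L]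
  {H : LieSubalgebra F L} {Lrt : Module.Dual F ↥H → Submodule F L}
  {R : Set (Module.Dual F ↥H)}
  {B : LinearMap.BilinForm F L}
  {t : Module.Dual F ↥H → ↥H}
  {form : LinearMap.BilinForm F (Module.Dual F ↥H)}

lemma integrality (hLrt : ∀ ξ (x : L), x ∈ Lrt ξ ↔ ∀ h : ↥H, ⁅(h : L), x⁆ = ξ h • x)
    (hdecomp : ⨆ ξ, Lrt ξ = ⊤)
    (hR : R = {ξ | Lrt ξ ≠ ⊥})
    (hBinv : ∀ x y z : L, B ⁅x, y⁆ z = B x ⁅y, z⁆)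
    (hA1 : Lrt 0 = H.toSubmodule)
    (hA2 : B.Nondegenerate)
    (hA3 : ∀ ξ ∈ R, ∀ h : ↥H, ξ h = B (t ξ) h)
    (hform : ∀ ξ ∈ R, ∀ η ∈ R, form ξ η = B (t ξ : L) (t η : L))
    (hA4 : ∀ α ∈ R, form α α ≠ 0 → ∀ x ∈ Lrt α, ∀ y : L,
      ∃ n : ℕ, ((LieAlgebra.ad F L x) ^ n) y = 0)
    {β γ : Module.Dual F ↥H} (hβ : β ∈ R) (hb : form β β ≠ 0) (hγ : γ ∈ R) :
    ∃ k : ℤ, γ ((2 / form β β) • t β) = (k : F) := by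
  obtain ⟨e, f, he, hf, trip⟩ := sl2pack hLrt hdecomp hR hBinv hA1 hA2 hA3 hform hβ hb
  set hH : ↥H := (2 / form β β) • t β with hhH
  have hnβ : -β ∈ R := negroot hLrt hdecomp hR hBinv hA2 hβ
  have hnform : form (-β) (-β) ≠ 0 := by simpa using hb
  obtain ⟨v, hv, hv0⟩ := Submodule.exists_mem_ne_zero_of_ne_bot
    (show Lrt γ ≠ ⊥ by rw [hR] at hγ; exact hγ)
  obtain ⟨K, w, hw, hw0, hprim⟩ := ascend hLrt he hv hv0 (hA4 β hβ hb e he v)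
  have hβeval : β hH = 2 := alpha_eval hA3 hform hβ hb
  set μ : F := (γ + (K : ℤ) • β) hH with hμ
  have P : trip.HasPrimitiveVectorWith w μ := ⟨hw0, (hLrt _ w).mp hw hH, hprim⟩
  obtain ⟨N, hμN, _, _⟩ := slprim P (hA4 (-β) hnβ hnform f hf w)
  refine ⟨(N : ℤ) - 2 * K, ?_⟩
  have hμval : μ = γ hH + (K : F) * 2 := by
    rw [hμ, LinearMap.add_apply, LinearMap.smul_apply, hβeval, zsmul_eq_mul]
    norm_cast
  rw [hμval] at hμN
  push_cast
  linear_combination hμN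

end Aux10

section Aux11

variable {F L : Type*} [Field F] [CharZero F] [LieRing L] [LieAlgebra F L]
  {H : LieSubalgebra F L} {Lrt : Module.Dual F ↥H → Submodule F L}
  {R : Set (Module.Dual F ↥H)}
  {B : LinearMap.BilinForm F L}
  {t : Module.Dual F ↥H → ↥H}
  {form : LinearMap.BilinForm F (Module.Dual F ↥H)}

lemma unbroken (hLrt : ∀ ξ (x : L), x ∈ Lrt ξ ↔ ∀ h : ↥H, ⁅(h : L), x⁆ = ξ h • x)
    (hdecomp : ⨆ ξ, Lrt ξ = ⊤)
    (hR : R = {ξ | Lrt ξ ≠ ⊥})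
    (hBinv : ∀ x y z : L, B ⁅x, y⁆ z = B x ⁅y, z⁆)
    (hA1 : Lrt 0 = H.toSubmodule)
    (hA2 : B.Nondegenerate)
    (hA3 : ∀ ξ ∈ R, ∀ h : ↥H, ξ h = B (t ξ) h)
    (hform : ∀ ξ ∈ R, ∀ η ∈ R, form ξ η = B (t ξ : L) (t η : L))
    (hA4 : ∀ α ∈ R, form α α ≠ 0 → ∀ x ∈ Lrt α, ∀ y : L,
      ∃ n : ℕ, ((LieAlgebra.ad F L x) ^ n) y = 0)
    {α ξ : Module.Dual F ↥H} (hα : α ∈ R) (ha : form α α ≠ 0)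
    (p q r : ℤ) (hp : ξ + p • α ∈ R) (hq : ξ + q • α ∈ R)
    (hpr : p ≤ r) (hrq : r ≤ q) : ξ + r • α ∈ R := by
  classical
  by_contra hr
  have hpne : p ≠ r := fun h => hr (h ▸ hp)
  have hqne : q ≠ r := fun h => hr (h ▸ hq)
  set Tp := (Finset.Icc p r).filter (fun s => ξ + s • α ∈ R) with hTp
  have hpTp : p ∈ Tp := by
    rw [hTp, Finset.mem_filter, Finset.mem_Icc]
    exact ⟨⟨le_refl p, hpr⟩, hp⟩
  have hTpne : Tp.Nonempty := ⟨p, hpTp⟩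
  set p' := Tp.max' hTpne with hp'def
  have hp'mem : p' ∈ Tp := Tp.max'_mem hTpne
  rw [hTp, Finset.mem_filter, Finset.mem_Icc] at hp'mem
  obtain ⟨⟨hpp', hp'r⟩, hp'R⟩ := hp'mem
  have hp'lt : p' < r := lt_of_le_of_ne hp'r (fun h => hr (h ▸ hp'R))
  have hp'1 : ξ + (p' + 1) • α ∉ R := by
    intro hmem
    rcases eq_or_lt_of_le (show p' + 1 ≤ r by omega) with h | h
    · exact hr (h ▸ hmem)
    · have : p' + 1 ∈ Tp := by
        rw [hTp, Finset.mem_filter, Finset.mem_Icc]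
        exact ⟨⟨by omega, by omega⟩, hmem⟩
      have := Tp.le_max' _ this
      omega
  set Tq := (Finset.Icc r q).filter (fun s => ξ + s • α ∈ R) with hTq
  have hqTq : q ∈ Tq := by
    rw [hTq, Finset.mem_filter, Finset.mem_Icc]
    exact ⟨⟨hrq, le_refl q⟩, hq⟩
  have hTqne : Tq.Nonempty := ⟨q, hqTq⟩
  set q' := Tq.min' hTqne with hq'def
  have hq'mem : q' ∈ Tq := Tq.min'_mem hTqne
  rw [hTq, Finset.mem_filter, Finset.mem_Icc] at hq'mem
  obtain ⟨⟨hrq', hq'q⟩, hq'R⟩ := hq'mem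
  have hq'gt : r < q' := lt_of_le_of_ne hrq' (fun h => hr (h ▸ hq'R))
  have hq'1 : ξ + (q' - 1) • α ∉ R := by
    intro hmem
    rcases eq_or_lt_of_le (show r ≤ q' - 1 by omega) with h | h
    · exact hr (h.symm ▸ hmem)
    · have : q' - 1 ∈ Tq := by
        rw [hTq, Finset.mem_filter, Finset.mem_Icc]
        exact ⟨⟨by omega, by omega⟩, hmem⟩
      have := Tq.min'_le _ this
      omega
  obtain ⟨N, hN, _⟩ := fact1 hLrt hdecomp hR hBinv hA1 hA2 hA3 hform hA4 hα ha
    p' hp'R hp'1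
  obtain ⟨M, hM, _⟩ := fact2 hLrt hdecomp hR hBinv hA1 hA2 hA3 hform hA4 hα ha
    q' hq'R hq'1
  have hcast : ((2 * p' - 2 * q' : ℤ) : F) = (((N : ℤ) + (M : ℤ) : ℤ) : F) := by
    push_cast
    linear_combination hN - hM
  have := Int.cast_injective (α := F) hcast
  omega

end Aux11

section Aux12

variable {F L : Type*} [Field F] [CharZero F] [LieRing L] [LieAlgebra F L]
  {H : LieSubalgebra F L} {Lrt : Module.Dual F ↥H → Submodule F L}
  {R : Set (Module.Dual F ↥H)}
  {B : LinearMap.BilinForm F L}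
  {t : Module.Dual F ↥H → ↥H}
  {form : LinearMap.BilinForm F (Module.Dual F ↥H)}

lemma bdd (hLrt : ∀ ξ (x : L), x ∈ Lrt ξ ↔ ∀ h : ↥H, ⁅(h : L), x⁆ = ξ h • x)
    (hdecomp : ⨆ ξ, Lrt ξ = ⊤)
    (hR : R = {ξ | Lrt ξ ≠ ⊥})
    (hBsym : ∀ x y : L, B x y = B y x)
    (hBinv : ∀ x y z : L, B ⁅x, y⁆ z = B x ⁅y, z⁆)
    (hA1 : Lrt 0 = H.toSubmodule)
    (hA2 : B.Nondegenerate)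
    (hA3 : ∀ ξ ∈ R, ∀ h : ↥H, ξ h = B (t ξ) h)
    (hform : ∀ ξ ∈ R, ∀ η ∈ R, form ξ η = B (t ξ : L) (t η : L))
    (hA4 : ∀ α ∈ R, form α α ≠ 0 → ∀ x ∈ Lrt α, ∀ y : L,
      ∃ n : ℕ, ((LieAlgebra.ad F L x) ^ n) y = 0)
    {α ξ : Module.Dual F ↥H} (hα : α ∈ R) (ha : form α α ≠ 0) (hξ : ξ ∈ R) :
    ∃ Nb : ℕ, ∀ n : ℤ, (Nb : ℤ) ≤ n → ξ + n • α ∉ R := by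
  classical
  set a := form α α with hadef
  set b := form ξ α with hbdef
  set c := form ξ ξ with hcdef
  have hsym : form α ξ = b := by
    rw [hbdef, hform α hα ξ hξ, hform ξ hξ α hα, hBsym]
  obtain ⟨m, hm⟩ := integrality hLrt hdecomp hR hBinv hA1 hA2 hA3 hform hA4 hα ha hξ
  have hm2 : (m : F) * a = 2 * b := by
    rw [heval hA3 hform hα hξ] at hm
    field_simp at hm
    rw [← hbdef, ← hadef] at hm
    rw [div_eq_iff ha] at hm
    linear_combination -hm
  have hq : ∀ j : ℤ, form (ξ + j • α) (ξ + j • α)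
      = c + 2 * b * (j : F) + a * (j : F) * (j : F) := by
    intro j
    simp only [map_add, map_zsmul, LinearMap.add_apply, LinearMap.smul_apply,
      zsmul_eq_mul, hsym]
    rw [← hadef, ← hbdef, ← hcdef]
    ring
  -- difference formula
  have hqdiff : ∀ j j' : ℤ, form (ξ + j • α) (ξ + j • α) - form (ξ + j' • α) (ξ + j' • α)
      = a * ((j * (j + m) - j' * (j' + m) : ℤ) : F) := by
    intro j j'
    rw [hq j, hq j']
    push_cast
    linear_combination (-(j : F) + (j' : F)) * hm2
  -- key integrality consequence
  have keylem : ∀ j : ℤ, ξ + j • α ∈ R → form (ξ + j • α) (ξ + j • α) ≠ 0 →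
      (m + 2 * j) ≠ 0 → ∃ k : ℤ, k ≠ 0 ∧
        (k : F) * form (ξ + j • α) (ξ + j • α) = a * ((m + 2 * j : ℤ) : F) := by
    intro j hmem hqne hmne
    obtain ⟨k, hk⟩ := integrality hLrt hdecomp hR hBinv hA1 hA2 hA3 hform hA4 hmem hqne hα
    rw [heval hA3 hform hmem hα] at hk
    have hfαβ : form α (ξ + j • α) = b + (j : F) * a := by
      simp only [map_add, map_zsmul, zsmul_eq_mul, hsym]
      try ring
    have hk2 : (k : F) * form (ξ + j • α) (ξ + j • α) = 2 * (b + (j : F) * a) := by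
      rw [← hfαβ, ← hk, div_mul_cancel₀ _ hqne]
    have hk3 : (k : F) * form (ξ + j • α) (ξ + j • α) = a * ((m + 2 * j : ℤ) : F) := by
      rw [hk2]
      push_cast
      linear_combination -hm2
    refine ⟨k, ?_, hk3⟩
    intro hk0
    rw [hk0] at hk3
    simp only [Int.cast_zero, zero_mul] at hk3
    have : ((m + 2 * j : ℤ) : F) = 0 := by
      rcases mul_eq_zero.mp hk3.symm with h | h
      · exact absurd h ha
      · exact h
    exact hmne (by exact_mod_cast this)
  -- main bound
  refine ⟨8 * (m.natAbs + 10), ?_⟩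
  intro n hn hmem
  have hA : (m.natAbs : ℤ) = |m| := Int.abs_eq_natAbs m ▸ rfl
  have hnbig : 8 * (|m| + 10) ≤ n := by
    rw [← hA]; push_cast at hn ⊢; omega
  have hmabs : -|m| ≤ m ∧ m ≤ |m| := ⟨neg_abs_le m, le_abs_self m⟩
  -- all intermediate values are roots
  have hall : ∀ j : ℤ, 0 ≤ j → j ≤ n → ξ + j • α ∈ R := by
    intro j h0 hjn
    exact unbroken hLrt hdecomp hR hBinv hA1 hA2 hA3 hform hA4 hα ha 0 n j
      (by simpa using hξ) hmem h0 hjn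
  -- choose good indices
  have hqtwo : ∀ j : ℤ, form (ξ + j • α) (ξ + j • α) = 0 →
      form (ξ + (j+1) • α) (ξ + (j+1) • α) = 0 → 2 * j + 1 + m = 0 := by
    intro j h1 h2
    have := hqdiff (j+1) j
    rw [h1, h2, sub_zero] at this
    have h3 : ((( j+1) * (j + 1 + m) - j * (j + m) : ℤ) : F) = 0 := by
      rcases mul_eq_zero.mp this.symm with h | h
      · exact absurd h ha
      · exact h
    have h4 : (j+1) * (j + 1 + m) - j * (j + m) = 0 := by exact_mod_cast h3
    nlinarith [h4]
  have hpick : ∀ j : ℤ, (∃ j' : ℤ, (j' = j ∨ j' = j + 1) ∧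
      form (ξ + j' • α) (ξ + j' • α) ≠ 0) ∨
      (2 * j + 1 + m = 0) := by
    intro j
    by_cases h1 : form (ξ + j • α) (ξ + j • α) ≠ 0
    · exact Or.inl ⟨j, Or.inl rfl, h1⟩
    · by_cases h2 : form (ξ + (j+1) • α) (ξ + (j+1) • α) ≠ 0
      · exact Or.inl ⟨j + 1, Or.inr rfl, h2⟩
      · push_neg at h1 h2
        exact Or.inr (hqtwo j h1 h2)
  have habs : (0:ℤ) ≤ |m| := abs_nonneg m
  have hmlo : -|m| ≤ m := neg_abs_le m
  have hmhi : m ≤ |m| := le_abs_self m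
  set n2 : ℤ := n / 2 with hn2def
  have hn2a : 2 * n2 ≤ n ∧ n ≤ 2 * n2 + 1 := by omega
  have h₀ : ∃ j' : ℤ, (j' = n2 ∨ j' = n2 + 1) ∧
      form (ξ + j' • α) (ξ + j' • α) ≠ 0 := by
    rcases hpick n2 with h | h
    · exact h
    · exfalso; linarith
  have h₁ : ∃ j' : ℤ, (j' = n - 1 ∨ j' = n) ∧
      form (ξ + j' • α) (ξ + j' • α) ≠ 0 := by
    rcases hpick (n - 1) with h | h
    · obtain ⟨j', hj', hj'2⟩ := h
      exact ⟨j', by omega, hj'2⟩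
    · exfalso; linarith
  obtain ⟨n₀, hn₀or, hq₀⟩ := h₀
  obtain ⟨n₁, hn₁or, hq₁⟩ := h₁
  have hn₀rng : n2 ≤ n₀ ∧ n₀ ≤ n2 + 1 := by omega
  have hn₁rng : n - 1 ≤ n₁ ∧ n₁ ≤ n := by omega
  have hn₀mem : ξ + n₀ • α ∈ R := hall n₀ (by linarith) (by linarith)
  have hn₁mem : ξ + n₁ • α ∈ R := hall n₁ (by linarith) (by linarith)
  have hP : 0 < m + 2 * n₁ := by linarith
  have hQ : 0 < m + 2 * n₀ := by linarith
  obtain ⟨k₀, hk₀ne, hk₀⟩ := keylem n₀ hn₀mem hq₀ (by omega)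
  obtain ⟨k₁, hk₁ne, hk₁⟩ := keylem n₁ hn₁mem hq₁ (by omega)
  have hD : k₁ * k₀ * (n₁ * (n₁ + m) - n₀ * (n₀ + m))
      = k₀ * (m + 2 * n₁) - k₁ * (m + 2 * n₀) := by
    have e := hqdiff n₁ n₀
    have hF : a * ((k₁ * k₀ * (n₁ * (n₁ + m) - n₀ * (n₀ + m)) : ℤ) : F)
        = a * ((k₀ * (m + 2 * n₁) - k₁ * (m + 2 * n₀) : ℤ) : F) := by
      have hk₀' := hk₀
      have hk₁' := hk₁
      push_cast at hk₀' hk₁' e ⊢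
      linear_combination (k₀ : F) * hk₁' - (k₁ : F) * hk₀' - (k₁ : F) * (k₀ : F) * e
    have := mul_left_cancel₀ ha hF
    exact_mod_cast this
  set u : ℤ := n₁ - n₀ with hudef
  set w : ℤ := n₁ + n₀ + m with hwdef
  have hDuw : n₁ * (n₁ + m) - n₀ * (n₀ + m) = u * w := by rw [hudef, hwdef]; ring
  have hu3 : 3 ≤ u := by
    have h1 : n2 ≥ 4 * |m| + 39 := by omega
    omega
  have hw : 0 < w := by omega
  set x : ℤ := |k₁| with hxdef
  set y : ℤ := |k₀| with hydef
  have hx1 : 1 ≤ x := Int.one_le_abs hk₁ne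
  have hy1 : 1 ≤ y := Int.one_le_abs hk₀ne
  have habs1 : |k₁ * k₀ * (n₁ * (n₁ + m) - n₀ * (n₀ + m))| = x * y * (u * w) := by
    rw [abs_mul, abs_mul, ← hxdef, ← hydef, hDuw,
      abs_of_pos (by positivity : (0:ℤ) < u * w)]
  have habs2 : |k₀ * (m + 2 * n₁) - k₁ * (m + 2 * n₀)| ≤
      y * (m + 2 * n₁) + x * (m + 2 * n₀) := by
    calc |k₀ * (m + 2 * n₁) - k₁ * (m + 2 * n₀)|
        ≤ |k₀ * (m + 2 * n₁)| + |k₁ * (m + 2 * n₀)| := abs_sub _ _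
      _ = y * (m + 2 * n₁) + x * (m + 2 * n₀) := by
          rw [abs_mul, abs_mul, ← hxdef, ← hydef, abs_of_pos hP, abs_of_pos hQ]
  have hchain : x * y * (u * w) ≤ x * y * (2 * w) := by
    have h1 : x * y * (u * w) ≤ y * (m + 2 * n₁) + x * (m + 2 * n₀) := by
      rw [← habs1, hD]; exact habs2
    have h2 : y * (m + 2 * n₁) ≤ x * (y * (m + 2 * n₁)) :=
      le_mul_of_one_le_left (by positivity) hx1
    have h3 : x * (m + 2 * n₀) ≤ y * (x * (m + 2 * n₀)) :=
      le_mul_of_one_le_left (by positivity) hy1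
    have e2 : x * (y * (m + 2 * n₁)) = x * y * (m + 2 * n₁) := by ring
    have e3 : y * (x * (m + 2 * n₀)) = x * y * (m + 2 * n₀) := by ring
    have h4 : x * y * (m + 2 * n₁) + x * y * (m + 2 * n₀) = x * y * (2 * w) := by
      rw [hwdef]; ring
    linarith
  have hxy : 0 < x * y := by positivity
  have huw : u * w ≤ 2 * w := le_of_mul_le_mul_left hchain hxy
  have hfin : 0 < (u - 2) * w := mul_pos (by omega) hw
  have hfin2 : (u - 2) * w = u * w - 2 * w := by ring
  linarith


end Aux12


theorem lemma_2_1_5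
    {F L : Type*} [Field F] [CharZero F] [LieRing L] [LieAlgebra F L]
    (H : LieSubalgebra F L)
    (habelian : ∀ x y : ↥H, ⁅x, y⁆ = 0)
    -- root spaces with respect to H
    (Lrt : Module.Dual F ↥H → Submodule F L)
    (hLrt : ∀ ξ (x : L), x ∈ Lrt ξ ↔ ∀ h : ↥H, ⁅(h : L), x⁆ = ξ h • x)
    -- root space decomposition L = ⊕_{ξ} L_ξ
    (hdecomp : ⨆ ξ, Lrt ξ = ⊤) (hindep : iSupIndep Lrt)
    -- the set of roots
    (R : Set (Module.Dual F ↥H))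
    (hR : R = {ξ | Lrt ξ ≠ ⊥})
    -- a symmetric invariant bilinear form on L
    (B : LinearMap.BilinForm F L)
    (hBsym : ∀ x y : L, B x y = B y x)
    (hBinv : ∀ x y z : L, B ⁅x, y⁆ z = B x ⁅y, z⁆)
    -- (A1) H is self-centralizing
    (hA1 : Lrt 0 = H.toSubmodule)
    -- (A2) B is nondegenerate
    (hA2 : B.Nondegenerate)
    -- (A3) every root is represented by some t_ξ ∈ H
    (t : Module.Dual F ↥H → ↥H)
    (hA3 : ∀ ξ ∈ R, ∀ h : ↥H, ξ h = B (t ξ) h)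
    -- the induced form, extended bilinearly to the span of R
    (form : LinearMap.BilinForm F (Module.Dual F ↥H))
    (hform : ∀ ξ ∈ R, ∀ η ∈ R, form ξ η = B (t ξ : L) (t η : L))
    -- (A4) ad x is locally nilpotent for x in an anisotropic root space
    (hA4 : ∀ α ∈ R, form α α ≠ 0 → ∀ x ∈ Lrt α, ∀ y : L,
      ∃ n : ℕ, ((LieAlgebra.ad F L x) ^ n) y = 0)
    :
    ∀ α ∈ R, form α α ≠ 0 → ∀ ξ ∈ R,
      ∃ d u : ℕ,
        (∀ n : ℤ, ξ + n • α ∈ R ↔ -(d : ℤ) ≤ n ∧ n ≤ (u : ℤ)) ∧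
        ((d : F) - (u : F) = ξ ((2 / form α α) • t α)) ∧
        ξ ((2 / form α α) • t α) = 2 * form ξ α / form α α := by
  classical
  intro α hα ha ξ hξ
  have hS0 : ξ + (0 : ℤ) • α ∈ R := by simpa using hξ
  -- boundedness in both directions
  obtain ⟨N1, hN1⟩ := bdd hLrt hdecomp hR hBsym hBinv hA1 hA2 hA3 hform hA4 hα ha hξ
  have hnα : -α ∈ R := negroot hLrt hdecomp hR hBinv hA2 hα
  have hnform : form (-α) (-α) ≠ 0 := by simpa using ha
  obtain ⟨N2, hN2⟩ := bdd hLrt hdecomp hR hBsym hBinv hA1 hA2 hA3 hform hA4 hnα hnform hξ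
  have hbound : ∀ n : ℤ, ξ + n • α ∈ R → -(N2 : ℤ) ≤ n ∧ n ≤ (N1 : ℤ) := by
    intro n hn
    constructor
    · by_contra hc
      push_neg at hc
      have h1 : (N2 : ℤ) ≤ -n := by omega
      have h2 := hN2 (-n) h1
      rw [show (-n) • (-α) = n • α by rw [neg_smul, smul_neg, neg_neg]] at h2
      exact h2 hn
    · by_contra hc
      push_neg at hc
      exact hN1 n (by omega) hn
  set T := (Finset.Icc (-(N2 : ℤ)) (N1 : ℤ)).filter (fun s => ξ + s • α ∈ R) with hT
  have hmemT : ∀ s : ℤ, s ∈ T ↔ ξ + s • α ∈ R := by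
    intro s
    rw [hT, Finset.mem_filter, Finset.mem_Icc]
    constructor
    · exact fun h => h.2
    · intro h
      exact ⟨hbound s h, h⟩
  have h0T : (0 : ℤ) ∈ T := (hmemT 0).mpr hS0
  have hTne : T.Nonempty := ⟨0, h0T⟩
  set uZ := T.max' hTne with huZ
  set dZ := T.min' hTne with hdZ
  have huZR : ξ + uZ • α ∈ R := (hmemT uZ).mp (T.max'_mem hTne)
  have hdZR : ξ + dZ • α ∈ R := (hmemT dZ).mp (T.min'_mem hTne)
  have hdZ0 : dZ ≤ 0 := T.min'_le 0 h0T
  have huZ0 : 0 ≤ uZ := T.le_max' 0 h0T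
  have hSiff : ∀ n : ℤ, ξ + n • α ∈ R ↔ dZ ≤ n ∧ n ≤ uZ := by
    intro n
    constructor
    · intro hn
      exact ⟨T.min'_le n ((hmemT n).mpr hn), T.le_max' n ((hmemT n).mpr hn)⟩
    · intro ⟨h1, h2⟩
      exact unbroken hLrt hdecomp hR hBinv hA1 hA2 hA3 hform hA4 hα ha
        dZ uZ n hdZR huZR h1 h2
  have hu1 : ξ + (uZ + 1) • α ∉ R := by
    intro hc
    have := (hSiff (uZ + 1)).mp hc
    omega
  have hd1 : ξ + (dZ - 1) • α ∉ R := by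
    intro hc
    have := (hSiff (dZ - 1)).mp hc
    omega
  obtain ⟨N, hNeq, hNreach⟩ := fact1 hLrt hdecomp hR hBinv hA1 hA2 hA3 hform hA4
    hα ha uZ huZR hu1
  obtain ⟨M, hMeq, hMreach⟩ := fact2 hLrt hdecomp hR hBinv hA1 hA2 hA3 hform hA4
    hα ha dZ hdZR hd1
  have hNle : (N : ℤ) ≤ uZ - dZ := by
    have := (hSiff (uZ - N)).mp (hNreach N le_rfl)
    omega
  have hMle : (M : ℤ) ≤ uZ - dZ := by
    have := (hSiff (dZ + M)).mp (hMreach M le_rfl)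
    omega
  have hE : (N : ℤ) - 2 * uZ = -(M : ℤ) - 2 * dZ := by
    have hcast : ((N - 2 * uZ : ℤ) : F) = ((-(M : ℤ) - 2 * dZ : ℤ) : F) := by
      push_cast
      linear_combination -hNeq + hMeq
    exact Int.cast_injective hcast
  have hNval : (N : ℤ) = uZ - dZ := by omega
  refine ⟨(-dZ).toNat, uZ.toNat, ?_, ?_, heval hA3 hform hα hξ⟩
  · intro n
    rw [hSiff n]
    omega
  · have hd' : (((-dZ).toNat : ℤ) : F) = -(dZ : F) := by
      rw [Int.toNat_of_nonneg (by omega)]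
      push_cast
      ring
    have hu' : ((uZ.toNat : ℤ) : F) = (uZ : F) := by
      rw [Int.toNat_of_nonneg huZ0]
    have hNF : (N : F) = (uZ : F) - (dZ : F) := by exact_mod_cast congrArg (Int.cast : ℤ → F) hNval
    have : (((-dZ).toNat : ℤ) : F) - ((uZ.toNat : ℤ) : F) = ξ ((2 / form α α) • t α) := by
      rw [hd', hu']
      linear_combination -hNeq - hNF
    exact_mod_cast this
end

section
/- For every anisotropic root γ ∈ R^×, (γ,γ) is a positive rational, i.e. (γ,γ) = q·1_F for some rational q > 0. -/
set_option linter.unusedSectionVars false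

section Prelim

variable {F L : Type*} [Field F] [CharZero F] [LieRing L] [LieAlgebra F L]
    (H : LieSubalgebra F L)
    (Lrt : Module.Dual F ↥H → Submodule F L)
    (hLrt : ∀ ξ (x : L), x ∈ Lrt ξ ↔ ∀ h : ↥H, ⁅(h : L), x⁆ = ξ h • x)
    (B : LinearMap.BilinForm F L)
    (hBinv : ∀ x y z : L, B ⁅x, y⁆ z = B x ⁅y, z⁆)

include hLrt hBinv in
/-- root spaces pair trivially unless roots sum to zero -/
lemma lem_orth {ξ η : Module.Dual F ↥H} {x y : L}
    (hx : x ∈ Lrt ξ) (hy : y ∈ Lrt η) (hne : ξ + η ≠ 0) : B x y = 0 := by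
  obtain ⟨h, hh⟩ : ∃ h : ↥H, (ξ + η) h ≠ 0 := by
    by_contra hcon
    push_neg at hcon
    exact hne (by ext h; exact hcon h)
  have h2 : B ⁅x, (h : L)⁆ y = B x ⁅(h : L), y⁆ := hBinv _ _ _
  rw [(hLrt η y).mp hy h, ← lie_skew, map_neg, LinearMap.neg_apply,
    (hLrt ξ x).mp hx h] at h2
  have h2' : -(ξ h * B x y) = η h * B x y := by simpa [smul_eq_mul] using h2
  have key : (ξ h + η h) * B x y = 0 := by linear_combination -h2'
  rcases mul_eq_zero.mp key with hc | hc
  · exact absurd hc (by simpa using hh)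
  · exact hc

include hLrt in
lemma lem_lie_mem {ξ η : Module.Dual F ↥H} {x y : L}
    (hx : x ∈ Lrt ξ) (hy : y ∈ Lrt η) : ⁅x, y⁆ ∈ Lrt (ξ + η) := by
  rw [hLrt]
  intro h
  have := leibniz_lie (h : L) x y
  rw [(hLrt ξ x).mp hx h, (hLrt η y).mp hy h] at this
  simp only [smul_lie, lie_smul] at this
  rw [this, LinearMap.add_apply, add_smul]

end Prelim
section Prelim2

variable {F L : Type*} [Field F] [CharZero F] [LieRing L] [LieAlgebra F L]
    (H : LieSubalgebra F L)
    (Lrt : Module.Dual F ↥H → Submodule F L)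
    (hLrt : ∀ ξ (x : L), x ∈ Lrt ξ ↔ ∀ h : ↥H, ⁅(h : L), x⁆ = ξ h • x)
    (hdecomp : ⨆ ξ, Lrt ξ = ⊤)
    (B : LinearMap.BilinForm F L)
    (hBsym : ∀ x y : L, B x y = B y x)
    (hBinv : ∀ x y z : L, B ⁅x, y⁆ z = B x ⁅y, z⁆)
    (hA2 : B.Nondegenerate)

include hdecomp hA2 in
lemma lem_ext {z : L} (hz : ∀ ξ, ∀ w ∈ Lrt ξ, B z w = 0) : z = 0 := by
  apply hA2.1
  intro w
  have hw : w ∈ (⊤ : Submodule F L) := trivial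
  rw [← hdecomp] at hw
  obtain ⟨f, hf, rfl⟩ := (Submodule.mem_iSup_iff_exists_finsupp _ _).mp hw
  rw [Finsupp.sum, map_sum]
  exact Finset.sum_eq_zero fun ξ _ => hz ξ _ (hf ξ)

include hLrt hdecomp hBinv hA2 in
lemma lem_neg {α : Module.Dual F ↥H} {x : L} (hx : x ∈ Lrt α) (hx0 : x ≠ 0) :
    ∃ y ∈ Lrt (-α), B x y ≠ 0 := by
  by_contra hcon
  push_neg at hcon
  apply hx0
  apply lem_ext H Lrt hdecomp B hA2
  intro η w hw
  by_cases hη : η = -α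
  · exact hcon w (hη ▸ hw)
  · exact lem_orth H Lrt hLrt B hBinv hx hw (fun hc => hη (by
      have : η = -α + (α + η) := by abel
      rw [this, hc, add_zero]))

include hLrt hdecomp hBsym hBinv hA2 in
/-- if `z ∈ Lrt 0` pairs to zero with `Lrt 0` then it is zero -/
lemma lem_zero_nondeg {z : L} (hz : z ∈ Lrt 0) (h0 : ∀ w ∈ Lrt 0, B z w = 0) : z = 0 := by
  apply lem_ext H Lrt hdecomp B hA2
  intro η w hw
  by_cases hη : η = 0
  · exact h0 w (hη ▸ hw)
  · exact lem_orth H Lrt hLrt B hBinv hz hw (by simpa using hη)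

end Prelim2
section Core

variable {F L : Type*} [Field F] [CharZero F] [LieRing L] [LieAlgebra F L]
    (H : LieSubalgebra F L)
    (Lrt : Module.Dual F ↥H → Submodule F L)
    (hLrt : ∀ ξ (x : L), x ∈ Lrt ξ ↔ ∀ h : ↥H, ⁅(h : L), x⁆ = ξ h • x)
    (hdecomp : ⨆ ξ, Lrt ξ = ⊤)
    (R : Set (Module.Dual F ↥H))
    (hR : R = {ξ | Lrt ξ ≠ ⊥})
    (B : LinearMap.BilinForm F L)
    (hBsym : ∀ x y : L, B x y = B y x)
    (hBinv : ∀ x y z : L, B ⁅x, y⁆ z = B x ⁅y, z⁆)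
    (hA1 : Lrt 0 = H.toSubmodule)
    (hA2 : B.Nondegenerate)
    (t : Module.Dual F ↥H → ↥H)
    (hA3 : ∀ ξ ∈ R, ∀ h : ↥H, ξ h = B (t ξ) h)

include hLrt hdecomp hBsym hBinv hA1 hA2 hA3 in
/-- For `x ∈ L_α`, `y ∈ L_{-α}`, we have `⁅x,y⁆ = B x y • t_α`. -/
lemma lem_t_bracket {α : Module.Dual F ↥H} (hαR : α ∈ R)
    {x y : L} (hx : x ∈ Lrt α) (hy : y ∈ Lrt (-α)) :
    ⁅x, y⁆ = B x y • (t α : L) := by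
  have hxy0 : ⁅x, y⁆ ∈ Lrt 0 := by
    have := lem_lie_mem H Lrt hLrt hx hy
    simpa using this
  have htα0 : (t α : L) ∈ Lrt 0 := by rw [hA1]; exact (t α).2
  have hz : ⁅x, y⁆ - B x y • (t α : L) ∈ Lrt 0 :=
    Submodule.sub_mem _ hxy0 (Submodule.smul_mem _ _ htα0)
  have key : ∀ w ∈ Lrt 0, B (⁅x, y⁆ - B x y • (t α : L)) w = 0 := by
    intro w hw
    rw [hA1] at hw
    have h1 : B ⁅x, y⁆ w = α ⟨w, hw⟩ * B x y := by
      rw [hBinv]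
      have hyw : ⁅y, ((⟨w, hw⟩ : ↥H) : L)⁆ = α ⟨w, hw⟩ • y := by
        rw [← lie_skew, (hLrt (-α) y).mp hy ⟨w, hw⟩]
        simp
      calc B x ⁅y, w⁆ = B x (α ⟨w, hw⟩ • y) := by rw [← hyw]
        _ = α ⟨w, hw⟩ * B x y := by simp
    have h2 : B (B x y • (t α : L)) w = B x y * α ⟨w, hw⟩ := by
      rw [hA3 α hαR ⟨w, hw⟩]
      simp
    rw [map_sub, LinearMap.sub_apply, h1, h2]
    ring
  have := lem_zero_nondeg H Lrt hLrt hdecomp B hBsym hBinv hA2 hz key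
  rw [sub_eq_zero] at this
  exact this

end Core
section Key

variable {F L : Type*} [Field F] [CharZero F] [LieRing L] [LieAlgebra F L]
    (H : LieSubalgebra F L)
    (Lrt : Module.Dual F ↥H → Submodule F L)
    (hLrt : ∀ ξ (x : L), x ∈ Lrt ξ ↔ ∀ h : ↥H, ⁅(h : L), x⁆ = ξ h • x)
    (hdecomp : ⨆ ξ, Lrt ξ = ⊤)
    (R : Set (Module.Dual F ↥H))
    (hR : R = {ξ | Lrt ξ ≠ ⊥})
    (B : LinearMap.BilinForm F L)
    (hBsym : ∀ x y : L, B x y = B y x)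
    (hBinv : ∀ x y z : L, B ⁅x, y⁆ z = B x ⁅y, z⁆)
    (hA1 : Lrt 0 = H.toSubmodule)
    (hA2 : B.Nondegenerate)
    (t : Module.Dual F ↥H → ↥H)
    (hA3 : ∀ ξ ∈ R, ∀ h : ↥H, ξ h = B (t ξ) h)
    (form : LinearMap.BilinForm F (Module.Dual F ↥H))
    (hform : ∀ ξ ∈ R, ∀ η ∈ R, form ξ η = B (t ξ : L) (t η : L))
    (hA4 : ∀ α ∈ R, form α α ≠ 0 → ∀ x ∈ Lrt α, ∀ y : L,
      ∃ n : ℕ, ((LieAlgebra.ad F L x) ^ n) y = 0)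

include hLrt in
lemma lem_pow_mem {ζ : Module.Dual F ↥H} {g : L} (hg : g ∈ Lrt ζ)
    {η : Module.Dual F ↥H} {z : L} (hz : z ∈ Lrt η) (k : ℕ) :
    ((LieModule.toEnd F L L g) ^ k) z ∈ Lrt (η + (k : F) • ζ) := by
  induction k with
  | zero => simpa using hz
  | succ k ih =>
    have step : ((LieModule.toEnd F L L g) ^ (k+1)) z
        = ⁅g, ((LieModule.toEnd F L L g) ^ k) z⁆ := by
      rw [pow_succ', Module.End.mul_apply, LieModule.toEnd_apply_apply]
    rw [step]
    have := lem_lie_mem H Lrt hLrt hg ih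
    have hidx : ζ + (η + (k : F) • ζ) = η + ((k+1 : ℕ) : F) • ζ := by
      push_cast
      module
    rwa [hidx] at this

include hLrt hdecomp hR hBsym hBinv hA1 hA2 hA3 hform hA4 in
theorem key_lemma {α : Module.Dual F ↥H} (hαR : α ∈ R) (hα : form α α ≠ 0)
    {β : Module.Dual F ↥H} (hβR : β ∈ R) :
    ∃ n : ℤ, 2 * form β α = (n : F) * form α α ∧
      ∀ j : ℤ, 0 ≤ j → j ≤ n → (β - (j : F) • α) ∈ R := by
  classical
  set p : F := form α α with hpdef
  -- pick e ∈ L_α, e ≠ 0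
  have hLα : Lrt α ≠ ⊥ := by rw [hR] at hαR; exact hαR
  obtain ⟨e, he, he0⟩ := Submodule.ne_bot_iff _ |>.mp hLα
  -- pick y ∈ L_{-α} with B e y ≠ 0
  obtain ⟨y, hy, hc⟩ := lem_neg H Lrt hLrt hdecomp B hBinv hA2 he he0
  set c : F := B e y with hcdef
  -- basic facts about t α
  have hBtt : B (t α : L) (t α : L) = p := (hform α hαR α hαR).symm
  have hαtα : α (t α) = p := by rw [hA3 α hαR (t α)]; exact hBtt
  have hβtα : β (t α) = form β α := by
    rw [hA3 β hβR (t α)]; exact (hform β hβR α hαR).symm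
  -- the sl2 triple
  set h : L := (2 / p) • (t α : L) with hhdef
  set f : L := (2 / (p * c)) • y with hfdef
  have hfmem : f ∈ Lrt (-α) := Submodule.smul_mem _ _ hy
  -- action of h on root vectors
  have Fh : ∀ (ξ : Module.Dual F ↥H), ∀ z ∈ Lrt ξ, ⁅h, z⁆ = (2 * ξ (t α) / p) • z := by
    intro ξ z hz
    rw [hhdef, smul_lie, (hLrt ξ z).mp hz (t α), smul_smul]
    congr 1
    ring
  have htriple : IsSl2Triple h e f := by
    constructor
    · intro hcon
      rw [hhdef] at hcon
      have h2p : (2 : F) / p ≠ 0 := by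
        apply div_ne_zero _ hα
        norm_num
      have : (t α : L) = 0 := by
        rcases smul_eq_zero.mp hcon with h' | h'
        · exact absurd h' h2p
        · exact h'
      rw [this] at hBtt
      simp at hBtt
      exact hα hBtt.symm
    · rw [hfdef, lie_smul, lem_t_bracket H Lrt hLrt hdecomp R B hBsym hBinv hA1 hA2 t hA3 hαR he hy,
        smul_smul, hhdef]
      congr 1
      rw [← hcdef]
      field_simp
    · rw [Fh α e he, hαtα]
      have h1 : 2 * p / p = (2 : F) := by field_simp
      have h2 : ((2:ℕ) : F) • e = 2 • e := Nat.cast_smul_eq_nsmul F 2 e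
      rw [h1, ← h2]
      norm_num
    · rw [Fh (-α) f hfmem]
      simp only [LinearMap.neg_apply, hαtα]
      have h1 : 2 * (-p) / p = (-2 : F) := by field_simp
      have h2 : ((2:ℕ) : F) • f = 2 • f := Nat.cast_smul_eq_nsmul F 2 f
      rw [h1, show (-2 : F) = -(2:F) by norm_num, neg_smul, ← h2]
      norm_num
  -- pick x₀ ∈ L_β
  have hLβ : Lrt β ≠ ⊥ := by rw [hR] at hβR; exact hβR
  obtain ⟨x₀, hx₀, hx₀0⟩ := Submodule.ne_bot_iff _ |>.mp hLβ
  have hadE : ∀ g : L, (LieAlgebra.ad F L g : Module.End F L) = LieModule.toEnd F L L g :=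
    fun _ => rfl
  have hex : ∃ nn : ℕ, ((LieModule.toEnd F L L e) ^ nn) x₀ = 0 := by
    obtain ⟨nn, hnn⟩ := hA4 α hαR hα e he x₀
    exact ⟨nn, by rw [← hadE]; exact hnn⟩
  have hx00 : ¬ ((LieModule.toEnd F L L e) ^ 0) x₀ = 0 := by simpa using hx₀0
  obtain ⟨k₀, hk₀ne, hk₀z⟩ := Nat.exists_not_and_succ_of_not_zero_of_exists hx00 hex
  set m : L := ((LieModule.toEnd F L L e) ^ k₀) x₀ with hmdef
  have hmmem : m ∈ Lrt (β + (k₀ : F) • α) := lem_pow_mem H Lrt hLrt he hx₀ k₀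
  set μβ : F := 2 * form β α / p with hμβdef
  have hweight : ∀ (k : ℕ) (z : L), z ∈ Lrt (β + (k : F) • α) →
      ⁅h, z⁆ = (μβ + 2 * (k : F)) • z := by
    intro k z hz
    rw [Fh _ z hz]
    congr 1
    have heval : (β + (k : F) • α) (t α) = form β α + (k : F) * p := by
      simp only [LinearMap.add_apply, LinearMap.smul_apply, smul_eq_mul, hβtα, hαtα]
    rw [heval, hμβdef]
    field_simp
  have hprim : htriple.HasPrimitiveVectorWith m (μβ + 2 * (k₀ : F)) := by
    constructor
    · exact hk₀ne
    · exact hweight k₀ m hmmem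
    · have hh : ⁅e, m⁆ = ((LieModule.toEnd F L L e) ^ (k₀ + 1)) x₀ := by
        rw [pow_succ', Module.End.mul_apply]
        exact (LieModule.toEnd_apply_apply F L L e m).symm
      rw [hh, hk₀z]
  have hy0 : y ≠ 0 := fun hy0 => hc (by rw [hcdef, hy0]; simp)
  have hnegR : -α ∈ R := by
    rw [hR]
    exact Submodule.ne_bot_iff _ |>.mpr ⟨y, hy, hy0⟩
  have hnegform : form (-α) (-α) ≠ 0 := by
    simpa only [map_neg, LinearMap.neg_apply, neg_neg] using hα
  have hfnil : ∃ nn : ℕ, ((LieModule.toEnd F L L f) ^ nn) m = 0 := by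
    obtain ⟨nn, hnn⟩ := hA4 (-α) hnegR hnegform f hfmem m
    exact ⟨nn, by rw [← hadE]; exact hnn⟩
  obtain ⟨nn, hn₁, hn₂⟩ := Nat.exists_not_and_succ_of_not_zero_of_exists
    (by simpa using hprim.ne_zero) hfnil
  have hμnat : μβ + 2 * (k₀ : F) = (nn : F) := by
    have hE := hprim.lie_e_pow_succ_toEnd_f nn
    rw [hn₂, lie_zero, eq_comm, smul_eq_zero_iff_left hn₁, mul_eq_zero, sub_eq_zero] at hE
    exact hE.resolve_left (Nat.cast_add_one_ne_zero nn)
  refine ⟨(nn : ℤ) - 2 * (k₀ : ℤ), ?_, ?_⟩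
  · rw [hμβdef] at hμnat
    field_simp at hμnat
    push_cast
    linear_combination hμnat
  · intro j hj0 hjn
    set i : ℕ := k₀ + j.toNat with hidef
    have hjt : (j.toNat : ℤ) = j := Int.toNat_of_nonneg hj0
    have hile : i ≤ nn := by omega
    have hψne : ((LieModule.toEnd F L L f) ^ i) m ≠ 0 :=
      hprim.pow_toEnd_f_ne_zero_of_eq_nat hμnat hile
    have hψmem := lem_pow_mem H Lrt hLrt hfmem hmmem i
    have hiZ : (i : ℤ) = (k₀ : ℤ) + j := by omega
    have hiF : ((i : ℕ) : F) = (k₀ : F) + ((j : ℤ) : F) := by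
      exact_mod_cast congrArg (fun z : ℤ => (z : F)) hiZ
    have hidx : (β + (k₀ : F) • α) + ((i : ℕ) : F) • (-α) = β - ((j : ℤ) : F) • α := by
      rw [hiF]
      module
    rw [hidx] at hψmem
    rw [hR]
    exact Submodule.ne_bot_iff _ |>.mpr ⟨_, hψmem, hψne⟩

end Key
section Endgame

variable {F V : Type*} [Field F] [CharZero F] [AddCommGroup V] [Module F V]
    (form : LinearMap.BilinForm F V) (R : Set V)
    (SYM : ∀ ξ ∈ R, ∀ η ∈ R, form ξ η = form η ξ)
    (NEG : ∀ ξ ∈ R, -ξ ∈ R)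
    (KEY : ∀ α ∈ R, form α α ≠ 0 → ∀ β ∈ R, ∃ n : ℤ,
      2 * form β α = (n : F) * form α α ∧
      ∀ j : ℤ, 0 ≤ j → j ≤ n → (β - (j : F) • α) ∈ R)

include SYM KEY in
lemma big_kill (A C : V) (hA : A ∈ R) (hC : C ∈ R) (p : ℚ) (hp : 0 < p)
    (N : ℤ) (hN : 5 ≤ N) (hAA : form A A = (p : F)) (hCC : form C C = (p : F))
    (hCA : 2 * form C A = (N : F) * (p : F)) : False := by
  have hpF : (p : F) ≠ 0 := by exact_mod_cast hp.ne'
  have hAan : form A A ≠ 0 := by rw [hAA]; exact hpF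
  have hsymAC : form A C = form C A := SYM A hA C hC
  obtain ⟨n, hn, hstr⟩ := KEY A hA hAan C hC
  rw [hAA] at hn
  have hnN : n = N := by
    have h1 : (n : F) = (N : F) := mul_right_cancel₀ hpF (by linear_combination hCA - hn)
    exact_mod_cast h1
  have hD : C - (2 : F) • A ∈ R := by
    have := hstr 2 (by norm_num) (by omega)
    push_cast at this
    exact this
  set D := C - (2 : F) • A with hDdef
  have hDD : form D D = (5 - 2 * (N : F)) * (p : F) := by
    simp only [hDdef, map_sub, map_smul, LinearMap.sub_apply, LinearMap.smul_apply, smul_eq_mul]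
    linear_combination hCC + 4 * hAA - 2 * hCA - 2 * hsymAC
  have h2N0 : ((5 - 2*N : ℤ) : F) ≠ 0 := Int.cast_ne_zero.mpr (by omega)
  have hDDne : form D D ≠ 0 := by
    rw [hDD]
    apply mul_ne_zero _ hpF
    push_cast at h2N0
    exact h2N0
  have hAD2 : 2 * form A D = ((N : F) - 4) * (p : F) := by
    simp only [hDdef, map_sub, map_smul, LinearMap.sub_apply, LinearMap.smul_apply, smul_eq_mul]
    linear_combination 2 * hsymAC + hCA - 4 * hAA
  obtain ⟨k, hk, -⟩ := KEY D hD hDDne A hA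
  rw [hDD] at hk
  have hZ : (N - 4 : ℤ) = k * (5 - 2*N) := by
    have h1 : ((N - 4 : ℤ) : F) = ((k * (5 - 2*N) : ℤ) : F) := by
      push_cast
      apply mul_right_cancel₀ hpF
      linear_combination hk - hAD2
    exact_mod_cast h1
  rcases lt_trichotomy k 0 with h | h | h
  · nlinarith [hZ, hN, h, mul_nonneg (show (0:ℤ) ≤ -(k+1) by omega)
      (show (0:ℤ) ≤ 2*N - 5 by omega)]
  · rw [h] at hZ
    simp at hZ
    omega
  · nlinarith [hZ, hN, h, mul_nonneg (show (0:ℤ) ≤ k - 1 by omega)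
      (show (0:ℤ) ≤ 2*N - 5 by omega)]

include SYM KEY in
lemma mixed_to_samesign (α β : V) (hα : α ∈ R) (hβ : β ∈ R) (p q : ℚ)
    (hp : 0 < p) (hq : q < 0) (hAA : form α α = (p : F)) (hBB : form β β = (q : F))
    (m n : ℤ) (hm : 2 * form α β = (m : F) * (q : F)) (hn : 2 * form β α = (n : F) * (p : F))
    (hmpos : 0 < m) :
    ∃ C ∈ R, form C C = (p : F) ∧ 2 * form C α = ((2 - m*n : ℤ) : F) * (p : F) := by
  have hqF : (q : F) ≠ 0 := by exact_mod_cast hq.ne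
  have hBan : form β β ≠ 0 := by rw [hBB]; exact hqF
  have hsym : form α β = form β α := SYM α hα β hβ
  obtain ⟨k, hk, hstr⟩ := KEY β hβ hBan α hα
  rw [hBB] at hk
  have hkm : k = m := by
    have h1 : (k : F) = (m : F) := mul_right_cancel₀ hqF (by linear_combination hm - hk)
    exact_mod_cast h1
  have hCmem : α - (m : F) • β ∈ R := hstr m (le_of_lt hmpos) (by omega)
  refine ⟨α - (m : F) • β, hCmem, ?_, ?_⟩
  · simp only [map_sub, map_smul, LinearMap.sub_apply, LinearMap.smul_apply, smul_eq_mul]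
    linear_combination hAA - (m : F) * hm + (m : F) * hsym + (m : F)^2 * hBB
  · simp only [map_sub, map_smul, LinearMap.sub_apply, LinearMap.smul_apply, smul_eq_mul]
    push_cast
    linear_combination 2 * hAA - (m : F) * hn

include SYM NEG KEY in
lemma samesign_kill (A C : V) (hA : A ∈ R) (hC : C ∈ R) (p : ℚ) (hp : 0 < p)
    (N : ℤ) (hN : 3 ≤ N) (hAA : form A A = (p : F)) (hCC : form C C = (p : F))
    (hCA : 2 * form C A = (N : F) * (p : F)) : False := by
  have hpF : (p : F) ≠ 0 := by exact_mod_cast hp.ne'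
  have hAan : form A A ≠ 0 := by rw [hAA]; exact hpF
  have hCan : form C C ≠ 0 := by rw [hCC]; exact hpF
  have hsymAC : form A C = form C A := SYM A hA C hC
  obtain ⟨n, hn, hstr⟩ := KEY A hA hAan C hC
  rw [hAA] at hn
  have hnN : n = N := by
    have h1 : (n : F) = (N : F) := mul_right_cancel₀ hpF (by linear_combination hCA - hn)
    exact_mod_cast h1
  have hD : C - (1 : F) • A ∈ R := by
    have := hstr 1 (by norm_num) (by omega)
    push_cast at this
    exact this
  set D := C - (1 : F) • A with hDdef
  have hDD : form D D = (2 - (N : F)) * (p : F) := by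
    simp only [hDdef, map_sub, map_smul, LinearMap.sub_apply, LinearMap.smul_apply, smul_eq_mul]
    linear_combination hCC + hAA - hCA - hsymAC
  have hDC2 : 2 * form D C = (2 - (N : F)) * (p : F) := by
    simp only [hDdef, map_sub, map_smul, LinearMap.sub_apply, LinearMap.smul_apply, smul_eq_mul]
    linear_combination 2 * hCC - 2 * hsymAC - hCA
  have hsymDC : form C D = form D C := SYM C hC D hD
  have hnegC : -C ∈ R := NEG C hC
  have hCCneg : form (-C) (-C) = (p : F) := by
    simp only [map_neg, LinearMap.neg_apply, neg_neg]
    exact hCC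
  have hnegCC : form (-C) (-C) ≠ 0 := by rw [hCCneg]; exact hpF
  obtain ⟨k, hk, hstr2⟩ := KEY (-C) hnegC hnegCC D hD
  rw [hCCneg] at hk
  have hnegr : form D (-C) = -(form D C) := map_neg (form D) C
  have hkval : k = N - 2 := by
    have h1 : (k : F) = ((N - 2 : ℤ) : F) := by
      push_cast
      apply mul_right_cancel₀ hpF
      linear_combination -hk + 2 * hnegr - hDC2
    exact_mod_cast h1
  have hE : D + ((N : F) - 2) • C ∈ R := by
    have := hstr2 (N - 2) (by omega) (by omega)
    push_cast at this
    simpa [smul_neg, sub_neg_eq_add] using this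
  set E := D + ((N : F) - 2) • C with hEdef
  have hEE : form E E = (2 - (N : F)) * (p : F) := by
    simp only [hEdef, map_add, map_smul, LinearMap.add_apply, LinearMap.smul_apply, smul_eq_mul]
    linear_combination hDD + ((N:F) - 2) * hsymDC + ((N:F) - 2) * hDC2 + ((N:F) - 2)^2 * hCC
  have hEA2 : 2 * form E A = ((N:F) * (N:F) - (N:F) - 2) * (p : F) := by
    simp only [hEdef, hDdef, map_add, map_sub, map_smul, LinearMap.add_apply,
      LinearMap.sub_apply, LinearMap.smul_apply, smul_eq_mul]
    linear_combination ((N:F) - 1) * hCA - 2 * hAA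
  have hsymAE : form A E = form E A := SYM A hA E hE
  have hnegE : -E ∈ R := NEG E hE
  set qE : ℚ := (2 - (N : ℚ)) * p with hqEdef
  have hNQ : (3 : ℚ) ≤ (N : ℚ) := by exact_mod_cast hN
  have hqE : qE < 0 := by
    rw [hqEdef]
    apply mul_neg_of_neg_of_pos _ hp
    linarith
  have hqEF : (qE : F) = (2 - (N : F)) * (p : F) := by
    rw [hqEdef]
    push_cast
    ring
  have hEE' : form (-E) (-E) = (qE : F) := by
    simp only [map_neg, LinearMap.neg_apply, neg_neg]
    rw [hEE, hqEF]
  have hnegAE : form A (-E) = -(form A E) := map_neg (form A) E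
  have hnegEA : form (-E) A = -(form E A) := by rw [map_neg, LinearMap.neg_apply]
  have hm' : 2 * form A (-E) = ((N + 1 : ℤ) : F) * (qE : F) := by
    rw [hqEF]
    push_cast
    linear_combination 2 * hnegAE - 2 * hsymAE - hEA2
  have hn' : 2 * form (-E) A = ((-(N*N - N - 2) : ℤ) : F) * (p : F) := by
    push_cast
    linear_combination 2 * hnegEA - hEA2
  obtain ⟨C₂, hC₂R, hC₂C₂, hC₂A⟩ := mixed_to_samesign form R SYM KEY A (-E) hA hnegE p qE
    hp hqE hAA hEE' (N + 1) (-(N*N - N - 2)) hm' hn' (by omega)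
  have hNN2 : (0:ℤ) ≤ N*N - N - 2 - 4 := by
    nlinarith [mul_nonneg (show (0:ℤ) ≤ N - 3 by omega) (show (0:ℤ) ≤ N by omega)]
  have hN₂ : 5 ≤ 2 - (N + 1) * (-(N*N - N - 2)) := by
    nlinarith [mul_nonneg (show (0:ℤ) ≤ N + 1 by omega) hNN2]
  exact big_kill form R SYM KEY A C₂ hA hC₂R p hp _ hN₂ hAA hC₂C₂ hC₂A

end Endgame




theorem lemma_3_1
    {F L : Type*} [Field F] [CharZero F] [LieRing L] [LieAlgebra F L]
    (H : LieSubalgebra F L)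
    (habelian : ∀ x y : ↥H, ⁅x, y⁆ = 0)
    -- root spaces with respect to H
    (Lrt : Module.Dual F ↥H → Submodule F L)
    (hLrt : ∀ ξ (x : L), x ∈ Lrt ξ ↔ ∀ h : ↥H, ⁅(h : L), x⁆ = ξ h • x)
    -- root space decomposition L = ⊕_{ξ} L_ξ
    (hdecomp : ⨆ ξ, Lrt ξ = ⊤) (hindep : iSupIndep Lrt)
    -- the set of roots
    (R : Set (Module.Dual F ↥H))
    (hR : R = {ξ | Lrt ξ ≠ ⊥})
    -- a symmetric invariant bilinear form on L
    (B : LinearMap.BilinForm F L)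
    (hBsym : ∀ x y : L, B x y = B y x)
    (hBinv : ∀ x y z : L, B ⁅x, y⁆ z = B x ⁅y, z⁆)
    -- (A1) H is self-centralizing
    (hA1 : Lrt 0 = H.toSubmodule)
    -- (A2) B is nondegenerate
    (hA2 : B.Nondegenerate)
    -- (A3) every root is represented by some t_ξ ∈ H
    (t : Module.Dual F ↥H → ↥H)
    (hA3 : ∀ ξ ∈ R, ∀ h : ↥H, ξ h = B (t ξ) h)
    -- the induced form, extended bilinearly to the span of R
    (form : LinearMap.BilinForm F (Module.Dual F ↥H))
    (hform : ∀ ξ ∈ R, ∀ η ∈ R, form ξ η = B (t ξ : L) (t η : L))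
    -- (A4) ad x is locally nilpotent for x in an anisotropic root space
    (hA4 : ∀ α ∈ R, form α α ≠ 0 → ∀ x ∈ Lrt α, ∀ y : L,
      ∃ n : ℕ, ((LieAlgebra.ad F L x) ^ n) y = 0)
    -- (A5) R^× is irreducible
    (hA5 : ∀ R1 R2 : Set (Module.Dual F ↥H), {ξ | ξ ∈ R ∧ form ξ ξ ≠ 0} = R1 ∪ R2 →
      (∀ ξ ∈ R1, ∀ η ∈ R2, form ξ η = 0) → R1 = ∅ ∨ R2 = ∅)
    -- the form is scaled: (β,β) is rational for all β ∈ R^×, positive for some α ∈ R^×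
    (hscale : ∀ β ∈ R, form β β ≠ 0 → ∃ q : ℚ, form β β = (q : F))
    (hpos : ∃ α ∈ R, ∃ q : ℚ, 0 < q ∧ form α α = (q : F))
    :
    ∀ γ ∈ R, form γ γ ≠ 0 → ∃ q : ℚ, 0 < q ∧ form γ γ = (q : F) := by
  have SYM : ∀ ξ ∈ R, ∀ η ∈ R, form ξ η = form η ξ := by
    intro ξ hξ η hη
    rw [hform ξ hξ η hη, hform η hη ξ hξ, hBsym]
  have NEG : ∀ ξ ∈ R, -ξ ∈ R := by
    intro ξ hξ
    have hLξ : Lrt ξ ≠ ⊥ := by rw [hR] at hξ; exact hξ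
    obtain ⟨x, hx, hx0⟩ := Submodule.ne_bot_iff _ |>.mp hLξ
    obtain ⟨y, hy, hBy⟩ := lem_neg H Lrt hLrt hdecomp B hBinv hA2 hx hx0
    have hy0 : y ≠ 0 := fun h => hBy (by rw [h]; simp)
    rw [hR]
    exact Submodule.ne_bot_iff _ |>.mpr ⟨y, hy, hy0⟩
  have KEY : ∀ α ∈ R, form α α ≠ 0 → ∀ β ∈ R, ∃ n : ℤ,
      2 * form β α = (n : F) * form α α ∧
      ∀ j : ℤ, 0 ≤ j → j ≤ n → (β - (j : F) • α) ∈ R := fun α hα hαn β hβ =>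
    key_lemma H Lrt hLrt hdecomp R hR B hBsym hBinv hA1 hA2 t hA3 form hform hA4 hα hαn hβ
  intro γ hγ hγn
  obtain ⟨q, hqeq⟩ := hscale γ hγ hγn
  have hq0 : q ≠ 0 := by
    intro h
    rw [h] at hqeq
    simp at hqeq
    exact hγn hqeq
  rcases hq0.lt_or_gt with hqneg | hqpos
  case inr => exact ⟨q, hqpos, hqeq⟩
  exfalso
  set R1 : Set (Module.Dual F ↥H) := {ξ | ξ ∈ R ∧ ∃ r : ℚ, 0 < r ∧ form ξ ξ = (r : F)}
    with hR1
  set R2 : Set (Module.Dual F ↥H) := {ξ | ξ ∈ R ∧ ∃ r : ℚ, r < 0 ∧ form ξ ξ = (r : F)}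
    with hR2
  have hcover : {ξ | ξ ∈ R ∧ form ξ ξ ≠ 0} = R1 ∪ R2 := by
    ext ξ
    simp only [Set.mem_setOf_eq, Set.mem_union, hR1, hR2]
    constructor
    · rintro ⟨hξR, hξn⟩
      obtain ⟨r, hr⟩ := hscale ξ hξR hξn
      have hr0 : r ≠ 0 := by
        intro h
        rw [h] at hr
        simp at hr
        exact hξn hr
      rcases hr0.lt_or_gt with h | h
      · exact Or.inr ⟨hξR, r, h, hr⟩
      · exact Or.inl ⟨hξR, r, h, hr⟩
    · rintro (⟨hξR, r, hrpos, hr⟩ | ⟨hξR, r, hrneg, hr⟩)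
      · exact ⟨hξR, by rw [hr]; exact_mod_cast hrpos.ne'⟩
      · exact ⟨hξR, by rw [hr]; exact_mod_cast hrneg.ne⟩
  obtain ⟨α₀, hα₀R, q₀, hq₀pos, hq₀⟩ := hpos
  have hα₀1 : α₀ ∈ R1 := ⟨hα₀R, q₀, hq₀pos, hq₀⟩
  have hγ2 : γ ∈ R2 := ⟨hγ, q, hqneg, hqeq⟩
  have hnotperp : ¬ (∀ ξ ∈ R1, ∀ η ∈ R2, form ξ η = 0) := by
    intro hperp
    rcases hA5 R1 R2 hcover hperp with h | h
    · exact absurd (h ▸ hα₀1) (Set.notMem_empty _)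
    · exact absurd (h ▸ hγ2) (Set.notMem_empty _)
  push_neg at hnotperp
  obtain ⟨α, hα1, β, hβ2, hb⟩ := hnotperp
  obtain ⟨hαR, p, hppos, hpα⟩ := hα1
  obtain ⟨hβR, q', hq'neg, hq'β⟩ := hβ2
  have hαan : form α α ≠ 0 := by rw [hpα]; exact_mod_cast hppos.ne'
  have hβan : form β β ≠ 0 := by rw [hq'β]; exact_mod_cast hq'neg.ne
  obtain ⟨n, hn, -⟩ := KEY α hαR hαan β hβR
  obtain ⟨mm, hmm, -⟩ := KEY β hβR hβan α hαR
  rw [hpα] at hn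
  rw [hq'β] at hmm
  have hsym' : form β α = form α β := SYM β hβR α hαR
  have hmm0 : mm ≠ 0 := by
    intro h
    rw [h] at hmm
    simp at hmm
    exact hb hmm
  have hn0 : n ≠ 0 := by
    intro h
    rw [h] at hn
    simp at hn
    exact hb (hsym' ▸ hn)
  have hrel : (n : ℚ) * p = (mm : ℚ) * q' := by
    have hF : ((( n : ℚ) * p : ℚ) : F) = (((mm : ℚ) * q' : ℚ) : F) := by
      push_cast
      linear_combination hmm - hn + 2 * hsym'
    exact_mod_cast hF
  have hmnneg : mm * n < 0 := by
    have hQ : (mm : ℚ) * (n : ℚ) < 0 := by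
      rcases lt_trichotomy n 0 with h | h | h
      · have h1 : (n : ℚ) < 0 := by exact_mod_cast h
        have h2 : (n : ℚ) * p < 0 := mul_neg_of_neg_of_pos h1 hppos
        rw [hrel] at h2
        have h3 : 0 < (mm : ℚ) := by nlinarith [hq'neg]
        exact mul_neg_of_pos_of_neg h3 h1
      · exact absurd h hn0
      · have h1 : 0 < (n : ℚ) := by exact_mod_cast h
        have h2 : 0 < (n : ℚ) * p := mul_pos h1 hppos
        rw [hrel] at h2
        have h3 : (mm : ℚ) < 0 := by nlinarith [hq'neg]
        exact mul_neg_of_neg_of_pos h3 h1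
    exact_mod_cast hQ
  have hmn1 : mm * n ≤ -1 := by omega
  rcases lt_trichotomy mm 0 with hmmneg | h | hmmpos
  · -- replace β by -β
    have hnegβ : -β ∈ R := NEG β hβR
    have hBB' : form (-β) (-β) = (q' : F) := by
      simp only [map_neg, LinearMap.neg_apply, neg_neg]
      exact hq'β
    have hnegAB : form α (-β) = -form α β := map_neg (form α) β
    have hnegBA : form (-β) α = -form β α := by rw [map_neg, LinearMap.neg_apply]
    have hm' : 2 * form α (-β) = ((-mm : ℤ) : F) * (q' : F) := by
      push_cast
      linear_combination 2 * hnegAB - hmm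
    have hn' : 2 * form (-β) α = ((-n : ℤ) : F) * (p : F) := by
      push_cast
      linear_combination 2 * hnegBA - hn
    obtain ⟨C, hCR, hCC, hCA⟩ := mixed_to_samesign form R SYM KEY α (-β) hαR hnegβ
      p q' hppos hq'neg hpα hBB' (-mm) (-n) hm' hn' (by omega)
    have h3 : 3 ≤ 2 - (-mm) * (-n) := by
      rw [show (-mm) * (-n) = mm * n from by ring]
      omega
    exact samesign_kill form R SYM NEG KEY α C hαR hCR p hppos _ h3 hpα hCC hCA
  · exact hmm0 h
  · obtain ⟨C, hCR, hCC, hCA⟩ := mixed_to_samesign form R SYM KEY α β hαR hβR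
      p q' hppos hq'neg hpα hq'β mm n hmm hn hmmpos
    have h3 : 3 ≤ 2 - mm * n := by omega
    exact samesign_kill form R SYM NEG KEY α C hαR hCR p hppos _ h3 hpα hCC hCA
end

section
/- For every anisotropic root α ∈ R^× and every root ξ ∈ R, the integer n with ξ(h_α) = n·1_F satisfies −4 ≤ n ≤ 4. -/
set_option linter.unusedSectionVars false
set_option linter.unusedTactic false
set_option maxHeartbeats 1000000


section Aux

variable {F L : Type*} [Field F] [CharZero F] [LieRing L] [LieAlgebra F L]
    {H : LieSubalgebra F L}
    {Lrt : Module.Dual F ↥H → Submodule F L}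
    {B : LinearMap.BilinForm F L}

/-- bracket of root vectors -/
theorem aux_bracket (hLrt : ∀ ξ (x : L), x ∈ Lrt ξ ↔ ∀ h : ↥H, ⁅(h : L), x⁆ = ξ h • x)
    {ξ η : Module.Dual F ↥H} {x y : L} (hx : x ∈ Lrt ξ) (hy : y ∈ Lrt η) :
    ⁅x, y⁆ ∈ Lrt (ξ + η) := by
  rw [hLrt] at hx hy ⊢
  intro h
  rw [leibniz_lie, hx h, hy h, smul_lie, lie_smul, LinearMap.add_apply, add_smul]

theorem aux_orth (hBinv : ∀ x y z : L, B ⁅x, y⁆ z = B x ⁅y, z⁆)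
    (hLrt : ∀ ξ (x : L), x ∈ Lrt ξ ↔ ∀ h : ↥H, ⁅(h : L), x⁆ = ξ h • x)
    {ξ η : Module.Dual F ↥H} (hne : ξ + η ≠ 0) {x y : L}
    (hx : x ∈ Lrt ξ) (hy : y ∈ Lrt η) : B x y = 0 := by
  rw [hLrt] at hx hy
  obtain ⟨h, hh⟩ : ∃ h : ↥H, ξ h + η h ≠ 0 := by
    by_contra hcon
    push_neg at hcon
    exact hne (by ext h; simpa using hcon h)
  have e1 : B ⁅x, (h : L)⁆ y = B x ⁅(h : L), y⁆ := hBinv x (h : L) y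
  rw [← lie_skew, hx h, hy h, map_neg, map_smul, map_smul, LinearMap.neg_apply,
    LinearMap.smul_apply, smul_eq_mul, smul_eq_mul] at e1
  have : (ξ h + η h) * B x y = 0 := by linear_combination -e1
  rcases mul_eq_zero.mp this with h1 | h1
  · exact absurd h1 hh
  · exact h1

theorem aux_pair (hdecomp : ⨆ ξ, Lrt ξ = ⊤)
    (hBinv : ∀ x y z : L, B ⁅x, y⁆ z = B x ⁅y, z⁆)
    (hLrt : ∀ ξ (x : L), x ∈ Lrt ξ ↔ ∀ h : ↥H, ⁅(h : L), x⁆ = ξ h • x)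
    (hA2 : B.Nondegenerate)
    {ξ : Module.Dual F ↥H} {x : L} (hx : x ∈ Lrt ξ) (hx0 : x ≠ 0) :
    ∃ y ∈ Lrt (-ξ), B x y ≠ 0 := by
  by_contra hcon
  push_neg at hcon
  refine hx0 (hA2.1 x fun z ↦ ?_)
  have hz : z ∈ ⨆ ξ, Lrt ξ := hdecomp ▸ Submodule.mem_top
  refine Submodule.iSup_induction (motive := fun z ↦ B x z = 0) Lrt hz (fun η y hy ↦ ?_) ?_ ?_
  · by_cases hcase : η = -ξ
    · exact hcon y (hcase ▸ hy)
    · refine aux_orth hBinv hLrt (fun hsum ↦ hcase ?_) hx hy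
      linear_combination (norm := module) hsum
  · simp
  · intro y z hy hz; rw [map_add, hy, hz, add_zero]

end Aux

section Aux2

variable {F L : Type*} [Field F] [CharZero F] [LieRing L] [LieAlgebra F L]
    {H : LieSubalgebra F L}
    {Lrt : Module.Dual F ↥H → Submodule F L}
    {B : LinearMap.BilinForm F L}
    {t : Module.Dual F ↥H → ↥H}

/-- if ξ is a root so is -ξ -/
theorem aux_neg_root (hdecomp : ⨆ ξ, Lrt ξ = ⊤)
    (hBinv : ∀ x y z : L, B ⁅x, y⁆ z = B x ⁅y, z⁆)
    (hLrt : ∀ ξ (x : L), x ∈ Lrt ξ ↔ ∀ h : ↥H, ⁅(h : L), x⁆ = ξ h • x)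
    (hA2 : B.Nondegenerate)
    {ξ : Module.Dual F ↥H} (hne : Lrt ξ ≠ ⊥) : Lrt (-ξ) ≠ ⊥ := by
  obtain ⟨x, hx, hx0⟩ := Submodule.exists_mem_ne_zero_of_ne_bot hne
  obtain ⟨y, hy, hBy⟩ := aux_pair hdecomp hBinv hLrt hA2 hx hx0
  exact Submodule.ne_bot_iff _ |>.mpr ⟨y, hy, fun h ↦ hBy (by simp [h])⟩

/-- B is nondegenerate on L₀ -/
theorem aux_H_nondeg (hdecomp : ⨆ ξ, Lrt ξ = ⊤)
    (hBinv : ∀ x y z : L, B ⁅x, y⁆ z = B x ⁅y, z⁆)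
    (hLrt : ∀ ξ (x : L), x ∈ Lrt ξ ↔ ∀ h : ↥H, ⁅(h : L), x⁆ = ξ h • x)
    (hA2 : B.Nondegenerate)
    {z : L} (hz : z ∈ Lrt 0) (hbz : ∀ y ∈ Lrt (0 : Module.Dual F ↥H), B z y = 0) :
    z = 0 := by
  by_contra hz0
  obtain ⟨y, hy, hBy⟩ := aux_pair hdecomp hBinv hLrt hA2 hz hz0
  rw [neg_zero] at hy
  exact hBy (hbz y hy)

/-- brackets into H are multiples of t β -/
theorem aux_bracket_t (hdecomp : ⨆ ξ, Lrt ξ = ⊤)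
    (hBsym : ∀ x y : L, B x y = B y x)
    (hBinv : ∀ x y z : L, B ⁅x, y⁆ z = B x ⁅y, z⁆)
    (hLrt : ∀ ξ (x : L), x ∈ Lrt ξ ↔ ∀ h : ↥H, ⁅(h : L), x⁆ = ξ h • x)
    (hA1 : Lrt 0 = H.toSubmodule)
    (hA2 : B.Nondegenerate)
    {R : Set (Module.Dual F ↥H)}
    (hA3 : ∀ ξ ∈ R, ∀ h : ↥H, ξ h = B (t ξ) h)
    {β : Module.Dual F ↥H} (hβ : β ∈ R) {x y : L}
    (hx : x ∈ Lrt β) (hy : y ∈ Lrt (-β)) :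
    ⁅x, y⁆ = B x y • (t β : L) := by
  have hxy : ⁅x, y⁆ ∈ Lrt 0 := by
    have := aux_bracket hLrt hx hy
    rwa [add_neg_cancel] at this
  have htβ : (t β : L) ∈ Lrt 0 := by rw [hA1]; exact (t β).2
  have key : ∀ y' ∈ Lrt (0 : Module.Dual F ↥H), B (⁅x, y⁆ - B x y • (t β : L)) y' = 0 := by
    intro y' hy'
    have hy'H : y' ∈ H := by rwa [hA1] at hy'
    set h' : ↥H := ⟨y', hy'H⟩
    have e1 : B ⁅x, y⁆ y' = β h' * B x y := by
      have : B ⁅x, (h' : L)⁆ y = B x ⁅(h' : L), y⁆ := hBinv x _ y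
      rw [← lie_skew, (hLrt β x).mp hx h', (hLrt (-β) y).mp hy h'] at this
      simp only [map_neg, map_smul, LinearMap.neg_apply, LinearMap.smul_apply, smul_eq_mul,
        LinearMap.map_smul, LinearMap.neg_apply] at this ⊢
      have e2 : B ⁅x, y⁆ (h' : L) = β h' * B x y := by
        have e3 := hBinv (h' : L) x y
        rw [(hLrt β x).mp hx h'] at e3
        rw [hBsym ⁅x,y⁆ (h' : L), ← e3]
        simp [smul_eq_mul, mul_comm]
      exact e2
    have e4 : B (B x y • (t β : L)) y' = β h' * B x y := by
      rw [map_smul, LinearMap.smul_apply, smul_eq_mul, ← hA3 β hβ h']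
      ring
    rw [map_sub, LinearMap.sub_apply, e1, e4, sub_self]
  have := aux_H_nondeg hdecomp hBinv hLrt hA2 (Submodule.sub_mem _ hxy
    (Submodule.smul_mem _ _ htβ)) key
  rw [sub_eq_zero] at this
  exact this

end Aux2
section Aux3

variable {F L : Type*} [Field F] [CharZero F] [LieRing L] [LieAlgebra F L]
    {H : LieSubalgebra F L}
    {Lrt : Module.Dual F ↥H → Submodule F L}
    {B : LinearMap.BilinForm F L}
    {t : Module.Dual F ↥H → ↥H}
    {form : LinearMap.BilinForm F (Module.Dual F ↥H)}
    {R : Set (Module.Dual F ↥H)}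

/-- evaluation of a root on h_β -/
theorem aux_eval
    (hA3 : ∀ ξ ∈ R, ∀ h : ↥H, ξ h = B (t ξ) h)
    (hform : ∀ ξ ∈ R, ∀ η ∈ R, form ξ η = B (t ξ : L) (t η : L))
    {β η : Module.Dual F ↥H} (hβ : β ∈ R) (hη : η ∈ R) (hb : form β β ≠ 0) :
    η ((2 / form β β) • t β) * form β β = 2 * form η β := by
  have e1 : η (t β) = form η β := by
    rw [hform η hη β hβ, ← hA3 η hη (t β)]
  rw [map_smul, smul_eq_mul, e1]
  field_simp

/-- construction of the sl2-triple attached to an anisotropic root -/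
theorem aux_sl2 (hdecomp : ⨆ ξ, Lrt ξ = ⊤)
    (hBsym : ∀ x y : L, B x y = B y x)
    (hBinv : ∀ x y z : L, B ⁅x, y⁆ z = B x ⁅y, z⁆)
    (hLrt : ∀ ξ (x : L), x ∈ Lrt ξ ↔ ∀ h : ↥H, ⁅(h : L), x⁆ = ξ h • x)
    (hA1 : Lrt 0 = H.toSubmodule)
    (hA2 : B.Nondegenerate)
    (hA3 : ∀ ξ ∈ R, ∀ h : ↥H, ξ h = B (t ξ) h)
    (hform : ∀ ξ ∈ R, ∀ η ∈ R, form ξ η = B (t ξ : L) (t η : L))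
    (hR : R = {ξ | Lrt ξ ≠ ⊥})
    {β : Module.Dual F ↥H} (hβ : β ∈ R) (hb : form β β ≠ 0) :
    ∃ e ∈ Lrt β, ∃ f ∈ Lrt (-β),
      IsSl2Triple ((2 / form β β) • (t β : L)) e f := by
  have hβbot : Lrt β ≠ ⊥ := by rw [hR] at hβ; exact hβ
  obtain ⟨e, he, he0⟩ := Submodule.exists_mem_ne_zero_of_ne_bot hβbot
  obtain ⟨f', hf', hBf'⟩ := aux_pair hdecomp hBinv hLrt hA2 he he0
  set f : L := (2 / (form β β * B e f')) • f' with hfdef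
  have hf : f ∈ Lrt (-β) := Submodule.smul_mem _ _ hf'
  have hBef : B e f = 2 / form β β := by
    rw [hfdef, map_smul, smul_eq_mul]
    field_simp
  have hbrk : ⁅e, f⁆ = (2 / form β β) • (t β : L) := by
    rw [aux_bracket_t hdecomp hBsym hBinv hLrt hA1 hA2 hA3 hβ he hf, hBef]
  have hββ : β (t β) = form β β := by rw [hform β hβ β hβ, ← hA3 β hβ (t β)]
  have htβ0 : (t β : L) ≠ 0 := by
    intro hcon
    apply hb
    rw [hform β hβ β hβ, hcon]
    simp
  have hlie_e : ⁅((2 / form β β) • (t β : L)), e⁆ = (2 : F) • e := by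
    rw [smul_lie, (hLrt β e).mp he (t β), hββ, smul_smul, div_mul_cancel₀]
    exact hb
  have hlie_f : ⁅((2 / form β β) • (t β : L)), f⁆ = -((2 : F) • f) := by
    rw [smul_lie, (hLrt (-β) f).mp hf (t β), LinearMap.neg_apply, hββ, smul_smul,
      mul_neg, neg_smul, div_mul_cancel₀]
    exact hb
  refine ⟨e, he, f, hf, ?_, hbrk, ?_, ?_⟩
  · exact smul_ne_zero (div_ne_zero two_ne_zero hb) htβ0
  · rw [hlie_e]; norm_num [← Nat.cast_smul_eq_nsmul F 2 e]
  · rw [hlie_f]; norm_num [← Nat.cast_smul_eq_nsmul F 2 f]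

end Aux3
section Aux4

variable {F L : Type*} [Field F] [CharZero F] [LieRing L] [LieAlgebra F L]
    {H : LieSubalgebra F L}
    {Lrt : Module.Dual F ↥H → Submodule F L}
    {B : LinearMap.BilinForm F L}
    {t : Module.Dual F ↥H → ↥H}
    {form : LinearMap.BilinForm F (Module.Dual F ↥H)}
    {R : Set (Module.Dual F ↥H)}

theorem aux_pow_mem (hLrt : ∀ ξ (x : L), x ∈ Lrt ξ ↔ ∀ h : ↥H, ⁅(h : L), x⁆ = ξ h • x)
    {β μ : Module.Dual F ↥H} {e x : L} (he : e ∈ Lrt β) (hx : x ∈ Lrt μ) (j : ℕ) :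
    ((LieModule.toEnd F L L e) ^ j) x ∈ Lrt (μ + (j : F) • β) := by
  induction j with
  | zero => simpa using hx
  | succ j ih =>
    have : ((LieModule.toEnd F L L e) ^ (j + 1)) x
        = ⁅e, ((LieModule.toEnd F L L e) ^ j) x⁆ := by
      rw [pow_succ']; rfl
    rw [this]
    have hmem := aux_bracket hLrt he ih
    have : β + (μ + (j : F) • β) = μ + ((j : ℕ) + (1:F)) • β := by
      push_cast
      module
    rw [this] at hmem
    convert hmem using 2
    push_cast
    ring

/-- KEY: integrality of ξ(h_β) and unbroken root strings. -/
theorem aux_key (hdecomp : ⨆ ξ, Lrt ξ = ⊤)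
    (hBsym : ∀ x y : L, B x y = B y x)
    (hBinv : ∀ x y z : L, B ⁅x, y⁆ z = B x ⁅y, z⁆)
    (hLrt : ∀ ξ (x : L), x ∈ Lrt ξ ↔ ∀ h : ↥H, ⁅(h : L), x⁆ = ξ h • x)
    (hA1 : Lrt 0 = H.toSubmodule)
    (hA2 : B.Nondegenerate)
    (hA3 : ∀ ξ ∈ R, ∀ h : ↥H, ξ h = B (t ξ) h)
    (hform : ∀ ξ ∈ R, ∀ η ∈ R, form ξ η = B (t ξ : L) (t η : L))
    (hR : R = {ξ | Lrt ξ ≠ ⊥})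
    (hA4 : ∀ α ∈ R, form α α ≠ 0 → ∀ x ∈ Lrt α, ∀ y : L,
      ∃ n : ℕ, ((LieAlgebra.ad F L x) ^ n) y = 0)
    {β η : Module.Dual F ↥H} (hβ : β ∈ R) (hb : form β β ≠ 0) (hη : η ∈ R) :
    ∃ N : ℤ, η ((2 / form β β) • t β) = (N : F) ∧
      ∀ k : ℕ, (k : ℤ) ≤ N → (η - (k : F) • β) ∈ R := by
  obtain ⟨e, he, f, hf, trip⟩ :=
    aux_sl2 hdecomp hBsym hBinv hLrt hA1 hA2 hA3 hform hR hβ hb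
  have hηbot : Lrt η ≠ ⊥ := by rw [hR] at hη; exact hη
  obtain ⟨v, hv, hv0⟩ := Submodule.exists_mem_ne_zero_of_ne_bot hηbot
  -- the negative root
  have hnβ : -β ∈ R := by
    rw [hR]
    exact aux_neg_root hdecomp hBinv hLrt hA2 (by rw [hR] at hβ; exact hβ)
  have hnb : form (-β) (-β) ≠ 0 := by simpa using hb
  -- top of the e-string through v
  have hE : ∃ N : ℕ, ((LieModule.toEnd F L L e) ^ N) v = 0 := hA4 β hβ hb e he v
  classical
  set N0 := Nat.find hE with hN0
  have hN0pos : N0 ≠ 0 := by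
    intro hcon
    have := Nat.find_spec hE
    rw [← hN0, hcon] at this
    simp at this
    exact hv0 this
  obtain ⟨p, hp⟩ : ∃ p, N0 = p + 1 := ⟨N0 - 1, by omega⟩
  set w : L := ((LieModule.toEnd F L L e) ^ p) v with hw
  have hw0 : w ≠ 0 := Nat.find_min hE (by omega)
  have hwmem : w ∈ Lrt (η + (p : F) • β) := aux_pow_mem hLrt he hv p
  have hew : ⁅e, w⁆ = 0 := by
    have : ⁅e, w⁆ = ((LieModule.toEnd F L L e) ^ (p + 1)) v := by
      rw [pow_succ']; rfl
    rw [this, ← hp, hN0]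
    exact Nat.find_spec hE
  -- h-eigenvalue of w
  set hH : ↥H := (2 / form β β) • t β with hHdef
  have hcoe : ((hH : ↥H) : L) = (2 / form β β) • (t β : L) := rfl
  have hββ : β hH = 2 := by
    have h1 := aux_eval hA3 hform hβ hβ hb
    have h2 : β hH * form β β = 2 * form β β := by rw [hHdef]; exact h1
    exact mul_right_cancel₀ hb h2
  set μ : F := η hH + 2 * p with hμ
  have hhw : ⁅((hH : ↥H) : L), w⁆ = μ • w := by
    rw [(hLrt _ w).mp hwmem hH]
    congr 1
    rw [hμ, LinearMap.add_apply, LinearMap.smul_apply, smul_eq_mul, hββ]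
    ring
  have P : trip.HasPrimitiveVectorWith w μ := by
    refine ⟨hw0, ?_, hew⟩
    rw [← hcoe] at *
    exact hhw
  -- minimal vanishing power of f
  have hF : ∃ M : ℕ, ((LieModule.toEnd F L L f) ^ M) w = 0 := hA4 (-β) hnβ hnb f hf w
  set q := Nat.find hF with hq
  have hq0 : q ≠ 0 := by
    intro hcon
    have := Nat.find_spec hF
    rw [← hq, hcon] at this
    simp at this
    exact hw0 this
  obtain ⟨q', hq'⟩ : ∃ q', q = q' + 1 := ⟨q - 1, by omega⟩
  have hψq : ((LieModule.toEnd F L L f) ^ (q' + 1)) w = 0 := by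
    rw [← hq']; exact Nat.find_spec hF
  have hψq' : ((LieModule.toEnd F L L f) ^ q') w ≠ 0 := Nat.find_min hF (by omega)
  have heψ := P.lie_e_pow_succ_toEnd_f q'
  rw [hψq, lie_zero] at heψ
  have hμval : μ = (q' : F) := by
    rcases smul_eq_zero.mp heψ.symm with h | h
    · rcases mul_eq_zero.mp h with h1 | h1
      · exact absurd h1 (Nat.cast_add_one_ne_zero q')
      · exact sub_eq_zero.mp h1
    · exact absurd h hψq'
  refine ⟨(q' : ℤ) - 2 * p, ?_, ?_⟩
  · have : η hH = μ - 2 * p := by rw [hμ]; ring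
    rw [hHdef] at this
    rw [this, hμval]
    push_cast
    ring
  · intro k hk
    have hik : p + k ≤ q' := by omega
    have hne := P.pow_toEnd_f_ne_zero_of_eq_nat hμval hik
    have hmem : ((LieModule.toEnd F L L f) ^ (p + k)) w ∈
        Lrt ((η + (p : F) • β) + ((p + k : ℕ) : F) • (-β)) := aux_pow_mem hLrt hf hwmem (p + k)
    have heq : (η + (p : F) • β) + ((p + k : ℕ) : F) • (-β) = η - (k : F) • β := by
      push_cast
      module
    rw [heq] at hmem
    rw [hR]
    exact Submodule.ne_bot_iff _ |>.mpr ⟨_, hmem, hne⟩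

end Aux4

theorem int_s1 {n m : ℤ} (h5 : 5 ≤ n) : n + m - n * m ≠ 0 := by
  intro h
  have h1 : (m - 1) * (n - 1) = 1 := by ring_nf; linarith
  have h2 : n - 1 ≥ 4 := by omega
  rcases le_or_gt (m - 1) 0 with h3 | h3
  · nlinarith
  · nlinarith

theorem int_s2 {n m : ℤ} (h5 : 5 ≤ n) : n + 4 * m - 2 * n * m ≠ 0 := by
  intro h
  rcases le_or_gt m 0 with h3 | h3
  · nlinarith
  · nlinarith

theorem int_case1 {n K : ℤ} (h5 : 5 ≤ n) (h : K * (1 - n) = -n) : False := by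
  rcases le_or_gt K 1 with h3 | h3
  · nlinarith
  · nlinarith

theorem int_endgame {n m A1 A2 : ℤ} (h5 : 5 ≤ n) (hm : m ≠ 0)
    (h1 : A1 * (n + m - n * m) = m * (n - 2))
    (h2 : A2 * (n + 4 * m - 2 * n * m) = m * (n - 4)) : m = 1 := by
  by_contra hm1
  -- s1 divides n - m  :  (A1 + 1) * s1 = n - m
  have key1 : (A1 + 1) * (n + m - n * m) = n - m := by ring_nf; linarith [h1]
  rcases lt_trichotomy m 0 with hneg | hz | hpos
  · -- m ≤ -1 : |s1| too big
    have hd : (n + m - n * m) ∣ m * (n - 2) := ⟨A1, by linarith [h1]⟩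
    have hne : m * (n - 2) ≠ 0 := by
      intro h; rcases mul_eq_zero.mp h with h | h <;> omega
    have hle : |n + m - n * m| ≤ |m * (n - 2)| :=
      Int.le_of_dvd (abs_pos.mpr hne) ((abs_dvd _ _).mpr (dvd_abs _ _ |>.mpr hd))
    have e1 : |n + m - n * m| = n + m - n * m := abs_of_pos (by nlinarith)
    have e2 : |m * (n - 2)| = -(m * (n - 2)) := abs_of_neg (by nlinarith)
    nlinarith
  · exact hm hz
  · -- m ≥ 2 (m = 1 excluded)
    have hm2 : 2 ≤ m := by omega
    rcases eq_or_ne m n with rfl | hmn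
    · -- m = n : use A2
      have h2' : m * (A2 * (5 - 2 * m) - (m - 4)) = 0 := by ring_nf; linarith [h2]
      have h3 : A2 * (5 - 2 * m) = m - 4 := by
        rcases mul_eq_zero.mp h2' with h | h
        · omega
        · linarith
      rcases le_or_gt A2 (-1) with h4 | h4
      · nlinarith [mul_nonneg (by omega : (0:ℤ) ≤ -1 - A2) (by omega : (0:ℤ) ≤ 2*m - 5)]
      · rcases le_or_gt A2 0 with h4' | h4'
        · have hA20 : A2 = 0 := by omega
          rw [hA20] at h3; simp at h3; omega
        · nlinarith [mul_nonneg (by omega : (0:ℤ) ≤ A2 - 1) (by omega : (0:ℤ) ≤ 2*m - 5)]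
    · rcases eq_or_ne m 2 with rfl | hm2'
      · -- m = 2 : use A2 : (A2+1) * s2 = -n
        have key2 : (A2 + 1) * (8 - 3 * n) = -n := by ring_nf; linarith [h2]
        rcases le_or_gt A2 (-1) with h4 | h4 <;> nlinarith
      · -- 3 ≤ m, m ≠ n : s1 ∣ n - m with |s1| > |n - m|
        have hm3 : 3 ≤ m := by omega
        have hd : (n + m - n * m) ∣ (n - m) := ⟨A1 + 1, by linarith [key1]⟩
        have hne : n - m ≠ 0 := by omega
        have hle : |n + m - n * m| ≤ |n - m| :=
          Int.le_of_dvd (abs_pos.mpr hne) ((abs_dvd _ _).mpr (dvd_abs _ _ |>.mpr hd))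
        have e1 : |n + m - n * m| = -(n + m - n * m) := abs_of_neg (by nlinarith)
        rcases lt_or_gt_of_ne hmn with h4 | h4
        · rw [abs_of_pos (by omega : (0:ℤ) < n - m)] at hle; nlinarith
        · rw [abs_of_neg (by omega : n - m < (0:ℤ))] at hle; nlinarith

theorem int_m1 {n E E' : ℤ} (h5 : 5 ≤ n)
    (h1 : E * (9 - 2 * n) = -n) (h2 : E' * (16 - 3 * n) = -2 * n) :
    n = 5 ∨ n = 6 := by
  by_contra hcon
  push_neg at hcon
  have h7 : 7 ≤ n := by omega
  rcases le_or_gt n 9 with h9 | h9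
  · interval_cases n <;> omega
  · rcases le_or_gt E 0 with h4 | h4 <;> nlinarith

theorem int_n5 {U : ℤ} (h : U * 4 = 10) : False := by omega
theorem int_n6 {U : ℤ} (h : U * 24 = -12) : False := by omega
section Aux6

variable {F L : Type*} [Field F] [CharZero F] [LieRing L] [LieAlgebra F L]
    {H : LieSubalgebra F L}
    {Lrt : Module.Dual F ↥H → Submodule F L}
    {B : LinearMap.BilinForm F L}
    {t : Module.Dual F ↥H → ↥H}
    {form : LinearMap.BilinForm F (Module.Dual F ↥H)}
    {R : Set (Module.Dual F ↥H)}

theorem aux_main (hdecomp : ⨆ ξ, Lrt ξ = ⊤)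
    (hBsym : ∀ x y : L, B x y = B y x)
    (hBinv : ∀ x y z : L, B ⁅x, y⁆ z = B x ⁅y, z⁆)
    (hLrt : ∀ ξ (x : L), x ∈ Lrt ξ ↔ ∀ h : ↥H, ⁅(h : L), x⁆ = ξ h • x)
    (hA1 : Lrt 0 = H.toSubmodule)
    (hA2 : B.Nondegenerate)
    (hA3 : ∀ ξ ∈ R, ∀ h : ↥H, ξ h = B (t ξ) h)
    (hform : ∀ ξ ∈ R, ∀ η ∈ R, form ξ η = B (t ξ : L) (t η : L))
    (hR : R = {ξ | Lrt ξ ≠ ⊥})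
    (hA4 : ∀ α ∈ R, form α α ≠ 0 → ∀ x ∈ Lrt α, ∀ y : L,
      ∃ n : ℕ, ((LieAlgebra.ad F L x) ^ n) y = 0)
    {α ξ : Module.Dual F ↥H} (hα : α ∈ R) (ha : form α α ≠ 0) (hξ : ξ ∈ R)
    {n : ℤ} (hn : ξ ((2 / form α α) • t α) = (n : F)) : n ≤ 4 := by
  by_contra hcon
  push_neg at hcon
  have h5 : (5 : ℤ) ≤ n := by omega
  classical
  have getint : ∀ β ∈ R, form β β ≠ 0 → ∀ η ∈ R, ∃ N : ℤ,
      (N : F) * form β β = 2 * form η β ∧ ∀ k : ℕ, (k : ℤ) ≤ N → (η - (k : F) • β) ∈ R := by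
    intro β hβ hb η hη
    obtain ⟨N, hNval, hNstr⟩ :=
      aux_key hdecomp hBsym hBinv hLrt hA1 hA2 hA3 hform hR hA4 hβ hb hη
    exact ⟨N, by rw [← hNval]; exact aux_eval hA3 hform hβ hη hb, hNstr⟩
  have hfs : ∀ ζ ∈ R, ∀ η ∈ R, form ζ η = form η ζ := fun ζ hζ η hη => by
    rw [hform ζ hζ η hη, hform η hη ζ hζ, hBsym]
  have toZ : ∀ u v : ℤ, (u : F) * form α α = (v : F) * form α α → u = v := by
    intro u v h
    exact_mod_cast mul_right_cancel₀ ha h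
  have hzne : ∀ u : ℤ, u ≠ 0 → (u : F) * form α α ≠ 0 := fun u hu =>
    mul_ne_zero (Int.cast_ne_zero.mpr hu) ha
  have extract : ∀ (β η : Module.Dual F ↥H) (z z' N : ℤ),
      form β β = (z : F) * form α α → (N : F) * form β β = 2 * form η β →
      2 * form η β = (z' : F) * form α α → N * z = z' := by
    intro β η z z' N h1 h2 h3
    apply toZ
    push_cast
    linear_combination (-(N : F)) * h1 + h2 + h3
  have hxa' := aux_eval hA3 hform hα hξ ha
  rw [hn] at hxa'
  have h2fxa : 2 * form ξ α = (n : F) * form α α := hxa'.symm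
  have hfax : form α ξ = form ξ α := hfs α hα ξ hξ
  obtain ⟨N, hNval, hNstr⟩ := getint α hα ha ξ hξ
  have hNn : N = n := toZ N n (by rw [hNval, h2fxa])
  rw [hNn] at hNstr
  have h1R : (ξ - α) ∈ R := by
    have h := hNstr 1 (by omega)
    rwa [Nat.cast_one, one_smul] at h
  by_cases hc : form ξ ξ = 0
  · -- isotropic case
    have hb1 : form (ξ - α) (ξ - α) = ((1 - n : ℤ) : F) * form α α := by
      simp only [map_sub, LinearMap.sub_apply]
      try rw [hfax]
      push_cast
      linear_combination hc - h2fxa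
    obtain ⟨K, hKval, _⟩ := getint (ξ - α) h1R (by rw [hb1]; exact hzne _ (by omega)) ξ hξ
    have hKZ : K * (1 - n) = -n :=
      extract _ _ _ _ _ hb1 hKval (by
        simp only [map_sub, LinearMap.sub_apply]
        push_cast
        linear_combination 2 * hc - h2fxa)
    exact int_case1 h5 hKZ
  · -- anisotropic case
    obtain ⟨m, hmval, _⟩ := getint ξ hξ hc α hα
    have hmc : (m : F) * form ξ ξ = (n : F) * form α α := by
      rw [hmval, hfax, h2fxa]
    have hm0 : m ≠ 0 := by
      intro h0
      rw [h0] at hmc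
      exact hzne n (by omega) (by rw [← hmc]; push_cast; ring)
    have h2R : (ξ - (2 : F) • α) ∈ R := by
      have h := hNstr 2 (by omega)
      rwa [Nat.cast_ofNat] at h
    have hc1 : (m : F) * form (ξ - α) (ξ - α) = ((n + m - n * m : ℤ) : F) * form α α := by
      simp only [map_sub, LinearMap.sub_apply]
      try rw [hfax]
      push_cast
      linear_combination hmc - (m : F) * h2fxa
    have hc2 : (m : F) * form (ξ - (2 : F) • α) (ξ - (2 : F) • α)
        = ((n + 4 * m - 2 * n * m : ℤ) : F) * form α α := by
      simp only [map_sub, map_smul, LinearMap.sub_apply, LinearMap.smul_apply, smul_eq_mul]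
      try rw [hfax]
      push_cast
      linear_combination hmc - 2 * (m : F) * h2fxa
    have hb1' : form (ξ - α) (ξ - α) ≠ 0 := by
      intro h0
      rw [h0, mul_zero] at hc1
      exact hzne _ (int_s1 h5) hc1.symm
    have hb2' : form (ξ - (2 : F) • α) (ξ - (2 : F) • α) ≠ 0 := by
      intro h0
      rw [h0, mul_zero] at hc2
      exact hzne _ (int_s2 h5) hc2.symm
    obtain ⟨A1, hA1val, hA1str⟩ := getint (ξ - α) h1R hb1' α hα
    obtain ⟨A2, hA2val, _⟩ := getint (ξ - (2 : F) • α) h2R hb2' α hα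
    have hy1 : (2 : F) * form α (ξ - α) = 2 * form ξ α - 2 * form α α := by
      simp only [map_sub, LinearMap.sub_apply]
      rw [hfax]
      ring
    have hA1Z : A1 * (n + m - n * m) = m * (n - 2) := by
      apply toZ
      push_cast
      push_cast at hc1
      linear_combination (-(A1 : F)) * hc1 + (m : F) * hA1val + (m : F) * h2fxa +
        (m : F) * hy1
    have hy2 : (2 : F) * form α (ξ - (2 : F) • α) = 2 * form ξ α - 4 * form α α := by
      simp only [map_sub, map_smul, LinearMap.sub_apply, LinearMap.smul_apply, smul_eq_mul]
      rw [hfax]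
      ring
    have hA2Z : A2 * (n + 4 * m - 2 * n * m) = m * (n - 4) := by
      apply toZ
      push_cast
      push_cast at hc2
      linear_combination (-(A2 : F)) * hc2 + (m : F) * hA2val + (m : F) * h2fxa +
        (m : F) * 2 * h2fxa - (m : F) * 2 * h2fxa + (m : F) * hy2
    have hm1 : m = 1 := int_endgame h5 hm0 hA1Z hA2Z
    rw [hm1] at hmc
    have hcna : form ξ ξ = (n : F) * form α α := by rw [← hmc]; push_cast; ring
    have hA1n : A1 = n - 2 := by
      rw [hm1] at hA1Z
      have h' : A1 * (n + 1 - n) = n - 2 := by linear_combination hA1Z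
      omega
    have hr2R : (α - (2 : F) • (ξ - α)) ∈ R := by
      have h := hA1str 2 (by omega)
      rwa [Nat.cast_ofNat] at h
    have hr3R : (α - (3 : F) • (ξ - α)) ∈ R := by
      have h := hA1str 3 (by omega)
      rwa [Nat.cast_ofNat] at h
    have hnr2 : form (α - (2 : F) • (ξ - α)) (α - (2 : F) • (ξ - α))
        = ((9 - 2 * n : ℤ) : F) * form α α := by
      simp only [map_sub, map_smul, LinearMap.sub_apply, LinearMap.smul_apply, smul_eq_mul]
      try rw [hfax]
      push_cast
      linear_combination 4 * hcna - 6 * h2fxa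
    have hnr3 : form (α - (3 : F) • (ξ - α)) (α - (3 : F) • (ξ - α))
        = ((16 - 3 * n : ℤ) : F) * form α α := by
      simp only [map_sub, map_smul, LinearMap.sub_apply, LinearMap.smul_apply, smul_eq_mul]
      try rw [hfax]
      push_cast
      linear_combination 9 * hcna - 12 * h2fxa
    obtain ⟨E, hEval, _⟩ := getint _ hr2R (by rw [hnr2]; exact hzne _ (by omega)) ξ hξ
    obtain ⟨E', hE'val, _⟩ := getint _ hr3R (by rw [hnr3]; exact hzne _ (by omega)) ξ hξ
    have hEZ : E * (9 - 2 * n) = -n :=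
      extract _ _ _ _ _ hnr2 hEval (by
        simp only [map_sub, map_smul, LinearMap.sub_apply, LinearMap.smul_apply, smul_eq_mul]
        try rw [hfax]
        push_cast
        linear_combination 3 * h2fxa - 4 * hcna)
    have hE'Z : E' * (16 - 3 * n) = -2 * n :=
      extract _ _ _ _ _ hnr3 hE'val (by
        simp only [map_sub, map_smul, LinearMap.sub_apply, LinearMap.smul_apply, smul_eq_mul]
        try rw [hfax]
        push_cast
        linear_combination 4 * h2fxa - 6 * hcna)
    rcases int_m1 h5 hEZ hE'Z with h56 | h56
    · -- n = 5
      subst h56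
      have h3R : (ξ - (3 : F) • α) ∈ R := by
        have h := hNstr 3 (by omega)
        rwa [Nat.cast_ofNat] at h
      have hn3 : form (ξ - (3 : F) • α) (ξ - (3 : F) • α) = ((-1 : ℤ) : F) * form α α := by
        simp only [map_sub, map_smul, LinearMap.sub_apply, LinearMap.smul_apply, smul_eq_mul]
        try rw [hfax]
        push_cast
        linear_combination hcna - 3 * h2fxa
      obtain ⟨T, hTval, hTstr⟩ := getint _ h3R (by rw [hn3]; exact hzne _ (by omega)) (ξ - α) h1R
      have hTZ : T * (-1) = -4 :=
        extract _ _ _ _ _ hn3 hTval (by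
          simp only [map_sub, map_smul, LinearMap.sub_apply, LinearMap.smul_apply, smul_eq_mul]
          try rw [hfax]
          push_cast
          linear_combination 2 * hcna - 4 * h2fxa)
      have hsR : ((ξ - α) - (ξ - (3 : F) • α)) ∈ R := by
        have h := hTstr 1 (by omega)
        rwa [Nat.cast_one, one_smul] at h
      have hns : form ((ξ - α) - (ξ - (3 : F) • α)) ((ξ - α) - (ξ - (3 : F) • α))
          = ((4 : ℤ) : F) * form α α := by
        simp only [map_sub, map_smul, LinearMap.sub_apply, LinearMap.smul_apply, smul_eq_mul]
        try rw [hfax]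
        push_cast
        ring
      obtain ⟨U, hUval, _⟩ := getint _ hsR (by rw [hns]; exact hzne _ (by omega)) ξ hξ
      have hUZ : U * 4 = 10 :=
        extract _ _ _ _ _ hns hUval (by
          simp only [map_sub, map_smul, LinearMap.sub_apply, LinearMap.smul_apply, smul_eq_mul]
          try rw [hfax]
          push_cast
          linear_combination 2 * h2fxa)
      exact int_n5 hUZ
    · -- n = 6
      subst h56
      have h6R : (ξ - (6 : F) • α) ∈ R := by
        have h := hNstr 6 (by omega)
        rwa [Nat.cast_ofNat] at h
      have hc2' : form (ξ - (2 : F) • α) (ξ - (2 : F) • α) = ((-2 : ℤ) : F) * form α α := by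
        simp only [map_sub, map_smul, LinearMap.sub_apply, LinearMap.smul_apply, smul_eq_mul]
        try rw [hfax]
        push_cast
        linear_combination hcna - 2 * h2fxa
      obtain ⟨T, hTval, hTstr⟩ := getint _ h2R hb2' (ξ - (6 : F) • α) h6R
      have hTZ : T * (-2) = -12 :=
        extract _ _ _ _ _ hc2' hTval (by
          simp only [map_sub, map_smul, LinearMap.sub_apply, LinearMap.smul_apply, smul_eq_mul]
          try rw [hfax]
          push_cast
          linear_combination 2 * hcna - 8 * h2fxa)
      have htR : ((ξ - (6 : F) • α) - (3 : F) • (ξ - (2 : F) • α)) ∈ R := by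
        have h := hTstr 3 (by omega)
        rwa [Nat.cast_ofNat] at h
      have hnt : form ((ξ - (6 : F) • α) - (3 : F) • (ξ - (2 : F) • α))
          ((ξ - (6 : F) • α) - (3 : F) • (ξ - (2 : F) • α)) = ((24 : ℤ) : F) * form α α := by
        simp only [map_sub, map_smul, LinearMap.sub_apply, LinearMap.smul_apply, smul_eq_mul]
        try rw [hfax]
        push_cast
        linear_combination 4 * hcna
      obtain ⟨U, hUval, _⟩ := getint _ htR (by rw [hnt]; exact hzne _ (by omega)) α hα
      have hUZ : U * 24 = -12 :=
        extract _ _ _ _ _ hnt hUval (by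
          simp only [map_sub, map_smul, LinearMap.sub_apply, LinearMap.smul_apply, smul_eq_mul]
          try rw [hfax]
          push_cast
          linear_combination -2 * h2fxa)
      exact int_n6 hUZ

end Aux6
theorem lemma_3_2
    {F L : Type*} [Field F] [CharZero F] [LieRing L] [LieAlgebra F L]
    (H : LieSubalgebra F L)
    (habelian : ∀ x y : ↥H, ⁅x, y⁆ = 0)
    -- root spaces with respect to H
    (Lrt : Module.Dual F ↥H → Submodule F L)
    (hLrt : ∀ ξ (x : L), x ∈ Lrt ξ ↔ ∀ h : ↥H, ⁅(h : L), x⁆ = ξ h • x)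
    -- root space decomposition L = ⊕_{ξ} L_ξ
    (hdecomp : ⨆ ξ, Lrt ξ = ⊤) (hindep : iSupIndep Lrt)
    -- the set of roots
    (R : Set (Module.Dual F ↥H))
    (hR : R = {ξ | Lrt ξ ≠ ⊥})
    -- a symmetric invariant bilinear form on L
    (B : LinearMap.BilinForm F L)
    (hBsym : ∀ x y : L, B x y = B y x)
    (hBinv : ∀ x y z : L, B ⁅x, y⁆ z = B x ⁅y, z⁆)
    -- (A1) H is self-centralizing
    (hA1 : Lrt 0 = H.toSubmodule)
    -- (A2) B is nondegenerate
    (hA2 : B.Nondegenerate)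
    -- (A3) every root is represented by some t_ξ ∈ H
    (t : Module.Dual F ↥H → ↥H)
    (hA3 : ∀ ξ ∈ R, ∀ h : ↥H, ξ h = B (t ξ) h)
    -- the induced form, extended bilinearly to the span of R
    (form : LinearMap.BilinForm F (Module.Dual F ↥H))
    (hform : ∀ ξ ∈ R, ∀ η ∈ R, form ξ η = B (t ξ : L) (t η : L))
    -- (A4) ad x is locally nilpotent for x in an anisotropic root space
    (hA4 : ∀ α ∈ R, form α α ≠ 0 → ∀ x ∈ Lrt α, ∀ y : L,
      ∃ n : ℕ, ((LieAlgebra.ad F L x) ^ n) y = 0)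
    -- (A5) R^× is irreducible
    (hA5 : ∀ R1 R2 : Set (Module.Dual F ↥H), {ξ | ξ ∈ R ∧ form ξ ξ ≠ 0} = R1 ∪ R2 →
      (∀ ξ ∈ R1, ∀ η ∈ R2, form ξ η = 0) → R1 = ∅ ∨ R2 = ∅)
    -- the form is scaled: (β,β) is rational for all β ∈ R^×, positive for some α ∈ R^×
    (hscale : ∀ β ∈ R, form β β ≠ 0 → ∃ q : ℚ, form β β = (q : F))
    (hpos : ∃ α ∈ R, ∃ q : ℚ, 0 < q ∧ form α α = (q : F))
    :
    ∀ α ∈ R, form α α ≠ 0 → ∀ ξ ∈ R, ∀ n : ℤ,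
      ξ ((2 / form α α) • t α) = (n : F) → -4 ≤ n ∧ n ≤ 4 := by
  intro α hα ha ξ hξ n hn
  refine ⟨?_, aux_main hdecomp hBsym hBinv hLrt hA1 hA2 hA3 hform hR hA4 hα ha hξ hn⟩
  -- apply the upper bound to -α
  have hnα : -α ∈ R := by
    rw [hR]
    exact aux_neg_root hdecomp hBinv hLrt hA2 (by rw [hR] at hα; exact hα)
  have hna : form (-α) (-α) ≠ 0 := by simpa using ha
  -- t (-α) = - t α
  have htneg : t (-α) = - t α := by
    have hmem : ((t (-α) + t α : ↥H) : L) ∈ Lrt 0 := by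
      rw [hA1]
      exact (t (-α) + t α).2
    have hkey : ∀ y ∈ Lrt (0 : Module.Dual F ↥H), B ((t (-α) + t α : ↥H) : L) y = 0 := by
      intro y hy
      have hyH : y ∈ H := by rwa [hA1] at hy
      have h1 : (-α) ⟨y, hyH⟩ = B (t (-α) : L) y := hA3 (-α) hnα ⟨y, hyH⟩
      have h2 : α ⟨y, hyH⟩ = B (t α : L) y := hA3 α hα ⟨y, hyH⟩
      have h3 : (-α) ⟨y, hyH⟩ = -(α ⟨y, hyH⟩) := by simp
      push_cast
      rw [map_add, LinearMap.add_apply, ← h1, ← h2, h3]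
      ring
    have := aux_H_nondeg hdecomp hBinv hLrt hA2 hmem hkey
    have h0 : (t (-α) + t α : ↥H) = 0 := by exact_mod_cast this
    linear_combination (norm := module) h0
  have hval : ξ ((2 / form (-α) (-α)) • t (-α)) = ((-n : ℤ) : F) := by
    have e1 : form (-α) (-α) = form α α := by simp
    rw [e1, htneg]
    push_cast
    rw [show (2 / form α α) • (-t α) = -((2 / form α α) • t α) by module, map_neg, hn]
  have := aux_main hdecomp hBsym hBinv hLrt hA1 hA2 hA3 hform hR hA4 hnα hna hξ hval
  omega
end
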